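/- arXiv:1809.05009 — 10 statements merged into one kernel-verified Lean document; each statement's English description precedes it below -/
import Mathlib

section
/- For every instance of P|partition|ΣC_j and every feasible schedule S, there exists a feasible schedule S' with no idle time whose total completion time is at most the total completion time of S. In particular, there is an optimal schedule containing no idle times. -/
open Set Finset

namespace NoIdleAux

variable {J : Type} [Fintype J] {R : Type}

def Comb (m : ℕ) (p σ : J → ℝ) : Prop :=
  ∀ T : Finset J, m + 1 ≤ T.card → ∃ j ∈ T, ∃ k ∈ T, σ j + p j ≤ σ k

def Res (p : J → ℝ) (r : J → R) (σ : J → ℝ) : Prop :=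
  ∀ j k : J, j ≠ k → r j = r k → σ j + p j ≤ σ k ∨ σ k + p k ≤ σ j


lemma disj_iff {a b pa pb : ℝ} (ha : 0 < pa) (hb : 0 < pb) :
    Disjoint (Set.Ico a (a + pa)) (Set.Ico b (b + pb)) ↔ a + pa ≤ b ∨ b + pb ≤ a := by
  rw [Set.Ico_disjoint_Ico]
  constructor
  · intro h
    rcases min_le_iff.1 h with h1 | h1
    · rcases le_max_iff.1 h1 with h2 | h2
      · linarith
      · exact Or.inl h2
    · rcases le_max_iff.1 h1 with h2 | h2
      · exact Or.inr h2
      · linarith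
  · intro h
    rcases h with h | h
    · exact le_trans (min_le_left _ _) (h.trans (le_max_right _ _))
    · exact le_trans (min_le_right _ _) (h.trans (le_max_left _ _))





/-- jobs covering time τ -/
noncomputable def cov (p σ : J → ℝ) (τ : ℝ) : Finset J :=
  Finset.univ.filter (fun j => σ j ≤ τ ∧ τ < σ j + p j)

def Cap (m : ℕ) (p σ : J → ℝ) : Prop := ∀ τ : ℝ, (cov p σ τ).card ≤ m


lemma comb_of_cap {m : ℕ} {p σ : J → ℝ} (h : Cap m p σ) (hp : ∀ j, 0 < p j) :
    Comb m p σ := by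
  intro T hT
  by_contra hc
  push_neg at hc
  have hne : T.Nonempty := Finset.card_pos.1 (by omega)
  obtain ⟨j0, hj0, hmax⟩ := T.exists_max_image σ hne
  have : T ⊆ cov p σ (σ j0) := by
    intro k hk
    simp only [cov, Finset.mem_filter, Finset.mem_univ, true_and]
    exact ⟨hmax k hk, hc k hk j0 hj0⟩
  have := (Finset.card_le_card this).trans (h (σ j0))
  omega

lemma cap_of_comb {m : ℕ} {p σ : J → ℝ} (h : Comb m p σ) : Cap m p σ := by
  intro τ
  by_contra hc
  push_neg at hc
  obtain ⟨T, hsub, hcard⟩ := Finset.exists_subset_card_eq (Nat.succ_le_of_lt hc)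
  obtain ⟨j, hj, k, hk, hjk⟩ := h T (le_of_eq hcard.symm)
  have hjc := hsub hj
  have hkc := hsub hk
  simp only [cov, Finset.mem_filter, Finset.mem_univ, true_and] at hjc hkc
  linarith






def K (m : ℕ) (p : J → ℝ) (r : J → R) (s : J → ℝ) : Set (J → ℝ) :=
  {σ | (∀ j, 0 ≤ σ j ∧ σ j ≤ s j) ∧ Res p r σ ∧ Comb m p σ}

lemma isClosed_K (m : ℕ) (p : J → ℝ) (r : J → R) (s : J → ℝ) :
    IsClosed (K m p r s) := by
  have hbox : IsClosed {σ : J → ℝ | ∀ j, 0 ≤ σ j ∧ σ j ≤ s j} := by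
    have : {σ : J → ℝ | ∀ j, 0 ≤ σ j ∧ σ j ≤ s j} =
        ⋂ j, {σ : J → ℝ | σ j ∈ Set.Icc 0 (s j)} := by
      ext σ; simp [Set.mem_Icc, Set.mem_iInter]
    rw [this]
    exact isClosed_iInter fun j => (isClosed_Icc).preimage (continuous_apply j)
  have hres : IsClosed {σ : J → ℝ | Res p r σ} := by
    have : {σ : J → ℝ | Res p r σ} =
        ⋂ j, ⋂ k, {σ : J → ℝ | j ≠ k → r j = r k → σ j + p j ≤ σ k ∨ σ k + p k ≤ σ j} := by
      ext σ; simp [Res, Set.mem_iInter]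
    rw [this]
    refine isClosed_iInter fun j => isClosed_iInter fun k => ?_
    by_cases h1 : j ≠ k
    · by_cases h2 : r j = r k
      · have : {σ : J → ℝ | j ≠ k → r j = r k → σ j + p j ≤ σ k ∨ σ k + p k ≤ σ j} =
            {σ : J → ℝ | σ j + p j ≤ σ k} ∪ {σ : J → ℝ | σ k + p k ≤ σ j} := by
          ext σ; simp [h1, h2]
        rw [this]
        exact IsClosed.union
          (isClosed_le (by fun_prop) (continuous_apply k))
          (isClosed_le (by fun_prop) (continuous_apply j))
      · have : {σ : J → ℝ | j ≠ k → r j = r k → σ j + p j ≤ σ k ∨ σ k + p k ≤ σ j} =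
            Set.univ := by ext σ; simp [h2]
        rw [this]; exact isClosed_univ
    · have : {σ : J → ℝ | j ≠ k → r j = r k → σ j + p j ≤ σ k ∨ σ k + p k ≤ σ j} =
          Set.univ := by ext σ; simp; intro h; exact absurd h h1
      rw [this]; exact isClosed_univ
  have hcomb : IsClosed {σ : J → ℝ | Comb m p σ} := by
    have : {σ : J → ℝ | Comb m p σ} =
        ⋂ T : Finset J, {σ : J → ℝ | m + 1 ≤ T.card → ∃ j ∈ T, ∃ k ∈ T, σ j + p j ≤ σ k} := by
      ext σ; simp [Comb, Set.mem_iInter]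
    rw [this]
    refine isClosed_iInter fun T => ?_
    by_cases hT : m + 1 ≤ T.card
    · have : {σ : J → ℝ | m + 1 ≤ T.card → ∃ j ∈ T, ∃ k ∈ T, σ j + p j ≤ σ k} =
          ⋃ j ∈ (T : Set J), ⋃ k ∈ (T : Set J), {σ : J → ℝ | σ j + p j ≤ σ k} := by
        ext σ; simp [hT]
      rw [this]
      refine Set.Finite.isClosed_biUnion (T.finite_toSet) fun j _ => ?_
      refine Set.Finite.isClosed_biUnion (T.finite_toSet) fun k _ => ?_
      exact isClosed_le (by fun_prop) (continuous_apply k)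
    · have : {σ : J → ℝ | m + 1 ≤ T.card → ∃ j ∈ T, ∃ k ∈ T, σ j + p j ≤ σ k} =
          Set.univ := by ext σ; simp [hT]
      rw [this]; exact isClosed_univ
  have : K m p r s = {σ : J → ℝ | ∀ j, 0 ≤ σ j ∧ σ j ≤ s j} ∩
      ({σ : J → ℝ | Res p r σ} ∩ {σ : J → ℝ | Comb m p σ}) := by
    rfl
  rw [this]
  exact hbox.inter (hres.inter hcomb)

lemma isCompact_K (m : ℕ) (p : J → ℝ) (r : J → R) (s : J → ℝ) :
    IsCompact (K m p r s) := by
  refine IsCompact.of_isClosed_subset (isCompact_univ_pi fun j => isCompact_Icc (a := (0:ℝ)) (b := s j))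
    (isClosed_K m p r s) ?_
  intro σ hσ
  simp only [Set.mem_univ_pi, Set.mem_Icc]
  exact fun j => (hσ.1 j)

lemma exists_min (m : ℕ) (p : J → ℝ) (r : J → R) (s : J → ℝ)
    (hne : (K m p r s).Nonempty) :
    ∃ σ ∈ K m p r s, ∀ τ ∈ K m p r s, ∑ j, σ j ≤ ∑ j, τ j := by
  obtain ⟨σ, hσ, hmin⟩ := (isCompact_K m p r s).exists_isMinOn hne
    (Continuous.continuousOn (by fun_prop : Continuous fun σ : J → ℝ => ∑ j, σ j))
  exact ⟨σ, hσ, fun τ hτ => hmin hτ⟩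


lemma hall_min (m : ℕ) (p : J → ℝ) (hp : ∀ j, 0 < p j) (r : J → R) (s : J → ℝ)
    (σ : J → ℝ) (hσ : σ ∈ K m p r s)
    (hmin : ∀ τ ∈ K m p r s, ∑ j, σ j ≤ ∑ j, τ j)
    (t : ℝ) (ht : 0 < t) :
    (Finset.univ.filter (fun u : J => σ u = t)).card ≤
      (Finset.univ.filter (fun k : J => σ k + p k = t)).card := by
  classical
  obtain ⟨hbox, hres, hcomb⟩ := hσ
  set St := Finset.univ.filter (fun u : J => σ u = t) with hSt
  set Et := Finset.univ.filter (fun k : J => σ k + p k = t) with hEt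
  by_contra hc
  push_neg at hc
  -- Step 1: find an unblocked u ∈ St
  have hub : ∃ u ∈ St, ∀ k, k ≠ u → r k = r u → σ k + p k ≠ t := by
    by_contra hall
    push_neg at hall
    have hall' : ∀ u : J, ∃ k : J, u ∈ St → (k ≠ u ∧ r k = r u ∧ σ k + p k = t) := by
      intro u
      by_cases hu : u ∈ St
      · obtain ⟨k, hk⟩ := hall u hu
        exact ⟨k, fun _ => hk⟩
      · exact ⟨u, fun h => absurd h hu⟩
    choose f hf using hall'
    have hmaps : ∀ u ∈ St, f u ∈ Et := by
      intro u hu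
      exact Finset.mem_filter.2 ⟨Finset.mem_univ _, (hf u hu).2.2⟩
    obtain ⟨u1, hu1, u2, hu2, hne, hfe⟩ :=
      Finset.exists_ne_map_eq_of_card_lt_of_maps_to hc hmaps
    have h1 := hf u1 hu1
    have h2 := hf u2 hu2
    have hr12 : r u1 = r u2 := by
      rw [← h1.2.1, hfe, h2.2.1]
    have ht1 : σ u1 = t := (Finset.mem_filter.1 hu1).2
    have ht2 : σ u2 = t := (Finset.mem_filter.1 hu2).2
    rcases hres u1 u2 hne hr12 with h | h
    · rw [ht1, ht2] at h; linarith [hp u1]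
    · rw [ht1, ht2] at h; linarith [hp u2]
  obtain ⟨u, huSt, hunb⟩ := hub
  have hσu : σ u = t := (Finset.mem_filter.1 huSt).2
  -- Step 2: the previous event time t'
  set V : Finset ℝ := insert (0:ℝ)
    (((Finset.univ.image σ) ∪ (Finset.univ.image (fun k => σ k + p k))).filter
      (fun x => x < t)) with hV
  have hVne : V.Nonempty := ⟨0, Finset.mem_insert_self _ _⟩
  set t' := V.max' hVne with ht'
  have h0t' : 0 ≤ t' := Finset.le_max' V 0 (Finset.mem_insert_self _ _)
  have ht't : t' < t := by
    have hmem := V.max'_mem hVne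
    rw [← ht'] at hmem
    rcases Finset.mem_insert.1 hmem with h | h
    · rw [h]; exact ht
    · exact (Finset.mem_filter.1 h).2
  have hev_s : ∀ k : J, σ k < t → σ k ≤ t' := by
    intro k hk
    refine Finset.le_max' V _ ?_
    refine Finset.mem_insert_of_mem (Finset.mem_filter.2 ⟨?_, hk⟩)
    exact Finset.mem_union_left _ (Finset.mem_image_of_mem σ (Finset.mem_univ k))
  have hev_e : ∀ k : J, σ k + p k < t → σ k + p k ≤ t' := by
    intro k hk
    refine Finset.le_max' V _ ?_
    refine Finset.mem_insert_of_mem (Finset.mem_filter.2 ⟨?_, hk⟩)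
    exact Finset.mem_union_right _ (Finset.mem_image_of_mem _ (Finset.mem_univ k))
  -- Step 3: the improved schedule
  set σ'' := Function.update σ u t' with hσ''
  have hσ''u : σ'' u = t' := Function.update_self u t' σ
  have hσ''ne : ∀ k, k ≠ u → σ'' k = σ k := fun k hk => Function.update_of_ne hk t' σ
  have hKσ'' : σ'' ∈ K m p r s := by
    refine ⟨?_, ?_, ?_⟩
    · intro j
      by_cases hj : j = u
      · subst hj; rw [hσ''u]; exact ⟨h0t', le_trans (le_of_lt ht't) (hσu ▸ (hbox j).2)⟩
      · rw [hσ''ne j hj]; exact hbox j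
    · -- Res
      intro j k hjk hr
      by_cases hj : j = u
      · have hk : k ≠ u := fun h => hjk (hj.trans h.symm)
        have hru : r u = r k := hj ▸ hr
        rw [hj, hσ''u, hσ''ne k hk]
        rcases hres u k (fun h => hk h.symm) hru with h | h
        · left; rw [hσu] at h; linarith
        · right
          have hne := hunb k hk hru.symm
          have : σ k + p k < t := lt_of_le_of_ne (by rw [hσu] at h; exact h) hne
          exact hev_e k this
      · by_cases hk : k = u
        · have hru : r j = r u := hk ▸ hr
          rw [hk, hσ''u, hσ''ne j hj]
          rcases hres j u (fun h => hj h) hru with h | h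
          · left
            have hne := hunb j hj hru
            have : σ j + p j < t := lt_of_le_of_ne (by rw [hσu] at h; exact h) hne
            exact hev_e j this
          · right; rw [hσu] at h; linarith
        · rw [hσ''ne j hj, hσ''ne k hk]; exact hres j k hjk hr
    · -- Comb via capacity
      refine comb_of_cap ?_ hp
      have hcap : Cap m p σ := cap_of_comb hcomb
      intro τ
      by_cases hτ : t' ≤ τ ∧ τ < t
      · -- cov σ'' τ ⊆ insert u ((cov σ t \ St) ∪ Et)
        have hsub : cov p σ'' τ ⊆ insert u ((cov p σ t \ St) ∪ Et) := by
          intro k hk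
          rcases eq_or_ne k u with h | h
          · exact h ▸ Finset.mem_insert_self _ _
          · refine Finset.mem_insert_of_mem ?_
            have hkc := Finset.mem_filter.1 hk
            rw [hσ''ne k h] at hkc
            have hk1 := hkc.2.1
            have hk2 := hkc.2.2
            have hkt : σ k < t := lt_of_le_of_lt hk1 hτ.2
            have hCk : t ≤ σ k + p k := by
              by_contra hC
              push_neg at hC
              have := hev_e k hC
              linarith [hτ.1]
            rcases eq_or_lt_of_le hCk with hE | hE
            · exact Finset.mem_union_right _ (Finset.mem_filter.2 ⟨Finset.mem_univ _, hE.symm⟩)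
            · refine Finset.mem_union_left _ (Finset.mem_sdiff.2 ⟨?_, ?_⟩)
              · exact Finset.mem_filter.2 ⟨Finset.mem_univ _, le_of_lt hkt, hE⟩
              · simp only [hSt, Finset.mem_filter, Finset.mem_univ, true_and]
                exact ne_of_lt hkt
        have hStcov : St ⊆ cov p σ t := by
          intro v hv
          have := (Finset.mem_filter.1 hv).2
          exact Finset.mem_filter.2 ⟨Finset.mem_univ _, le_of_eq this,
            by rw [this]; linarith [hp v]⟩
        calc (cov p σ'' τ).card ≤ (insert u ((cov p σ t \ St) ∪ Et)).card :=
              Finset.card_le_card hsub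
          _ ≤ ((cov p σ t \ St) ∪ Et).card + 1 := Finset.card_insert_le _ _
          _ ≤ ((cov p σ t \ St).card + Et.card) + 1 := by
              linarith [Finset.card_union_le (cov p σ t \ St) Et]
          _ = ((cov p σ t).card - St.card + Et.card) + 1 := by
              rw [Finset.card_sdiff_of_subset hStcov]
          _ ≤ m := by
              have h1 : (cov p σ t).card ≤ m := hcap t
              have h2 : Et.card + 1 ≤ St.card := hc
              have h3 : St.card ≤ (cov p σ t).card := Finset.card_le_card hStcov
              omega
      · -- outside the shifted window
        have hsub : cov p σ'' τ ⊆ cov p σ τ := by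
          intro k hk
          have hkc := Finset.mem_filter.1 hk
          rcases eq_or_ne k u with h | h
          · subst h
            rw [hσ''u] at hkc
            push_neg at hτ
            have hτt : t ≤ τ := by
              rcases lt_or_ge τ t' with h1 | h1
              · exact absurd hkc.2.1 (not_le.2 h1)
              · exact hτ h1
            refine Finset.mem_filter.2 ⟨Finset.mem_univ _, ?_, ?_⟩
            · rw [hσu]; exact hτt
            · rw [hσu]; linarith [hkc.2.2, ht't]
          · rw [hσ''ne k h] at hkc
            exact Finset.mem_filter.2 hkc
        exact le_trans (Finset.card_le_card hsub) (hcap τ)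
  -- Step 4: contradiction with minimality
  have hlt : ∑ j, σ'' j < ∑ j, σ j := by
    have : ∑ j, σ'' j = ∑ j, σ j - σ u + t' := by
      rw [hσ'']
      rw [Finset.sum_update_of_mem (Finset.mem_univ u)]
      have : ∑ j ∈ Finset.univ \ {u}, σ j = ∑ j, σ j - σ u := by
        rw [Finset.sum_sdiff_eq_sub (Finset.singleton_subset_iff.2 (Finset.mem_univ u))]
        simp
      rw [this]; ring
    rw [this, hσu]
    linarith
  exact absurd (hmin σ'' hKσ'') (not_le.2 hlt)

lemma Ico_subset_end {a b c : ℝ} (hab : a < b) (h : Set.Ico a b ⊆ Set.Ico 0 c) : b ≤ c := by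
  by_contra hc
  push_neg at hc
  have hx : max a c ∈ Set.Ico a b := ⟨le_max_left _ _, max_lt hab hc⟩
  exact absurd (h hx).2 (not_lt.2 (le_max_right _ _))

lemma assembly [DecidableEq J] (m : ℕ) (hm : 1 ≤ m) (p : J → ℝ) (hp : ∀ j, 0 < p j)
    (σ : J → ℝ) (hs0 : ∀ j, 0 ≤ σ j) :
    ∀ F : Finset J,
    (∀ t : ℝ, 0 < t → (F.filter (fun u => σ u = t)).card ≤
        (F.filter (fun k => σ k + p k = t)).card) →
    ((F.filter (fun u => σ u = 0)).card ≤ m) →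
    ∃ M : J → Fin m,
      (∀ u ∈ F, ∀ v ∈ F, u ≠ v → M u = M v →
        Disjoint (Set.Ico (σ u) (σ u + p u)) (Set.Ico (σ v) (σ v + p v))) ∧
      (∀ i : Fin m,
        (⋃ u ∈ ((F.filter (fun u => M u = i)) : Set J), Set.Ico (σ u) (σ u + p u)) =
          Set.Ico 0 (∑ u ∈ F.filter (fun u => M u = i), p u)) := by
  intro F
  induction F using Finset.strongInduction with
  | _ F ih =>
    intro hall hheads
    rcases F.eq_empty_or_nonempty with hF | hF
    · subst hF
      exact ⟨fun _ => ⟨0, hm⟩, by simp, fun i => by simp⟩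
    · obtain ⟨jx, hjx, hmax⟩ := F.exists_max_image (fun u => σ u + p u) hF
      set F' := F.erase jx with hF'
      have hss : F' ⊂ F := Finset.erase_ssubset hjx
      have hjxF' : jx ∉ F' := Finset.notMem_erase jx F
      have hFins : F = insert jx F' := by rw [hF', Finset.insert_erase hjx]
      have hall' : ∀ t : ℝ, 0 < t → (F'.filter (fun u => σ u = t)).card ≤
          (F'.filter (fun k => σ k + p k = t)).card := by
        intro t htpos
        by_cases hclash : σ jx + p jx = t
        · have hempty : F.filter (fun u => σ u = t) = ∅ := by
            rw [Finset.filter_eq_empty_iff]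
            intro u hu heq
            have h1 := hmax u hu
            have h2 := hp u
            rw [heq] at h1
            rw [hclash] at h1
            linarith
          have : F'.filter (fun u => σ u = t) = ∅ :=
            Finset.subset_empty.1
              (hempty ▸ Finset.filter_subset_filter _ (Finset.erase_subset _ _))
          simp [this]
        · have he : F'.filter (fun k => σ k + p k = t) = F.filter (fun k => σ k + p k = t) := by
            rw [hF', Finset.filter_erase, Finset.erase_eq_of_notMem]
            intro hmem
            exact hclash (Finset.mem_filter.1 hmem).2
          calc (F'.filter (fun u => σ u = t)).card
              ≤ (F.filter (fun u => σ u = t)).card :=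
                Finset.card_le_card (Finset.filter_subset_filter _ (Finset.erase_subset _ _))
            _ ≤ (F.filter (fun k => σ k + p k = t)).card := hall t htpos
            _ = (F'.filter (fun k => σ k + p k = t)).card := by rw [he]
      have hheads' : (F'.filter (fun u => σ u = 0)).card ≤ m :=
        le_trans (Finset.card_le_card
          (Finset.filter_subset_filter _ (Finset.erase_subset _ _))) hheads
      obtain ⟨M0, hM0a, hM0b⟩ := ih F' hss hall' hheads'
      -- abbreviation for machine loads
      set load : Fin m → ℝ := fun i => ∑ u ∈ F'.filter (fun u => M0 u = i), p u with hload
      have hload_nonneg : ∀ i, 0 ≤ load i :=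
        fun i => Finset.sum_nonneg fun u _ => le_of_lt (hp u)
      have hM0b' : ∀ i : Fin m,
          (⋃ u ∈ ((F'.filter (fun u => M0 u = i)) : Set J), Set.Ico (σ u) (σ u + p u)) =
            Set.Ico 0 (load i) := hM0b
      have hmem_end : ∀ k ∈ F', σ k + p k ≤ load (M0 k) := by
        intro k hk
        refine Ico_subset_end (a := σ k) (b := σ k + p k) (by linarith [hp k]) ?_
        rw [← hM0b' (M0 k)]
        intro x hx
        exact Set.mem_biUnion (by simp [hk]) hx
      have hcover : ∀ i : Fin m, ∀ x : ℝ, 0 ≤ x → x < load i →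
          ∃ v ∈ F', M0 v = i ∧ σ v ≤ x ∧ x < σ v + p v := by
        intro i x hx0 hxl
        have : x ∈ Set.Ico 0 (load i) := ⟨hx0, hxl⟩
        rw [← hM0b' i] at this
        obtain ⟨v, hv, hxv⟩ := Set.mem_iUnion₂.1 this
        simp only [Finset.coe_filter, Set.mem_setOf_eq] at hv
        exact ⟨v, hv.1, hv.2, hxv.1, hxv.2⟩
      -- find machine i0 whose load is exactly σ jx
      have hi0 : ∃ i0 : Fin m, load i0 = σ jx := by
        by_cases ht0 : σ jx = 0
        · by_contra hno
          push_neg at hno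
          have hpos : ∀ i : Fin m, 0 < load i := by
            intro i
            rcases lt_or_eq_of_le (hload_nonneg i) with h | h
            · exact h
            · exact absurd (ht0 ▸ h.symm) (hno i)
          have hhead : ∀ i : Fin m, ∃ v ∈ F', M0 v = i ∧ σ v = 0 := by
            intro i
            obtain ⟨v, hv, hvM, hv1, _⟩ := hcover i 0 le_rfl (hpos i)
            exact ⟨v, hv, hvM, le_antisymm hv1 (hs0 v)⟩
          choose g hg1 hg2 hg3 using hhead
          have hginj : Function.Injective g := by
            intro i1 i2 he
            rw [← hg2 i1, ← hg2 i2, he]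
          have hsub : Finset.univ.image g ⊆ F'.filter (fun u => σ u = 0) := by
            intro v hv
            obtain ⟨i, _, rfl⟩ := Finset.mem_image.1 hv
            exact Finset.mem_filter.2 ⟨hg1 i, hg3 i⟩
          have hcard1 : m ≤ (F'.filter (fun u => σ u = 0)).card := by
            calc m = (Finset.univ : Finset (Fin m)).card := by simp
              _ = (Finset.univ.image g).card := (Finset.card_image_of_injective _ hginj).symm
              _ ≤ _ := Finset.card_le_card hsub
          have hcard2 : (F.filter (fun u => σ u = 0)).card =
              (F'.filter (fun u => σ u = 0)).card + 1 := by
            rw [hFins, Finset.filter_insert]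
            rw [if_pos ht0]
            rw [Finset.card_insert_of_notMem]
            intro hmem
            exact hjxF' (Finset.mem_of_mem_filter _ hmem)
          omega
        · have htpos : 0 < σ jx := lt_of_le_of_ne (hs0 jx) (Ne.symm ht0)
          by_contra hno
          push_neg at hno
          set t := σ jx with htdef
          -- injection from ends at t into starts at t within F'
          have hmap : ∀ k ∈ F'.filter (fun k => σ k + p k = t),
              ∃ v ∈ F'.filter (fun u => σ u = t), M0 v = M0 k := by
            intro k hk
            obtain ⟨hkF, hkC⟩ := Finset.mem_filter.1 hk
            have hload_gt : t < load (M0 k) :=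
              lt_of_le_of_ne (hkC ▸ hmem_end k hkF) (Ne.symm (hno (M0 k)))
            obtain ⟨v, hvF, hvM, hv1, hv2⟩ := hcover (M0 k) t (le_of_lt htpos) hload_gt
            have hvk : v ≠ k := by
              intro h
              rw [h] at hv2
              rw [hkC] at hv2
              exact lt_irrefl t hv2
            have hveq : σ v = t := by
              rcases lt_or_eq_of_le hv1 with h | h
              · exfalso
                have hdisj := hM0a v hvF k hkF hvk (by rw [hvM])
                have hx1 : max (σ v) (σ k) ∈ Set.Ico (σ v) (σ v + p v) :=
                  ⟨le_max_left _ _, by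
                    refine max_lt (by linarith) ?_
                    calc σ k < σ k + p k := by linarith [hp k]
                      _ = t := hkC
                      _ < σ v + p v := hv2⟩
                have hx2 : max (σ v) (σ k) ∈ Set.Ico (σ k) (σ k + p k) :=
                  ⟨le_max_right _ _, by
                    refine max_lt ?_ (by linarith [hp k])
                    rw [hkC]; exact h⟩
                exact Set.disjoint_left.1 hdisj hx1 hx2
              · exact h
            exact ⟨v, Finset.mem_filter.2 ⟨hvF, hveq⟩, hvM⟩
          have hmap' : ∀ k : J, ∃ v : J, k ∈ F'.filter (fun k => σ k + p k = t) →
              (v ∈ F'.filter (fun u => σ u = t) ∧ M0 v = M0 k) := by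
            intro k
            by_cases hk : k ∈ F'.filter (fun k => σ k + p k = t)
            · obtain ⟨v, hv1, hv2⟩ := hmap k hk
              exact ⟨v, fun _ => ⟨hv1, hv2⟩⟩
            · exact ⟨k, fun h => absurd h hk⟩
          choose φ hφ using hmap'
          have hinj : Set.InjOn φ ↑(F'.filter (fun k => σ k + p k = t)) := by
            intro k1 hk1 k2 hk2 he
            simp only [Finset.mem_coe] at hk1 hk2
            by_contra hne
            have h1 := hφ k1 hk1
            have h2 := hφ k2 hk2
            have hMk : M0 k1 = M0 k2 := by rw [← h1.2, he, h2.2]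
            obtain ⟨hk1F, hk1C⟩ := Finset.mem_filter.1 hk1
            obtain ⟨hk2F, hk2C⟩ := Finset.mem_filter.1 hk2
            have hdisj := hM0a k1 hk1F k2 hk2F hne hMk
            have hx1 : max (σ k1) (σ k2) ∈ Set.Ico (σ k1) (σ k1 + p k1) :=
              ⟨le_max_left _ _, by
                refine max_lt (by linarith [hp k1]) ?_
                rw [hk1C, ← hk2C]; linarith [hp k2]⟩
            have hx2 : max (σ k1) (σ k2) ∈ Set.Ico (σ k2) (σ k2 + p k2) :=
              ⟨le_max_right _ _, by
                refine max_lt ?_ (by linarith [hp k2])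
                rw [hk2C, ← hk1C]; linarith [hp k1]⟩
            exact Set.disjoint_left.1 hdisj hx1 hx2
          have hcard3 : (F'.filter (fun k => σ k + p k = t)).card ≤
              (F'.filter (fun u => σ u = t)).card := by
            refine Finset.card_le_card_of_injOn φ ?_ hinj
            intro k hk
            exact (hφ k hk).1
          have hSins : F.filter (fun u => σ u = t) =
              insert jx (F'.filter (fun u => σ u = t)) := by
            rw [hFins, Finset.filter_insert, if_pos htdef.symm]
          have hEeq : F.filter (fun k => σ k + p k = t) =
              F'.filter (fun k => σ k + p k = t) := by
            rw [hFins, Finset.filter_insert, if_neg (by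
              intro h
              rw [← htdef] at h
              nlinarith [hp jx, htdef])]
          have hcard4 := hall t htpos
          rw [hSins, hEeq, Finset.card_insert_of_notMem
            (fun h => hjxF' (Finset.mem_of_mem_filter _ h))] at hcard4
          omega
      obtain ⟨i0, hi0⟩ := hi0
      set M : J → Fin m := Function.update M0 jx i0 with hM
      have hMjx : M jx = i0 := Function.update_self _ _ _
      have hMne : ∀ u, u ≠ jx → M u = M0 u := fun u hu => Function.update_of_ne hu _ _
      have hend : ∀ v ∈ F', M0 v = i0 → σ v + p v ≤ σ jx := by
        intro v hv hvM
        have h := hmem_end v hv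
        rw [hvM, hi0] at h; exact h
      have hmemF' : ∀ u ∈ F, u ≠ jx → u ∈ F' := by
        intro u hu hne
        rw [hF']; exact Finset.mem_erase.2 ⟨hne, hu⟩
      have hfilter_ne : ∀ i : Fin m, i ≠ i0 →
          F.filter (fun u => M u = i) = F'.filter (fun u => M0 u = i) := by
        intro i hi
        rw [hFins, Finset.filter_insert, if_neg (by rw [hMjx]; exact fun h => hi h.symm)]
        refine Finset.filter_congr ?_
        intro u hu
        rw [hMne u (fun h => hjxF' (h ▸ hu))]
      have hfilter_i0 : F.filter (fun u => M u = i0) =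
          insert jx (F'.filter (fun u => M0 u = i0)) := by
        rw [hFins, Finset.filter_insert, if_pos hMjx]
        congr 1
        refine Finset.filter_congr ?_
        intro u hu
        rw [hMne u (fun h => hjxF' (h ▸ hu))]
      refine ⟨M, ?_, ?_⟩
      · intro u hu v hv huv hMuv
        by_cases h1 : u = jx
        · have h2 : v ≠ jx := fun h => huv (h1 ▸ h.symm ▸ rfl)
          have hvF' := hmemF' v hv h2
          have hvM : M0 v = i0 := by rw [← hMne v h2, ← hMuv, h1, hMjx]
          have := hend v hvF' hvM
          rw [h1]
          exact (disj_iff (hp jx) (hp v)).2 (Or.inr this)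
        · by_cases h2 : v = jx
          · have huF' := hmemF' u hu h1
            have huM : M0 u = i0 := by rw [← hMne u h1, hMuv, h2, hMjx]
            have := hend u huF' huM
            rw [h2]
            exact (disj_iff (hp u) (hp jx)).2 (Or.inl this)
          · have huF' := hmemF' u hu h1
            have hvF' := hmemF' v hv h2
            refine hM0a u huF' v hvF' huv ?_
            rw [← hMne u h1, ← hMne v h2]; exact hMuv
      · intro i
        by_cases hi : i = i0
        · rw [hi, hfilter_i0]
          have hsum : ∑ u ∈ insert jx (F'.filter (fun u => M0 u = i0)), p u =
              p jx + σ jx := by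
            rw [Finset.sum_insert (fun h => hjxF' (Finset.mem_of_mem_filter _ h))]
            rw [show (∑ u ∈ F'.filter (fun u => M0 u = i0), p u) = load i0 from rfl, hi0]
          rw [hsum, Finset.coe_insert, Set.biUnion_insert, hM0b' i0, hi0]
          rw [Set.union_comm, Set.Ico_union_Ico_eq_Ico (hs0 jx) (by linarith [hp jx])]
          rw [add_comm]
        · rw [hfilter_ne i hi]
          exact hM0b i

end NoIdleAux

/-- A non-preemptive schedule `(s, M)` for the instance with `m` machines,
processing times `p` and resources `r` is feasible if all start times are
nonnegative and the processing intervals of any two distinct jobs assigned to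
the same machine, or having the same resource, are disjoint. -/
def Feasible {J R : Type} (m : ℕ) (p : J → ℝ) (r : J → R)
    (s : J → ℝ) (M : J → Fin m) : Prop :=
  (∀ j, 0 ≤ s j) ∧
  ∀ j j' : J, j ≠ j' → (M j = M j' ∨ r j = r j') →
    Disjoint (Set.Ico (s j) (s j + p j)) (Set.Ico (s j') (s j' + p j'))

/-- A schedule has no idle time if, for every machine `i`, the union of the
processing intervals of the jobs assigned to machine `i` is exactly `[0, L_i)`,
where `L_i` is the sum of the processing times of the jobs assigned to `i`. -/
def NoIdle {J : Type} [Fintype J] {m : ℕ} (p : J → ℝ)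
    (s : J → ℝ) (M : J → Fin m) : Prop :=
  ∀ i : Fin m,
    (⋃ j ∈ {j : J | M j = i}, Set.Ico (s j) (s j + p j)) =
      Set.Ico (0 : ℝ) (∑ j ∈ Finset.univ.filter (fun j => M j = i), p j)

/-- For every instance of `P|partition|ΣC_j` and every feasible schedule, there
is a feasible schedule with no idle time whose total completion time is at most
that of the given schedule. -/
theorem exists_no_idle_schedule {J R : Type} [Fintype J]
    (m : ℕ) (hm : 1 ≤ m) (p : J → ℝ) (hp : ∀ j, 0 < p j) (r : J → R)
    (s : J → ℝ) (M : J → Fin m) (hfeas : Feasible m p r s M) :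
    ∃ (s' : J → ℝ) (M' : J → Fin m),
      Feasible m p r s' M' ∧ NoIdle p s' M' ∧
      ∑ j, (s' j + p j) ≤ ∑ j, (s j + p j) := by
  classical
  obtain ⟨hs0, hdisj⟩ := hfeas
  -- the original start times belong to K
  have hsK : s ∈ NoIdleAux.K m p r s := by
    refine ⟨fun j => ⟨hs0 j, le_refl _⟩, ?_, ?_⟩
    · intro j k hjk hr
      exact (NoIdleAux.disj_iff (hp j) (hp k)).1 (hdisj j k hjk (Or.inr hr))
    · intro T hT
      have hcard : (Finset.univ : Finset (Fin m)).card < T.card := by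
        simpa using Nat.lt_of_lt_of_le (Nat.lt_succ_self m) hT
      obtain ⟨j, hj, k, hk, hne, hMe⟩ :=
        Finset.exists_ne_map_eq_of_card_lt_of_maps_to hcard
          (fun a _ => Finset.mem_univ (M a))
      rcases (NoIdleAux.disj_iff (hp j) (hp k)).1 (hdisj j k hne (Or.inl hMe)) with h | h
      · exact ⟨j, hj, k, hk, h⟩
      · exact ⟨k, hk, j, hj, h⟩
  obtain ⟨σ, hσK, hσmin⟩ := NoIdleAux.exists_min m p r s ⟨s, hsK⟩
  obtain ⟨hbox, hres, hcomb⟩ := hσK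
  -- Hall condition for σ
  have hall : ∀ t : ℝ, 0 < t →
      ((Finset.univ : Finset J).filter (fun u => σ u = t)).card ≤
        ((Finset.univ : Finset J).filter (fun k => σ k + p k = t)).card :=
    fun t ht => NoIdleAux.hall_min m p hp r s σ ⟨hbox, hres, hcomb⟩ hσmin t ht
  -- heads bound
  have hheads : ((Finset.univ : Finset J).filter (fun u => σ u = 0)).card ≤ m := by
    by_contra hc
    push_neg at hc
    obtain ⟨T, hTsub, hTcard⟩ :=
      Finset.exists_subset_card_eq (Nat.succ_le_of_lt hc)
    obtain ⟨j, hj, k, hk, hjk⟩ := hcomb T (le_of_eq hTcard.symm)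
    have hj0 : σ j = 0 := (Finset.mem_filter.1 (hTsub hj)).2
    have hk0 : σ k = 0 := (Finset.mem_filter.1 (hTsub hk)).2
    rw [hj0, hk0] at hjk
    linarith [hp j]
  obtain ⟨M', hM'a, hM'b⟩ :=
    NoIdleAux.assembly m hm p hp σ (fun j => (hbox j).1) Finset.univ hall hheads
  refine ⟨σ, M', ⟨fun j => (hbox j).1, ?_⟩, ?_, ?_⟩
  · intro j k hjk hor
    rcases hor with h | h
    · exact hM'a j (Finset.mem_univ j) k (Finset.mem_univ k) hjk h
    · exact (NoIdleAux.disj_iff (hp j) (hp k)).2 (hres j k hjk h)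
  · intro i
    have hset : {j : J | M' j = i} =
        ((Finset.univ.filter (fun u => M' u = i)) : Set J) := by
      ext u; simp
    rw [hset]
    exact hM'b i
  · refine Finset.sum_le_sum ?_
    intro j _
    have := (hbox j).2
    linarith
end

section
/- Let S be a feasible preemptive schedule for an instance of P|partition|ΣC_j such that no feasible preemptive schedule has strictly smaller total completion time. Then for all distinct jobs j and j' with r_j = r_{j'}: (i) if p_j < p_{j'} then C_j < C_{j'}; and (ii) if C_j < C_{j'}, then every part of job j ends no later than the start of every part of job j'. -/
/-- A feasible preemptive schedule for the instance with `m` machines, processing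
times `p` and resources `r`.  Each job `j` has a nonempty finite set of parts; a
part is a triple consisting of a machine and the two endpoints `a < b` (with
`a ≥ 0`) of its half-open processing interval `[a, b)`.  The intervals of the
parts of a single job are pairwise disjoint and their lengths sum to `p j`; the
intervals of parts on the same machine are pairwise disjoint; and the intervals
of parts of distinct jobs having the same resource are disjoint. -/

structure PSchedule (J R : Type) (m : ℕ) (p : J → ℝ) (r : J → R) where
  parts : J → Finset (Fin m × ℝ × ℝ)
  parts_nonempty : ∀ j, (parts j).Nonempty
  start_nonneg : ∀ j, ∀ q ∈ parts j, 0 ≤ q.2.1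
  start_lt_end : ∀ j, ∀ q ∈ parts j, q.2.1 < q.2.2
  length_sum : ∀ j, ∑ q ∈ parts j, (q.2.2 - q.2.1) = p j
  job_disjoint : ∀ j, ∀ q ∈ parts j, ∀ q' ∈ parts j, q ≠ q' →
    Disjoint (Set.Ico q.2.1 q.2.2) (Set.Ico q'.2.1 q'.2.2)
  machine_disjoint : ∀ j j' : J, ∀ q ∈ parts j, ∀ q' ∈ parts j',
    ¬(j = j' ∧ q = q') → q.1 = q'.1 →
    Disjoint (Set.Ico q.2.1 q.2.2) (Set.Ico q'.2.1 q'.2.2)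
  res_disjoint : ∀ j j' : J, j ≠ j' → r j = r j' →
    ∀ q ∈ parts j, ∀ q' ∈ parts j',
    Disjoint (Set.Ico q.2.1 q.2.2) (Set.Ico q'.2.1 q'.2.2)

noncomputable def PSchedule.C {J R : Type} {m : ℕ} {p : J → ℝ} {r : J → R}
    (S : PSchedule J R m p r) (j : J) : ℝ :=
  (S.parts j).sup' (S.parts_nonempty j) (fun q => q.2.2)

namespace SPT

lemma ico_disj_of_le {a b c d : ℝ} (h : b ≤ c) :
    Disjoint (Set.Ico a b) (Set.Ico c d) := by
  apply Set.disjoint_left.2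
  rintro x ⟨_, hxb⟩ ⟨hcx, _⟩
  exact absurd (lt_of_lt_of_le hxb (h.trans hcx)) (lt_irrefl x)

lemma ico_cases {a b c d : ℝ} (hab : a < b) (hcd : c < d)
    (h : Disjoint (Set.Ico a b) (Set.Ico c d)) : b ≤ c ∨ d ≤ a := by
  by_contra hc
  push_neg at hc
  exact Set.disjoint_left.1 h
    (Set.mem_Ico.2 ⟨le_max_left _ _, max_lt hab hc.1⟩)
    (Set.mem_Ico.2 ⟨le_max_right _ _, max_lt hc.2 hcd⟩)

variable {J R : Type} {m : ℕ} {p : J → ℝ} {r : J → R}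

lemma dichotomy (S : PSchedule J R m p r) {j j' : J} (hne : j ≠ j') (hr : r j = r j')
    {q q' : Fin m × ℝ × ℝ} (hq : q ∈ S.parts j) (hq' : q' ∈ S.parts j') :
    q.2.2 ≤ q'.2.1 ∨ q'.2.2 ≤ q.2.1 :=
  ico_cases (S.start_lt_end j q hq) (S.start_lt_end j' q' hq')
    (S.res_disjoint j j' hne hr q hq q' hq')

lemma start_inj (S : PSchedule J R m p r) {j : J} {q q' : Fin m × ℝ × ℝ}
    (hq : q ∈ S.parts j) (hq' : q' ∈ S.parts j) (h : q.2.1 = q'.2.1) : q = q' := by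
  by_contra hne
  exact Set.disjoint_left.1 (S.job_disjoint j q hq q' hq' hne)
    (Set.mem_Ico.2 ⟨le_rfl, S.start_lt_end j q hq⟩)
    (Set.mem_Ico.2 ⟨le_of_eq h.symm, h ▸ S.start_lt_end j q' hq'⟩)

lemma end_inj (S : PSchedule J R m p r) {j : J} {q q' : Fin m × ℝ × ℝ}
    (hq : q ∈ S.parts j) (hq' : q' ∈ S.parts j) (h : q.2.2 = q'.2.2) : q = q' := by
  by_contra hne
  have l1 := S.start_lt_end j q hq
  have l2 := S.start_lt_end j q' hq'
  rcases ico_cases l1 l2 (S.job_disjoint j q hq q' hq' hne) with h1 | h1 <;> linarith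

lemma C_ne (S : PSchedule J R m p r) {j j' : J} (hne : j ≠ j') (hr : r j = r j') :
    S.C j ≠ S.C j' := by
  obtain ⟨q, hq, hCq⟩ := Finset.exists_mem_eq_sup' (S.parts_nonempty j) (fun q => q.2.2)
  obtain ⟨q', hq', hCq'⟩ := Finset.exists_mem_eq_sup' (S.parts_nonempty j') (fun q => q.2.2)
  intro h
  have hbb : q.2.2 = q'.2.2 := by
    have := h; rw [PSchedule.C, PSchedule.C] at this; rw [hCq, hCq'] at this; exact this
  have l1 := S.start_lt_end j q hq
  have l2 := S.start_lt_end j' q' hq'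
  rcases dichotomy S hne hr hq hq' with h1 | h1 <;> linarith

lemma le_C (S : PSchedule J R m p r) {j : J} {q : Fin m × ℝ × ℝ} (hq : q ∈ S.parts j) :
    q.2.2 ≤ S.C j := Finset.le_sup' (fun q => q.2.2) hq

lemma sum_pair_lt [Fintype J] {f g : J → ℝ} {j j' : J} (hjj : j ≠ j')
    (h : ∀ k, k ≠ j → k ≠ j' → f k = g k) (hpair : f j + f j' < g j + g j') :
    ∑ k, f k < ∑ k, g k := by
  classical
  have hj'mem : j' ∈ (Finset.univ : Finset J).erase j :=
    Finset.mem_erase.2 ⟨Ne.symm hjj, Finset.mem_univ _⟩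
  have key : ∀ u : J → ℝ, ∑ k, u k = u j + (u j' + ∑ k ∈ ((Finset.univ : Finset J).erase j).erase j', u k) := by
    intro u
    rw [Finset.add_sum_erase _ u hj'mem, Finset.add_sum_erase _ u (Finset.mem_univ j)]
  rw [key f, key g]
  have htail : ∑ k ∈ ((Finset.univ : Finset J).erase j).erase j', f k
      = ∑ k ∈ ((Finset.univ : Finset J).erase j).erase j', g k := by
    apply Finset.sum_congr rfl
    intro k hk
    rw [Finset.mem_erase, Finset.mem_erase] at hk
    exact h k hk.2.1 hk.1
  rw [htail]
  linarith
lemma exchange (S : PSchedule J R m p r) {j j' : J} (hjj : j ≠ j') (hr : r j = r j')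
    (P P' : Finset (Fin m × ℝ × ℝ))
    (hPne : P.Nonempty) (hP'ne : P'.Nonempty)
    (hlt : ∀ q ∈ P, q.2.1 < q.2.2) (hlt' : ∀ q ∈ P', q.2.1 < q.2.2)
    (hsub : ∀ q ∈ P, ∃ k0, (k0 = j ∨ k0 = j') ∧ ∃ q0 ∈ S.parts k0, q.1 = q0.1 ∧
      Set.Ico q.2.1 q.2.2 ⊆ Set.Ico q0.2.1 q0.2.2)
    (hsub' : ∀ q ∈ P', ∃ k0, (k0 = j ∨ k0 = j') ∧ ∃ q0 ∈ S.parts k0, q.1 = q0.1 ∧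
      Set.Ico q.2.1 q.2.2 ⊆ Set.Ico q0.2.1 q0.2.2)
    (hsum : ∑ q ∈ P, (q.2.2 - q.2.1) = p j)
    (hsum' : ∑ q ∈ P', (q.2.2 - q.2.1) = p j')
    (hdisj : ∀ q ∈ P, ∀ q'' ∈ P, q ≠ q'' →
      Disjoint (Set.Ico q.2.1 q.2.2) (Set.Ico q''.2.1 q''.2.2))
    (hdisj' : ∀ q ∈ P', ∀ q'' ∈ P', q ≠ q'' →
      Disjoint (Set.Ico q.2.1 q.2.2) (Set.Ico q''.2.1 q''.2.2))
    (hcross : ∀ q ∈ P, ∀ q'' ∈ P',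
      Disjoint (Set.Ico q.2.1 q.2.2) (Set.Ico q''.2.1 q''.2.2)) :
    ∃ S' : PSchedule J R m p r, S'.parts j = P ∧ S'.parts j' = P' ∧
      ∀ k, k ≠ j → k ≠ j' → S'.parts k = S.parts k := by
  classical
  set f : J → Finset (Fin m × ℝ × ℝ) :=
    fun k => if k = j then P else if k = j' then P' else S.parts k with hf
  have hfj : f j = P := by simp [hf]
  have hfj' : f j' = P' := by simp [hf, Ne.symm hjj]
  have hfk : ∀ k, k ≠ j → k ≠ j' → f k = S.parts k := by
    intro k h1 h2; simp [hf, h1, h2]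
  -- membership classification
  have hmem : ∀ k, ∀ q ∈ f k,
      (k = j ∧ q ∈ P) ∨ (k = j' ∧ q ∈ P') ∨ (k ≠ j ∧ k ≠ j' ∧ q ∈ S.parts k) := by
    intro k q hq
    by_cases h1 : k = j
    · subst h1; rw [hfj] at hq; exact Or.inl ⟨rfl, hq⟩
    by_cases h2 : k = j'
    · subst h2; rw [hfj'] at hq; exact Or.inr (Or.inl ⟨rfl, hq⟩)
    · rw [hfk k h1 h2] at hq; exact Or.inr (Or.inr ⟨h1, h2, hq⟩)
  have hltP : ∀ k, k = j ∨ k = j' → ∀ q ∈ f k, q.2.1 < q.2.2 := by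
    rintro k (rfl | rfl) q hq
    · exact hlt q (hfj ▸ hq)
    · exact hlt' q (hfj' ▸ hq)
  have hsubP : ∀ k, k = j ∨ k = j' → ∀ q ∈ f k, ∃ k0, (k0 = j ∨ k0 = j') ∧
      ∃ q0 ∈ S.parts k0, q.1 = q0.1 ∧ Set.Ico q.2.1 q.2.2 ⊆ Set.Ico q0.2.1 q0.2.2 := by
    rintro k (rfl | rfl) q hq
    · exact hsub q (hfj ▸ hq)
    · exact hsub' q (hfj' ▸ hq)
  -- disjointness between a new part (of a pair job) and an old part of an outside job
  have hmixed : ∀ (k k' : J) (q q'' : Fin m × ℝ × ℝ), (k = j ∨ k = j') →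
      k' ≠ j → k' ≠ j' → q ∈ f k → q'' ∈ S.parts k' →
      (q.1 = q''.1 ∨ r k = r k') →
      Disjoint (Set.Ico q.2.1 q.2.2) (Set.Ico q''.2.1 q''.2.2) := by
    intro k k' q q'' hk hk1 hk2 hq hq'' hcase
    obtain ⟨k0, hk0, q0, hq0, hm0, hs0⟩ := hsubP k hk q hq
    have hk0ne : k0 ≠ k' := by rcases hk0 with rfl | rfl <;> [exact Ne.symm hk1; exact Ne.symm hk2]
    have hdis0 : Disjoint (Set.Ico q0.2.1 q0.2.2) (Set.Ico q''.2.1 q''.2.2) := by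
      rcases hcase with hm | hres
      · exact S.machine_disjoint k0 k' q0 hq0 q'' hq''
          (by rintro ⟨h, -⟩; exact hk0ne h) (by rw [← hm0, hm])
      · have hr0 : r k0 = r k' := by
          have h1 : r k0 = r k := by
            rcases hk0 with rfl | rfl <;> rcases hk with rfl | rfl <;> simp [hr]
          rw [h1, hres]
        exact S.res_disjoint k0 k' hk0ne hr0 q0 hq0 q'' hq''
    exact hdis0.mono hs0 subset_rfl
  -- disjointness between two new parts of pair jobs
  have hpairdisj : ∀ (k k' : J) (q q'' : Fin m × ℝ × ℝ), (k = j ∨ k = j') →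
      (k' = j ∨ k' = j') → ¬(k = k' ∧ q = q'') → q ∈ f k → q'' ∈ f k' →
      Disjoint (Set.Ico q.2.1 q.2.2) (Set.Ico q''.2.1 q''.2.2) := by
    rintro k k' q q'' (rfl | rfl) (rfl | rfl) hne hq hq''
    · exact hdisj q (hfj ▸ hq) q'' (hfj ▸ hq'') (fun h => hne ⟨rfl, h⟩)
    · exact hcross q (hfj ▸ hq) q'' (hfj' ▸ hq'')
    · exact (hcross q'' (hfj ▸ hq'') q (hfj' ▸ hq)).symm
    · exact hdisj' q (hfj' ▸ hq) q'' (hfj' ▸ hq'') (fun h => hne ⟨rfl, h⟩)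
  refine ⟨⟨f, ?_, ?_, ?_, ?_, ?_, ?_, ?_⟩, hfj, hfj', hfk⟩
  · -- nonempty
    intro k
    by_cases h1 : k = j
    · subst h1; rw [hfj]; exact hPne
    by_cases h2 : k = j'
    · subst h2; rw [hfj']; exact hP'ne
    · rw [hfk k h1 h2]; exact S.parts_nonempty k
  · -- start_nonneg
    intro k q hq
    rcases hmem k q hq with ⟨rfl, hqP⟩ | ⟨rfl, hqP⟩ | ⟨h1, h2, hqS⟩
    · obtain ⟨k0, hk0, q0, hq0, -, hs0⟩ := hsub q hqP
      have := hs0 (Set.mem_Ico.2 ⟨le_rfl, hlt q hqP⟩)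
      exact le_trans (S.start_nonneg k0 q0 hq0) this.1
    · obtain ⟨k0, hk0, q0, hq0, -, hs0⟩ := hsub' q hqP
      have := hs0 (Set.mem_Ico.2 ⟨le_rfl, hlt' q hqP⟩)
      exact le_trans (S.start_nonneg k0 q0 hq0) this.1
    · exact S.start_nonneg k q hqS
  · -- start_lt_end
    intro k q hq
    rcases hmem k q hq with ⟨rfl, hqP⟩ | ⟨rfl, hqP⟩ | ⟨h1, h2, hqS⟩
    · exact hlt q hqP
    · exact hlt' q hqP
    · exact S.start_lt_end k q hqS
  · -- length_sum
    intro k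
    by_cases h1 : k = j
    · subst h1; rw [hfj]; exact hsum
    by_cases h2 : k = j'
    · subst h2; rw [hfj']; exact hsum'
    · rw [hfk k h1 h2]; exact S.length_sum k
  · -- job_disjoint
    intro k q hq q'' hq'' hne
    by_cases h1 : k = j
    · exact hpairdisj k k q q'' (Or.inl h1) (Or.inl h1) (fun h => hne h.2) hq hq''
    by_cases h2 : k = j'
    · exact hpairdisj k k q q'' (Or.inr h2) (Or.inr h2) (fun h => hne h.2) hq hq''
    · rw [hfk k h1 h2] at hq hq''
      exact S.job_disjoint k q hq q'' hq'' hne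
  · -- machine_disjoint
    intro k k' q hq q'' hq'' hne hmach
    rcases hmem k q hq with ⟨hkj, hqP⟩ | ⟨hkj, hqP⟩ | ⟨hk1, hk2, hqS⟩
    · rcases hmem k' q'' hq'' with ⟨hkj', -⟩ | ⟨hkj', -⟩ | ⟨hk1', hk2', hqS'⟩
      · exact hpairdisj k k' q q'' (Or.inl hkj) (Or.inl hkj') hne hq hq''
      · exact hpairdisj k k' q q'' (Or.inl hkj) (Or.inr hkj') hne hq hq''
      · exact hmixed k k' q q'' (Or.inl hkj) hk1' hk2' hq hqS' (Or.inl hmach)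
    · rcases hmem k' q'' hq'' with ⟨hkj', -⟩ | ⟨hkj', -⟩ | ⟨hk1', hk2', hqS'⟩
      · exact hpairdisj k k' q q'' (Or.inr hkj) (Or.inl hkj') hne hq hq''
      · exact hpairdisj k k' q q'' (Or.inr hkj) (Or.inr hkj') hne hq hq''
      · exact hmixed k k' q q'' (Or.inr hkj) hk1' hk2' hq hqS' (Or.inl hmach)
    · rcases hmem k' q'' hq'' with ⟨hkj', hqP'⟩ | ⟨hkj', hqP'⟩ | ⟨hk1', hk2', hqS'⟩
      · exact (hmixed k' k q'' q (Or.inl hkj') hk1 hk2 hq'' hqS (Or.inl hmach.symm)).symm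
      · exact (hmixed k' k q'' q (Or.inr hkj') hk1 hk2 hq'' hqS (Or.inl hmach.symm)).symm
      · exact S.machine_disjoint k k' q hqS q'' hqS' hne hmach
  · -- res_disjoint
    intro k k' hkk' hrk q hq q'' hq''
    rcases hmem k q hq with ⟨hkj, hqP⟩ | ⟨hkj, hqP⟩ | ⟨hk1, hk2, hqS⟩
    · rcases hmem k' q'' hq'' with ⟨hkj', -⟩ | ⟨hkj', -⟩ | ⟨hk1', hk2', hqS'⟩
      · exact absurd (hkj.trans hkj'.symm) hkk'
      · exact hpairdisj k k' q q'' (Or.inl hkj) (Or.inr hkj') (fun h => hkk' h.1) hq hq''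
      · exact hmixed k k' q q'' (Or.inl hkj) hk1' hk2' hq hqS' (Or.inr hrk)
    · rcases hmem k' q'' hq'' with ⟨hkj', -⟩ | ⟨hkj', -⟩ | ⟨hk1', hk2', hqS'⟩
      · exact hpairdisj k k' q q'' (Or.inr hkj) (Or.inl hkj') (fun h => hkk' h.1) hq hq''
      · exact absurd (hkj.trans hkj'.symm) hkk'
      · exact hmixed k k' q q'' (Or.inr hkj) hk1' hk2' hq hqS' (Or.inr hrk)
    · rcases hmem k' q'' hq'' with ⟨hkj', hqP'⟩ | ⟨hkj', hqP'⟩ | ⟨hk1', hk2', hqS'⟩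
      · exact (hmixed k' k q'' q (Or.inl hkj') hk1 hk2 hq'' hqS (Or.inr hrk.symm)).symm
      · exact (hmixed k' k q'' q (Or.inr hkj') hk1 hk2 hq'' hqS (Or.inr hrk.symm)).symm
      · exact S.res_disjoint k k' hkk' hrk q hqS q'' hqS'
lemma C_eq {S' : PSchedule J R m p r} {j : J} {Q : Finset (Fin m × ℝ × ℝ)}
    (h : S'.parts j = Q) (hQ : Q.Nonempty) :
    S'.C j = Q.sup' hQ (fun q => q.2.2) := by
  rw [PSchedule.C]
  exact Finset.sup'_congr _ h (fun _ _ => rfl)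

lemma no_inversion [Fintype J] (S : PSchedule J R m p r)
    (hopt : ∀ S' : PSchedule J R m p r, ∑ k, S.C k ≤ ∑ k, S'.C k)
    {j j' : J} (hjj : j ≠ j') (hr : r j = r j') (hC : S.C j < S.C j')
    {q0 q0' : Fin m × ℝ × ℝ} (hq0 : q0 ∈ S.parts j) (hq0' : q0' ∈ S.parts j')
    (hord : q0'.2.2 ≤ q0.2.1) : False := by
  classical
  obtain ⟨qs, hqs, hCs⟩ := Finset.exists_mem_eq_sup' (S.parts_nonempty j) (fun q => q.2.2)
  rw [← PSchedule.C] at hCs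
  have l0 := S.start_lt_end j q0 hq0
  have l0' := S.start_lt_end j' q0' hq0'
  have ls := S.start_lt_end j qs hqs
  have hq0C : q0.2.2 ≤ S.C j := le_C S hq0
  have hb'a : q0'.2.2 ≤ qs.2.1 := by
    rcases dichotomy S hjj hr hqs hq0' with h1 | h1
    · rw [← hCs] at h1; linarith
    · exact h1
  set l : ℝ := min (qs.2.2 - qs.2.1) (q0'.2.2 - q0'.2.1) / 2 with hl
  have hlmin : 0 < min (qs.2.2 - qs.2.1) (q0'.2.2 - q0'.2.1) :=
    lt_min (by linarith) (by linarith)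
  have hl1 : 0 < l := by positivity
  have hl2 : l < qs.2.2 - qs.2.1 := by
    have h1 : min (qs.2.2 - qs.2.1) (q0'.2.2 - q0'.2.1) ≤ qs.2.2 - qs.2.1 := min_le_left _ _
    rw [hl]; linarith
  have hl3 : l < q0'.2.2 - q0'.2.1 := by
    have h1 : min (qs.2.2 - qs.2.1) (q0'.2.2 - q0'.2.1) ≤ q0'.2.2 - q0'.2.1 := min_le_right _ _
    rw [hl]; linarith
  set x1 : Fin m × ℝ × ℝ := (qs.1, qs.2.1, qs.2.2 - l) with hx1
  set x2 : Fin m × ℝ × ℝ := (q0'.1, q0'.2.1, q0'.2.1 + l) with hx2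
  set y1 : Fin m × ℝ × ℝ := (q0'.1, q0'.2.1 + l, q0'.2.2) with hy1
  set y2 : Fin m × ℝ × ℝ := (qs.1, qs.2.2 - l, qs.2.2) with hy2
  set E : Finset (Fin m × ℝ × ℝ) := (S.parts j).erase qs with hE
  set E' : Finset (Fin m × ℝ × ℝ) := (S.parts j').erase q0' with hE'
  set P : Finset (Fin m × ℝ × ℝ) := insert x1 (insert x2 E) with hP
  set P' : Finset (Fin m × ℝ × ℝ) := insert y1 (insert y2 E') with hP'
  have px1 : x1.2.1 = qs.2.1 ∧ x1.2.2 = qs.2.2 - l := ⟨rfl, rfl⟩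
  have px2 : x2.2.1 = q0'.2.1 ∧ x2.2.2 = q0'.2.1 + l := ⟨rfl, rfl⟩
  have py1 : y1.2.1 = q0'.2.1 + l ∧ y1.2.2 = q0'.2.2 := ⟨rfl, rfl⟩
  have py2 : y2.2.1 = qs.2.2 - l ∧ y2.2.2 = qs.2.2 := ⟨rfl, rfl⟩
  have sx1 : Set.Ico x1.2.1 x1.2.2 ⊆ Set.Ico qs.2.1 qs.2.2 := by
    rw [px1.1, px1.2]; exact Set.Ico_subset_Ico le_rfl (by linarith)
  have sx2 : Set.Ico x2.2.1 x2.2.2 ⊆ Set.Ico q0'.2.1 q0'.2.2 := by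
    rw [px2.1, px2.2]; exact Set.Ico_subset_Ico le_rfl (by linarith)
  have sy1 : Set.Ico y1.2.1 y1.2.2 ⊆ Set.Ico q0'.2.1 q0'.2.2 := by
    rw [py1.1, py1.2]; exact Set.Ico_subset_Ico (by linarith) le_rfl
  have sy2 : Set.Ico y2.2.1 y2.2.2 ⊆ Set.Ico qs.2.1 qs.2.2 := by
    rw [py2.1, py2.2]; exact Set.Ico_subset_Ico (by linarith) le_rfl
  have dQQ' : Disjoint (Set.Ico qs.2.1 qs.2.2) (Set.Ico q0'.2.1 q0'.2.2) :=
    S.res_disjoint j j' hjj hr qs hqs q0' hq0'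
  have dQe' : ∀ q'' ∈ E', Disjoint (Set.Ico qs.2.1 qs.2.2) (Set.Ico q''.2.1 q''.2.2) :=
    fun q'' h => S.res_disjoint j j' hjj hr qs hqs q'' (Finset.mem_of_mem_erase h)
  have deQ' : ∀ q ∈ E, Disjoint (Set.Ico q.2.1 q.2.2) (Set.Ico q0'.2.1 q0'.2.2) :=
    fun q h => S.res_disjoint j j' hjj hr q (Finset.mem_of_mem_erase h) q0' hq0'
  have dee : ∀ q ∈ E, ∀ q'' ∈ E', Disjoint (Set.Ico q.2.1 q.2.2) (Set.Ico q''.2.1 q''.2.2) :=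
    fun q h q'' h' => S.res_disjoint j j' hjj hr q (Finset.mem_of_mem_erase h) q''
      (Finset.mem_of_mem_erase h')
  have deQ : ∀ q ∈ E, Disjoint (Set.Ico q.2.1 q.2.2) (Set.Ico qs.2.1 qs.2.2) :=
    fun q h => S.job_disjoint j q (Finset.mem_of_mem_erase h) qs hqs (Finset.ne_of_mem_erase h)
  have de'Q' : ∀ q'' ∈ E', Disjoint (Set.Ico q''.2.1 q''.2.2) (Set.Ico q0'.2.1 q0'.2.2) :=
    fun q'' h => S.job_disjoint j' q'' (Finset.mem_of_mem_erase h) q0' hq0'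
      (Finset.ne_of_mem_erase h)
  have hx1E : x1 ∉ E := by
    intro h
    have d := Set.disjoint_left.1 (deQ x1 h)
    have h1 : qs.2.1 ∈ Set.Ico x1.2.1 x1.2.2 := by
      rw [px1.1, px1.2]; exact Set.mem_Ico.2 ⟨le_rfl, by linarith⟩
    exact d h1 (Set.mem_Ico.2 ⟨le_rfl, ls⟩)
  have hx2E : x2 ∉ E := by
    intro h
    have d := Set.disjoint_left.1 (deQ' x2 h)
    have h1 : q0'.2.1 ∈ Set.Ico x2.2.1 x2.2.2 := by
      rw [px2.1, px2.2]; exact Set.mem_Ico.2 ⟨le_rfl, by linarith⟩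
    exact d h1 (Set.mem_Ico.2 ⟨le_rfl, l0'⟩)
  have hx12 : x1 ≠ x2 := by
    intro h
    have h1 : x1.2.1 = x2.2.1 := by rw [h]
    rw [px1.1, px2.1] at h1
    linarith
  have hy1E : y1 ∉ E' := by
    intro h
    have d := Set.disjoint_left.1 (de'Q' y1 h)
    have h1 : q0'.2.1 + l ∈ Set.Ico y1.2.1 y1.2.2 := by
      rw [py1.1, py1.2]; exact Set.mem_Ico.2 ⟨le_rfl, by linarith⟩
    exact d h1 (Set.mem_Ico.2 ⟨by linarith, by linarith⟩)
  have hy2E : y2 ∉ E' := by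
    intro h
    have d := Set.disjoint_left.1 ((dQe' y2 h).symm)
    have h1 : qs.2.2 - l ∈ Set.Ico y2.2.1 y2.2.2 := by
      rw [py2.1, py2.2]; exact Set.mem_Ico.2 ⟨le_rfl, by linarith⟩
    exact d h1 (Set.mem_Ico.2 ⟨by linarith, by linarith⟩)
  have hy12 : y1 ≠ y2 := by
    intro h
    have h1 : y1.2.1 = y2.2.1 := by rw [h]
    rw [py1.1, py2.1] at h1
    linarith
  have memP : ∀ q ∈ P, q = x1 ∨ q = x2 ∨ q ∈ E := by
    intro q hq
    rcases Finset.mem_insert.1 hq with rfl | hq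
    · exact Or.inl rfl
    rcases Finset.mem_insert.1 hq with rfl | hq
    · exact Or.inr (Or.inl rfl)
    · exact Or.inr (Or.inr hq)
  have memP' : ∀ q ∈ P', q = y1 ∨ q = y2 ∨ q ∈ E' := by
    intro q hq
    rcases Finset.mem_insert.1 hq with rfl | hq
    · exact Or.inl rfl
    rcases Finset.mem_insert.1 hq with rfl | hq
    · exact Or.inr (Or.inl rfl)
    · exact Or.inr (Or.inr hq)
  have hEsum : ∑ q ∈ E, (q.2.2 - q.2.1) + (qs.2.2 - qs.2.1) = p j :=
    (Finset.sum_erase_add _ _ hqs).trans (S.length_sum j)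
  have hE'sum : ∑ q ∈ E', (q.2.2 - q.2.1) + (q0'.2.2 - q0'.2.1) = p j' :=
    (Finset.sum_erase_add _ _ hq0').trans (S.length_sum j')
  have hsumP : ∑ q ∈ P, (q.2.2 - q.2.1) = p j := by
    rw [hP, Finset.sum_insert (by
      intro h
      rcases Finset.mem_insert.1 h with h | h
      exacts [hx12 h, hx1E h]), Finset.sum_insert hx2E]
    rw [px1.1, px1.2, px2.1, px2.2]
    linarith
  have hsumP' : ∑ q ∈ P', (q.2.2 - q.2.1) = p j' := by
    rw [hP', Finset.sum_insert (by
      intro h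
      rcases Finset.mem_insert.1 h with h | h
      exacts [hy12 h, hy1E h]), Finset.sum_insert hy2E]
    rw [py1.1, py1.2, py2.1, py2.2]
    linarith
  obtain ⟨S', hS'j, hS'j', hS'k⟩ := exchange S hjj hr P P'
    (Finset.insert_nonempty _ _) (Finset.insert_nonempty _ _)
    (by
      intro q hq
      rcases memP q hq with rfl | rfl | hq
      · rw [px1.1, px1.2]; linarith
      · rw [px2.1, px2.2]; linarith
      · exact S.start_lt_end j q (Finset.mem_of_mem_erase hq))
    (by
      intro q hq
      rcases memP' q hq with rfl | rfl | hq
      · rw [py1.1, py1.2]; linarith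
      · rw [py2.1, py2.2]; linarith
      · exact S.start_lt_end j' q (Finset.mem_of_mem_erase hq))
    (by
      intro q hq
      rcases memP q hq with rfl | rfl | hq
      · exact ⟨j, Or.inl rfl, qs, hqs, rfl, sx1⟩
      · exact ⟨j', Or.inr rfl, q0', hq0', rfl, sx2⟩
      · exact ⟨j, Or.inl rfl, q, Finset.mem_of_mem_erase hq, rfl, subset_rfl⟩)
    (by
      intro q hq
      rcases memP' q hq with rfl | rfl | hq
      · exact ⟨j', Or.inr rfl, q0', hq0', rfl, sy1⟩
      · exact ⟨j, Or.inl rfl, qs, hqs, rfl, sy2⟩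
      · exact ⟨j', Or.inr rfl, q, Finset.mem_of_mem_erase hq, rfl, subset_rfl⟩)
    hsumP hsumP'
    (by
      intro q hq q'' hq'' hne
      rcases memP q hq with rfl | rfl | hq <;> rcases memP q'' hq'' with rfl | rfl | hq''
      · exact absurd rfl hne
      · exact dQQ'.mono sx1 sx2
      · exact ((deQ q'' hq'').symm).mono sx1 subset_rfl
      · exact (dQQ'.mono sx1 sx2).symm
      · exact absurd rfl hne
      · exact ((deQ' q'' hq'').symm).mono sx2 subset_rfl
      · exact (deQ q hq).mono subset_rfl sx1
      · exact (deQ' q hq).mono subset_rfl sx2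
      · exact S.job_disjoint j q (Finset.mem_of_mem_erase hq) q''
          (Finset.mem_of_mem_erase hq'') hne)
    (by
      intro q hq q'' hq'' hne
      rcases memP' q hq with rfl | rfl | hq <;> rcases memP' q'' hq'' with rfl | rfl | hq''
      · exact absurd rfl hne
      · exact (dQQ'.symm).mono sy1 sy2
      · exact ((de'Q' q'' hq'').symm).mono sy1 subset_rfl
      · exact ((dQQ'.symm).mono sy1 sy2).symm
      · exact absurd rfl hne
      · exact (dQe' q'' hq'').mono sy2 subset_rfl
      · exact (de'Q' q hq).mono subset_rfl sy1
      · exact ((dQe' q hq).symm).mono subset_rfl sy2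
      · exact S.job_disjoint j' q (Finset.mem_of_mem_erase hq) q''
          (Finset.mem_of_mem_erase hq'') hne)
    (by
      intro q hq q'' hq''
      rcases memP q hq with rfl | rfl | hq <;> rcases memP' q'' hq'' with rfl | rfl | hq''
      · exact dQQ'.mono sx1 sy1
      · exact ico_disj_of_le (by rw [px1.2, py2.1])
      · exact (dQe' q'' hq'').mono sx1 subset_rfl
      · exact ico_disj_of_le (by rw [px2.2, py1.1])
      · exact (dQQ'.symm).mono sx2 sy2
      · exact ((de'Q' q'' hq'').symm).mono sx2 subset_rfl
      · exact (deQ' q hq).mono subset_rfl sy1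
      · exact ((deQ q hq)).mono subset_rfl sy2
      · exact dee q hq q'' hq'')
  have hC'j : S'.C j < S.C j := by
    rw [C_eq hS'j (Finset.insert_nonempty _ _), Finset.sup'_lt_iff]
    intro q hq
    rcases memP q hq with rfl | rfl | hq
    · rw [px1.2, hCs]; linarith
    · rw [px2.2, hCs]; linarith
    · have h1 : q.2.2 ≤ S.C j := le_C S (Finset.mem_of_mem_erase hq)
      rcases lt_or_eq_of_le h1 with h2 | h2
      · exact h2
      · exact absurd (end_inj S (Finset.mem_of_mem_erase hq) hqs (h2.trans hCs))
          (Finset.ne_of_mem_erase hq)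
  have hC'j' : S'.C j' ≤ S.C j' := by
    rw [C_eq hS'j' (Finset.insert_nonempty _ _), Finset.sup'_le_iff]
    intro q hq
    rcases memP' q hq with rfl | rfl | hq
    · rw [py1.2]; exact le_C S hq0'
    · rw [py2.2, ← hCs]; exact hC.le
    · exact le_C S (Finset.mem_of_mem_erase hq)
  have hCk : ∀ k, k ≠ j → k ≠ j' → S'.C k = S.C k := by
    intro k h1 h2
    exact C_eq (hS'k k h1 h2) (S.parts_nonempty k)
  have hlt := sum_pair_lt (f := S'.C) (g := S.C) hjj hCk (by linarith)
  exact absurd (hopt S') (not_le.2 hlt)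
lemma no_spt_violation [Fintype J] (S : PSchedule J R m p r)
    (hopt : ∀ S' : PSchedule J R m p r, ∑ k, S.C k ≤ ∑ k, S'.C k)
    {j j' : J} (hjj : j ≠ j') (hr : r j = r j')
    (hpj : 0 < p j) (hpp : p j < p j')
    (hord : ∀ q' ∈ S.parts j', ∀ q ∈ S.parts j, q'.2.2 ≤ q.2.1) : False := by
  classical
  set A : Finset (Fin m × ℝ × ℝ) := S.parts j with hA
  set B : Finset (Fin m × ℝ × ℝ) := S.parts j' with hB
  set f : ℝ → ℝ := fun t => ∑ q ∈ B, (min q.2.2 t - min q.2.1 t) with hf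
  have hcont : Continuous f := by
    apply continuous_finset_sum
    intro q _
    exact (continuous_const.min continuous_id).sub (continuous_const.min continuous_id)
  have hf0 : f 0 = 0 := by
    rw [hf]
    apply Finset.sum_eq_zero
    intro q hq
    have h1 := S.start_nonneg j' q hq
    have h2 := S.start_lt_end j' q hq
    rw [min_eq_right (by linarith), min_eq_right h1]
    ring
  have hfC : f (S.C j') = p j' := by
    rw [hf]
    rw [← S.length_sum j']
    apply Finset.sum_congr rfl
    intro q hq
    have h1 := le_C S hq
    have h2 := S.start_lt_end j' q hq
    rw [min_eq_left h1, min_eq_left (by linarith)]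
  have h0C : (0:ℝ) ≤ S.C j' := by
    obtain ⟨q, hq⟩ := S.parts_nonempty j'
    have := S.start_nonneg j' q hq
    have := S.start_lt_end j' q hq
    have := le_C S hq
    linarith
  obtain ⟨t, htI, hft⟩ := intermediate_value_Icc h0C hcont.continuousOn
    (by rw [hf0, hfC]; exact ⟨hpj.le, hpp.le⟩)
  have htpos : 0 < t := by
    rcases lt_or_eq_of_le htI.1 with h | h
    · exact h
    · rw [← h, hf0] at hft; linarith
  have htC : t < S.C j' := by
    rcases lt_or_eq_of_le htI.2 with h | h
    · exact h
    · rw [h, hfC] at hft; linarith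
  set g1 : Fin m × ℝ × ℝ → Fin m × ℝ × ℝ := fun q => (q.1, q.2.1, min q.2.2 t) with hg1
  set g2 : Fin m × ℝ × ℝ → Fin m × ℝ × ℝ := fun q => (q.1, max q.2.1 t, q.2.2) with hg2
  set P : Finset (Fin m × ℝ × ℝ) := (B.filter (fun q => q.2.1 < t)).image g1 with hP
  set P' : Finset (Fin m × ℝ × ℝ) := A ∪ (B.filter (fun q => t < q.2.2)).image g2 with hP'
  have hinj1 : ∀ x ∈ B.filter (fun q => q.2.1 < t), ∀ y ∈ B.filter (fun q => q.2.1 < t),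
      g1 x = g1 y → x = y := by
    intro x hx y hy h
    have h1 : x.2.1 = y.2.1 := congrArg (fun z => z.2.1) h
    exact start_inj S (Finset.mem_filter.1 hx).1 (Finset.mem_filter.1 hy).1 h1
  have hinj2 : ∀ x ∈ B.filter (fun q => t < q.2.2), ∀ y ∈ B.filter (fun q => t < q.2.2),
      g2 x = g2 y → x = y := by
    intro x hx y hy h
    have h1 : x.2.2 = y.2.2 := congrArg (fun z => z.2.2) h
    exact end_inj S (Finset.mem_filter.1 hx).1 (Finset.mem_filter.1 hy).1 h1
  have memP : ∀ q ∈ P, ∃ q0 ∈ B, q0.2.1 < t ∧ q = g1 q0 := by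
    intro q hq
    obtain ⟨q0, hq0, rfl⟩ := Finset.mem_image.1 hq
    obtain ⟨h1, h2⟩ := Finset.mem_filter.1 hq0
    exact ⟨q0, h1, h2, rfl⟩
  have memP' : ∀ q ∈ P', q ∈ A ∨ ∃ q0 ∈ B, t < q0.2.2 ∧ q = g2 q0 := by
    intro q hq
    rcases Finset.mem_union.1 hq with h | h
    · exact Or.inl h
    obtain ⟨q0, hq0, rfl⟩ := Finset.mem_image.1 h
    obtain ⟨h1, h2⟩ := Finset.mem_filter.1 hq0
    exact Or.inr ⟨q0, h1, h2, rfl⟩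
  have sg1 : ∀ q0 : Fin m × ℝ × ℝ, Set.Ico (g1 q0).2.1 (g1 q0).2.2 ⊆ Set.Ico q0.2.1 q0.2.2 :=
    fun q0 => Set.Ico_subset_Ico le_rfl (min_le_left _ _)
  have sg2 : ∀ q0 : Fin m × ℝ × ℝ, Set.Ico (g2 q0).2.1 (g2 q0).2.2 ⊆ Set.Ico q0.2.1 q0.2.2 :=
    fun q0 => Set.Ico_subset_Ico (le_max_left _ _) le_rfl
  have hPne : P.Nonempty := by
    rw [hP, Finset.image_nonempty, Finset.filter_nonempty_iff]
    by_contra hc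
    push_neg at hc
    have : f t = 0 := by
      apply Finset.sum_eq_zero
      intro q hq
      have h1 := hc q hq
      have h2 := S.start_lt_end j' q hq
      rw [min_eq_right h1, min_eq_right (by linarith)]
      ring
    rw [hft] at this
    linarith
  have hAdisjim : Disjoint A ((B.filter (fun q => t < q.2.2)).image g2) := by
    rw [Finset.disjoint_right]
    intro x hx hxA
    obtain ⟨q0, hq0, rfl⟩ := Finset.mem_image.1 hx
    obtain ⟨hq0B, hq0t⟩ := Finset.mem_filter.1 hq0
    have hd := S.res_disjoint j j' hjj hr _ hxA q0 hq0B
    have h2 := S.start_lt_end j' q0 hq0B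
    exact Set.disjoint_left.1 hd
      (Set.mem_Ico.2 ⟨le_rfl, by show max q0.2.1 t < q0.2.2; exact max_lt h2 hq0t⟩)
      (Set.mem_Ico.2 ⟨le_max_left _ _, max_lt h2 hq0t⟩)
  have hsumP : ∑ q ∈ P, (q.2.2 - q.2.1) = p j := by
    rw [hP, Finset.sum_image hinj1, Finset.sum_filter, ← hft, hf]
    apply Finset.sum_congr rfl
    intro q hq
    have h2 := S.start_lt_end j' q hq
    split_ifs with h
    · rw [min_eq_left h.le]
    · push_neg at h
      rw [min_eq_right h, min_eq_right (by linarith)]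
      ring
  have hsumP' : ∑ q ∈ P', (q.2.2 - q.2.1) = p j' := by
    rw [hP', Finset.sum_union hAdisjim, Finset.sum_image hinj2, Finset.sum_filter]
    have key : ∑ q ∈ B, (if t < q.2.2 then ((g2 q).2.2 - (g2 q).2.1) else 0)
        = p j' - p j := by
      have expand : ∀ q ∈ B, (if t < q.2.2 then ((g2 q).2.2 - (g2 q).2.1) else 0)
          = (q.2.2 - q.2.1) - (min q.2.2 t - min q.2.1 t) := by
        intro q hq
        have h2 := S.start_lt_end j' q hq
        split_ifs with h
        · show q.2.2 - max q.2.1 t = _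
          rcases le_total q.2.1 t with h3 | h3
          · rw [max_eq_right h3, min_eq_left h3, min_eq_right h.le]; ring
          · rw [max_eq_left h3, min_eq_right h3, min_eq_right (h3.trans h2.le)]; ring
        · push_neg at h
          rw [min_eq_left h, min_eq_left (by linarith)]
          ring
      rw [Finset.sum_congr rfl expand, Finset.sum_sub_distrib]
      rw [S.length_sum j']
      have hft' : ∑ x ∈ B, (min x.2.2 t - min x.2.1 t) = p j := hft
      rw [hft']
    rw [key, S.length_sum j]
    ring
  obtain ⟨S', hS'j, hS'j', hS'k⟩ := exchange S hjj hr P P'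
    hPne (by
      obtain ⟨q, hq⟩ := S.parts_nonempty j
      exact ⟨q, Finset.mem_union_left _ hq⟩)
    (by
      intro q hq
      obtain ⟨q0, hq0, hq0t, rfl⟩ := memP q hq
      have h2 := S.start_lt_end j' q0 hq0
      exact lt_min h2 hq0t)
    (by
      intro q hq
      rcases memP' q hq with h | ⟨q0, hq0, hq0t, rfl⟩
      · exact S.start_lt_end j q h
      · exact max_lt (S.start_lt_end j' q0 hq0) hq0t)
    (by
      intro q hq
      obtain ⟨q0, hq0, hq0t, rfl⟩ := memP q hq
      exact ⟨j', Or.inr rfl, q0, hq0, rfl, sg1 q0⟩)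
    (by
      intro q hq
      rcases memP' q hq with h | ⟨q0, hq0, hq0t, rfl⟩
      · exact ⟨j, Or.inl rfl, q, h, rfl, subset_rfl⟩
      · exact ⟨j', Or.inr rfl, q0, hq0, rfl, sg2 q0⟩)
    hsumP hsumP'
    (by
      intro q hq q'' hq'' hne
      obtain ⟨qx, hqx, hqxt, rfl⟩ := memP q hq
      obtain ⟨qy, hqy, hqyt, rfl⟩ := memP q'' hq''
      have hxy : qx ≠ qy := fun h => hne (by rw [h])
      exact (S.job_disjoint j' qx hqx qy hqy hxy).mono (sg1 qx) (sg1 qy))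
    (by
      intro q hq q'' hq'' hne
      rcases memP' q hq with h | ⟨qx, hqx, hqxt, rfl⟩ <;>
        rcases memP' q'' hq'' with h' | ⟨qy, hqy, hqyt, rfl⟩
      · exact S.job_disjoint j q h q'' h' hne
      · exact (S.res_disjoint j j' hjj hr q h qy hqy).mono subset_rfl (sg2 qy)
      · exact ((S.res_disjoint j j' hjj hr q'' h' qx hqx).symm).mono (sg2 qx) subset_rfl
      · by_cases hxy : qx = qy
        · exact absurd (by rw [hxy]) hne
        · exact (S.job_disjoint j' qx hqx qy hqy hxy).mono (sg2 qx) (sg2 qy))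
    (by
      intro q hq q'' hq''
      obtain ⟨qx, hqx, hqxt, rfl⟩ := memP q hq
      rcases memP' q'' hq'' with h' | ⟨qy, hqy, hqyt, rfl⟩
      · exact ((S.res_disjoint j j' hjj hr q'' h' qx hqx).symm).mono (sg1 qx) subset_rfl
      · by_cases hxy : qx = qy
        · subst hxy
          exact ico_disj_of_le (le_trans (min_le_right _ _) (le_max_right _ _))
        · exact (S.job_disjoint j' qx hqx qy hqy hxy).mono (sg1 qx) (sg2 qy))
  have hC'j : S'.C j < S.C j' := by
    rw [C_eq hS'j hPne, Finset.sup'_lt_iff]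
    intro q hq
    obtain ⟨q0, hq0, hq0t, rfl⟩ := memP q hq
    exact lt_of_le_of_lt (min_le_right _ _) htC
  have hC'j' : S'.C j' ≤ S.C j := by
    rw [C_eq hS'j' (by
      obtain ⟨q, hq⟩ := S.parts_nonempty j
      exact ⟨q, Finset.mem_union_left _ hq⟩), Finset.sup'_le_iff]
    intro q hq
    rcases memP' q hq with h | ⟨q0, hq0, hq0t, rfl⟩
    · exact le_C S h
    · obtain ⟨qa, hqa⟩ := S.parts_nonempty j
      have h1 := hord q0 hq0 qa hqa
      have h2 := S.start_lt_end j qa hqa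
      have h3 := le_C S hqa
      show q0.2.2 ≤ S.C j
      linarith
  have hCk : ∀ k, k ≠ j → k ≠ j' → S'.C k = S.C k := by
    intro k h1 h2
    exact C_eq (hS'k k h1 h2) (S.parts_nonempty k)
  have hlt := sum_pair_lt (f := S'.C) (g := S.C) hjj hCk (by linarith)
  exact absurd (hopt S') (not_le.2 hlt)
end SPT


/-- In an optimal preemptive schedule for `P|partition|ΣC_j`, for distinct jobs
`j, j'` sharing a resource: if `p j < p j'` then `C j < C j'`, and if
`C j < C j'` then every part of `j` ends no later than the start of every part
of `j'`. -/
theorem optimal_preemptive_spt_order {J R : Type} [Fintype J]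
    (m : ℕ) (hm : 1 ≤ m) (p : J → ℝ) (hp : ∀ j, 0 < p j) (r : J → R)
    (S : PSchedule J R m p r)
    (hopt : ∀ S' : PSchedule J R m p r, ∑ j, S.C j ≤ ∑ j, S'.C j) :
    ∀ j j' : J, j ≠ j' → r j = r j' →
      (p j < p j' → S.C j < S.C j') ∧
      (S.C j < S.C j' →
        ∀ q ∈ S.parts j, ∀ q' ∈ S.parts j', q.2.2 ≤ q'.2.1) := by
  intro j j' hjj hr
  constructor
  · intro hpp
    by_contra hc
    push_neg at hc
    have hne := SPT.C_ne S hjj hr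
    have hlt : S.C j' < S.C j := lt_of_le_of_ne hc (fun h => hne h.symm)
    have hord : ∀ q' ∈ S.parts j', ∀ q ∈ S.parts j, q'.2.2 ≤ q.2.1 := by
      intro q' hq' q hq
      rcases SPT.dichotomy S hjj hr hq hq' with h | h
      · exact (SPT.no_inversion S hopt hjj.symm hr.symm hlt hq' hq h).elim
      · exact h
    exact SPT.no_spt_violation S hopt hjj hr (hp j) hpp hord
  · intro hC q hq q' hq'
    rcases SPT.dichotomy S hjj hr hq hq' with h | h
    · exact h
    · exact (SPT.no_inversion S hopt hjj hr hC hq hq' h).elim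
end

section
/- Consider an instance of P|partition|ΣC_j in which p_j ≥ 1 for every job j, and let S be a feasible schedule for it. Then the modified instance with the same machines, jobs and resources but with every processing time replaced by 1 admits a feasible schedule in which every job has the same completion time as in S; in particular, the optimal total completion time of the unit-processing-time instance is at most that of the original instance. -/
/-- If every processing time is at least `1` and `(s, M)` is a feasible schedule
of the instance, then the instance with all processing times replaced by `1`
admits a feasible schedule in which every job has the same completion time as
in `(s, M)`.  In particular, the optimal total completion time of the unit
instance is at most that of the original instance. -/
theorem unit_instance_schedule_from_schedule {J R : Type} [Fintype J]
    (m : ℕ) (hm : 1 ≤ m) (p : J → ℝ) (hp : ∀ j, 1 ≤ p j) (r : J → R)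
    (s : J → ℝ) (M : J → Fin m) (hfeas : Feasible m p r s M) :
    ∃ (s' : J → ℝ) (M' : J → Fin m),
      Feasible m (fun _ => (1 : ℝ)) r s' M' ∧
      ∀ j, s' j + 1 = s j + p j := by
  obtain ⟨hnn, hdisj⟩ := hfeas
  refine ⟨fun j => s j + p j - 1, M, ⟨?_, ?_⟩, fun j => by ring⟩
  · intro j
    have h1 := hnn j
    have h2 := hp j
    show (0:ℝ) ≤ s j + p j - 1
    linarith
  · intro j j' hne hc
    have key := hdisj j j' hne hc
    have hsub : ∀ k, Set.Ico (s k + p k - 1) (s k + p k - 1 + 1) ⊆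
        Set.Ico (s k) (s k + p k) := by
      intro k
      apply Set.Ico_subset_Ico
      · have := hp k; linarith
      · linarith
    exact key.mono (hsub j) (hsub j')
end

section
/- Consider an instance of P|partition|ΣC_j in which 1 ≤ p_j ≤ c for every job j, where c ≥ 1. Let S₁ be a feasible schedule for the modified instance in which every processing time is replaced by 1, such that every start time in S₁ is a nonnegative integer. Then the schedule for the original instance that assigns each job j the start time c·s_j on the same machine as in S₁ is feasible, and its total completion time is at most c times the total completion time of S₁. -/
/-- The Shrinking algorithm: if `1 ≤ p j ≤ c` for all jobs, and `(s₁, M)` is a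
feasible schedule of the unit-processing-time instance whose start times are
all nonnegative integers, then stretching the start times by the factor `c`
(keeping the machine assignment) yields a feasible schedule of the original
instance whose total completion time is at most `c` times the total completion
time of `(s₁, M)`. -/
theorem shrinking_algorithm {J R : Type} [Fintype J]
    (m : ℕ) (hm : 1 ≤ m) (c : ℝ) (hc : 1 ≤ c)
    (p : J → ℝ) (hp : ∀ j, 1 ≤ p j ∧ p j ≤ c) (r : J → R)
    (s₁ : J → ℝ) (M : J → Fin m)
    (hfeas : Feasible m (fun _ => (1 : ℝ)) r s₁ M)
    (hint : ∀ j, ∃ n : ℕ, s₁ j = n) :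
    Feasible m p r (fun j => c * s₁ j) M ∧
    ∑ j, (c * s₁ j + p j) ≤ c * ∑ j, (s₁ j + 1) := by
  obtain ⟨hnn, hdisj⟩ := hfeas
  have hc0 : (0:ℝ) ≤ c := le_trans zero_le_one hc
  constructor
  · constructor
    · intro j; exact mul_nonneg hc0 (hnn j)
    · intro j j' hne hconf
      have h1 := hdisj j j' hne hconf
      rw [Set.Ico_disjoint_Ico] at h1 ⊢
      obtain ⟨n, hn⟩ := hint j
      obtain ⟨n', hn'⟩ := hint j'
      -- from h1: min (s₁ j + 1) (s₁ j' + 1) ≤ max (s₁ j) (s₁ j')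
      have key : s₁ j + 1 ≤ s₁ j' ∨ s₁ j' + 1 ≤ s₁ j := by
        rcases le_total n n' with h | h
        · left
          rcases eq_or_lt_of_le h with h | h
          · exfalso
            rw [hn, hn', h] at h1
            simp at h1; linarith
          · rw [hn, hn']
            have : (n:ℝ) + 1 ≤ n' := by exact_mod_cast h
            linarith
        · rcases eq_or_lt_of_le h with h | h
          · exfalso
            rw [hn, hn', h] at h1
            simp at h1; linarith
          · right
            rw [hn, hn']
            have : (n':ℝ) + 1 ≤ n := by exact_mod_cast h
            linarith
      rcases key with h | h
      · have : c * s₁ j + p j ≤ c * s₁ j' := by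
          have := (hp j).2
          nlinarith
        calc min (c * s₁ j + p j) (c * s₁ j' + p j') ≤ c * s₁ j + p j :=
              min_le_left _ _
          _ ≤ c * s₁ j' := this
          _ ≤ max (c * s₁ j) (c * s₁ j') := le_max_right _ _
      · have : c * s₁ j' + p j' ≤ c * s₁ j := by
          have := (hp j').2
          nlinarith
        calc min (c * s₁ j + p j) (c * s₁ j' + p j') ≤ c * s₁ j' + p j' :=
              min_le_right _ _
          _ ≤ c * s₁ j := this
          _ ≤ max (c * s₁ j) (c * s₁ j') := le_max_left _ _
  · rw [Finset.mul_sum]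
    apply Finset.sum_le_sum
    intro j _
    have := (hp j).2
    have := mul_add c (s₁ j) 1
    nlinarith
end

section
/- For every real number α < 4/3 there exist an instance of P|partition|ΣC_j, a feasible schedule G produced by the SPT-available rule, and a feasible schedule S such that the total completion time of G is strictly greater than α times the total completion time of S. In fact, for every even positive integer c and every ε > 0, the instance with 3 machines, 3c jobs of processing time 1 each having its own distinct resource, and 3c jobs of processing time 1+ε all sharing one common resource, admits an SPT-available schedule of total completion time 9c² + 3c + (9c²+3c)ε/2 and a feasible schedule of total completion time (27/4)c² + 3c + (9c²+3c)ε/2. Hence the SPT-available rule is not an α-approximation for any α < 4/3. -/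
/-- Machine `i` is busy at time `t`: some job assigned to `i` is being processed
at time `t`. -/
def Busy {J : Type} {m : ℕ} (p : J → ℝ) (s : J → ℝ) (M : J → Fin m)
    (i : Fin m) (t : ℝ) : Prop :=
  ∃ j, M j = i ∧ s j ≤ t ∧ t < s j + p j

/-- Resource `ρ` is in use at time `t`: some job with resource `ρ` is being
processed at time `t`. -/
def ResInUse {J R : Type} (p : J → ℝ) (r : J → R) (s : J → ℝ)
    (ρ : R) (t : ℝ) : Prop :=
  ∃ j, r j = ρ ∧ s j ≤ t ∧ t < s j + p j

/-- A schedule produced by the SPT-available rule with respect to the (SPT)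
linear order on `J`: the linear order is an SPT order; the schedule is feasible;
no job waits while some machine is free and its resource is unused (no
unnecessary idleness); whenever a larger job starts strictly before a smaller
one, the smaller job's resource was in use at that moment (the rule always picks
the smallest available job); and a job whose resource was in use on some machine
up to its start time is placed on that machine. -/
def SPTAvailable {J R : Type} [LinearOrder J] (m : ℕ) (p : J → ℝ) (r : J → R)
    (s : J → ℝ) (M : J → Fin m) : Prop :=
  (∀ j j' : J, j < j' → p j ≤ p j') ∧
  Feasible m p r s M ∧
  (∀ (j : J) (t : ℝ), 0 ≤ t → t < s j →
      (∀ i : Fin m, Busy p s M i t) ∨ ResInUse p r s (r j) t) ∧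
  (∀ j j' : J, j < j' → s j' < s j → ResInUse p r s (r j) (s j')) ∧
  (∀ j j' : J, j ≠ j' → r j = r j' → s j' + p j' = s j → M j = M j')

/-- Processing times for the lower-bound instance with parameter `c`: the first
`3c` jobs have processing time `1`, the remaining `3c` jobs have processing time
`1 + ε`. -/
noncomputable def p6 (c : ℕ) (ε : ℝ) : Fin (6 * c) → ℝ :=
  fun j => if (j : ℕ) < 3 * c then 1 else 1 + ε

/-- Resources for the lower-bound instance: each of the first `3c` jobs has its
own distinct resource, and the remaining `3c` jobs all share resource `3c`. -/
def r6 (c : ℕ) : Fin (6 * c) → ℕ := fun j => min (j : ℕ) (3 * c)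

open Finset

-- greedy schedule
noncomputable def sG (c : ℕ) (ε : ℝ) : Fin (6 * c) → ℝ :=
  fun j => if (j : ℕ) < 3 * c then (((j : ℕ) / 3 : ℕ) : ℝ)
    else (c : ℝ) + (((j : ℕ) - 3 * c : ℕ) : ℝ) * (1 + ε)

def MG (c : ℕ) : Fin (6 * c) → Fin 3 :=
  fun j => if (j : ℕ) < 3 * c then ⟨(j : ℕ) % 3, by omega⟩ else 0

lemma Ico_disj {a b a' b' : ℝ} (h : b ≤ a' ∨ b' ≤ a) :
    Disjoint (Set.Ico a b) (Set.Ico a' b') := by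
  rw [Set.disjoint_left]
  rintro x ⟨h1, h2⟩ ⟨h3, h4⟩
  rcases h with h | h <;> linarith

lemma r6_long {c : ℕ} {j j' : Fin (6 * c)} (hne : j ≠ j') (hr : r6 c j = r6 c j') :
    3 * c ≤ (j : ℕ) ∧ 3 * c ≤ (j' : ℕ) := by
  have hvne : (j : ℕ) ≠ (j' : ℕ) := fun h => hne (Fin.ext h)
  simp only [r6] at hr
  omega

lemma feasG (c : ℕ) (ε : ℝ) (hε : 0 < ε) :
    Feasible 3 (p6 c ε) (r6 c) (sG c ε) (MG c) := by
  have hε1 : (0:ℝ) ≤ 1 + ε := by linarith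
  constructor
  · intro j
    simp only [sG]
    split
    · exact Nat.cast_nonneg _
    · exact add_nonneg (Nat.cast_nonneg _) (mul_nonneg (Nat.cast_nonneg _) hε1)
  · intro j j' hne hor
    have hvne : (j : ℕ) ≠ (j' : ℕ) := fun h => hne (Fin.ext h)
    by_cases hj : (j : ℕ) < 3 * c <;> by_cases hj' : (j' : ℕ) < 3 * c
    · -- both short
      have hkey : (j : ℕ) / 3 ≠ (j' : ℕ) / 3 := by
        rcases hor with hM | hr
        · have : (j : ℕ) % 3 = (j' : ℕ) % 3 := by
            simpa [MG, hj, hj', Fin.ext_iff] using hM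
          omega
        · simp only [r6] at hr; omega
      simp only [sG, p6, if_pos hj, if_pos hj']
      apply Ico_disj
      rcases Nat.lt_or_ge ((j : ℕ) / 3) ((j' : ℕ) / 3) with h | h
      · left; exact_mod_cast Nat.succ_le_of_lt h
      · right
        have h' : (j' : ℕ) / 3 + 1 ≤ (j : ℕ) / 3 := by omega
        exact_mod_cast h'
    · -- j short, j' long
      simp only [sG, p6, if_pos hj, if_neg hj']
      apply Ico_disj; left
      have h1 : (j : ℕ) / 3 + 1 ≤ c := by omega
      have h2 : (((j : ℕ) / 3 : ℕ) : ℝ) + 1 ≤ c := by exact_mod_cast h1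
      have h3 : (0:ℝ) ≤ (((j' : ℕ) - 3 * c : ℕ) : ℝ) * (1 + ε) :=
        mul_nonneg (Nat.cast_nonneg _) hε1
      linarith
    · -- j long, j' short
      simp only [sG, p6, if_neg hj, if_pos hj']
      apply Ico_disj; right
      have h1 : (j' : ℕ) / 3 + 1 ≤ c := by omega
      have h2 : (((j' : ℕ) / 3 : ℕ) : ℝ) + 1 ≤ c := by exact_mod_cast h1
      have h3 : (0:ℝ) ≤ (((j : ℕ) - 3 * c : ℕ) : ℝ) * (1 + ε) :=
        mul_nonneg (Nat.cast_nonneg _) hε1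
      linarith
    · -- both long
      simp only [sG, p6, if_neg hj, if_neg hj']
      apply Ico_disj
      rcases Nat.lt_or_ge ((j : ℕ) - 3 * c) ((j' : ℕ) - 3 * c) with h | h
      · left
        have h' : (((j : ℕ) - 3 * c : ℕ) : ℝ) + 1 ≤ (((j' : ℕ) - 3 * c : ℕ) : ℝ) := by
          exact_mod_cast Nat.succ_le_of_lt h
        nlinarith
      · right
        have h' : (((j' : ℕ) - 3 * c : ℕ) : ℝ) + 1 ≤ (((j : ℕ) - 3 * c : ℕ) : ℝ) := by
          have : (j' : ℕ) - 3 * c + 1 ≤ (j : ℕ) - 3 * c := by omega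
          exact_mod_cast this
        nlinarith

lemma busyG {c : ℕ} (hc : 0 < c) {ε : ℝ} {t : ℝ} (ht : 0 ≤ t) (htc : t < c)
    (i : Fin 3) : Busy (p6 c ε) (sG c ε) (MG c) i t := by
  set k := ⌊t⌋₊ with hk
  have hk1 : (k : ℝ) ≤ t := Nat.floor_le ht
  have hk2 : t < k + 1 := Nat.lt_floor_add_one t
  have hkc : k < c := by
    by_contra h
    push_neg at h
    have : (c : ℝ) ≤ k := by exact_mod_cast h
    linarith
  have hi := i.isLt
  have hn : 3 * k + (i : ℕ) < 3 * c := by omega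
  refine ⟨⟨3 * k + (i : ℕ), by omega⟩, ?_, ?_, ?_⟩
  · simp only [MG]
    rw [if_pos hn]
    apply Fin.ext
    simp only []
    omega
  · simp only [sG]
    rw [if_pos hn]
    have hdiv : (3 * k + (i : ℕ)) / 3 = k := by omega
    simp only [hdiv]
    exact hk1
  · simp only [sG, p6]
    rw [if_pos hn, if_pos hn]
    have hdiv : (3 * k + (i : ℕ)) / 3 = k := by omega
    simp only [hdiv]
    linarith

lemma cond3G {c : ℕ} (hc : 0 < c) {ε : ℝ} (hε : 0 < ε) :
    ∀ (j : Fin (6 * c)) (t : ℝ), 0 ≤ t → t < sG c ε j →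
      (∀ i : Fin 3, Busy (p6 c ε) (sG c ε) (MG c) i t) ∨
        ResInUse (p6 c ε) (r6 c) (sG c ε) (r6 c j) t := by
  intro j t ht hts
  have hε1 : (0:ℝ) < 1 + ε := by linarith
  rcases lt_or_ge t (c : ℝ) with hc' | hc'
  · exact Or.inl fun i => busyG hc ht hc' i
  · right
    have hj : ¬ ((j : ℕ) < 3 * c) := by
      intro h
      have h1 : (j : ℕ) / 3 < c := by omega
      have h2 : (((j : ℕ) / 3 : ℕ) : ℝ) < c := by exact_mod_cast h1
      simp only [sG, if_pos h] at hts
      linarith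
    have hrj : r6 c j = 3 * c := by simp only [r6]; omega
    rw [hrj]
    have hu : (0:ℝ) ≤ t - c := by linarith
    set b := ⌊(t - c) / (1 + ε)⌋₊ with hb
    have hb1 : (b : ℝ) ≤ (t - c) / (1 + ε) := Nat.floor_le (by positivity)
    have hb2 : (t - c) / (1 + ε) < b + 1 := Nat.lt_floor_add_one _
    have hsj : sG c ε j = c + (((j : ℕ) - 3 * c : ℕ) : ℝ) * (1 + ε) := by
      simp only [sG, if_neg hj]
    have hblt : b < (j : ℕ) - 3 * c := by
      have h3 : t - c < (((j : ℕ) - 3 * c : ℕ) : ℝ) * (1 + ε) := by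
        rw [hsj] at hts; linarith
      have h4 : (t - c) / (1 + ε) < (((j : ℕ) - 3 * c : ℕ) : ℝ) := by
        rw [div_lt_iff₀ hε1]; linarith
      have h5 : (b : ℝ) < (((j : ℕ) - 3 * c : ℕ) : ℝ) := lt_of_le_of_lt hb1 h4
      exact_mod_cast h5
    have hjlt := j.isLt
    have hjb : 3 * c + b < 6 * c := by omega
    have hnotlt : ¬ (3 * c + b < 3 * c) := by omega
    have hbmul : (b : ℝ) * (1 + ε) ≤ t - c := (le_div_iff₀ hε1).mp hb1
    have hbmul2 : t - c < ((b : ℝ) + 1) * (1 + ε) := (div_lt_iff₀ hε1).mp hb2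
    refine ⟨⟨3 * c + b, hjb⟩, ?_, ?_, ?_⟩
    · simp only [r6]; omega
    · simp only [sG]
      rw [if_neg hnotlt]
      have hsub : 3 * c + b - 3 * c = b := by omega
      rw [hsub]
      linarith
    · simp only [sG, p6]
      rw [if_neg hnotlt, if_neg hnotlt]
      have hsub : 3 * c + b - 3 * c = b := by omega
      rw [hsub]
      nlinarith

lemma sG_mono {c : ℕ} {ε : ℝ} (hε : 0 < ε) (j j' : Fin (6 * c))
    (h : (j : ℕ) ≤ (j' : ℕ)) : sG c ε j ≤ sG c ε j' := by
  have hε1 : (0:ℝ) ≤ 1 + ε := by linarith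
  by_cases hj : (j : ℕ) < 3 * c <;> by_cases hj' : (j' : ℕ) < 3 * c
  · simp only [sG, if_pos hj, if_pos hj']
    exact_mod_cast Nat.div_le_div_right h
  · simp only [sG, if_pos hj, if_neg hj']
    have h1 : (j : ℕ) / 3 ≤ c := by omega
    have h2 : (((j : ℕ) / 3 : ℕ) : ℝ) ≤ c := by exact_mod_cast h1
    have h3 : (0:ℝ) ≤ (((j' : ℕ) - 3 * c : ℕ) : ℝ) * (1 + ε) :=
      mul_nonneg (Nat.cast_nonneg _) hε1
    linarith
  · omega
  · simp only [sG, if_neg hj, if_neg hj']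
    have h1 : (((j : ℕ) - 3 * c : ℕ) : ℝ) ≤ (((j' : ℕ) - 3 * c : ℕ) : ℝ) := by
      have : (j : ℕ) - 3 * c ≤ (j' : ℕ) - 3 * c := by omega
      exact_mod_cast this
    nlinarith

lemma sptG {c : ℕ} (hc : 0 < c) {ε : ℝ} (hε : 0 < ε) :
    SPTAvailable 3 (p6 c ε) (r6 c) (sG c ε) (MG c) := by
  refine ⟨?_, feasG c ε hε, cond3G hc hε, ?_, ?_⟩
  · intro j j' hlt
    have h : (j : ℕ) < (j' : ℕ) := hlt
    simp only [p6]
    split_ifs with h1 h2 h2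
    · exact le_refl _
    · linarith
    · omega
    · exact le_refl _
  · intro j j' hlt hs
    have h : (j : ℕ) ≤ (j' : ℕ) := le_of_lt hlt
    exact absurd hs (not_lt.2 (sG_mono hε j j' h))
  · intro j j' hne hr _
    obtain ⟨h1, h2⟩ := r6_long hne hr
    simp only [MG, if_neg (by omega : ¬ ((j:ℕ) < 3*c)), if_neg (by omega : ¬ ((j':ℕ) < 3*c))]
open Finset

lemma gauss (n : ℕ) : ∑ i ∈ range n, (i : ℝ) = n * (n - 1) / 2 := by
  induction n with
  | zero => simp
  | succ n ih => rw [sum_range_succ, ih]; push_cast; ring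

lemma sum_div3 (n : ℕ) : ∑ i ∈ range (3 * n), ((i / 3 : ℕ) : ℝ) = 3 * n * (n - 1) / 2 := by
  induction n with
  | zero => simp
  | succ n ih =>
    have h : 3 * (n + 1) = 3 * n + 1 + 1 + 1 := by ring
    rw [h, sum_range_succ, sum_range_succ, sum_range_succ, ih]
    have e1 : (3 * n) / 3 = n := by omega
    have e2 : (3 * n + 1) / 3 = n := by omega
    have e3 : (3 * n + 1 + 1) / 3 = n := by omega
    rw [e1, e2, e3]; push_cast; ring

lemma sum_div2 (n : ℕ) : ∑ i ∈ range (2 * n), ((i / 2 : ℕ) : ℝ) = n * (n - 1) := by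
  induction n with
  | zero => simp
  | succ n ih =>
    have h : 2 * (n + 1) = 2 * n + 1 + 1 := by ring
    rw [h, sum_range_succ, sum_range_succ, ih]
    have e1 : (2 * n) / 2 = n := by omega
    have e2 : (2 * n + 1) / 2 = n := by omega
    rw [e1, e2]; push_cast; ring

lemma sumG (c : ℕ) (ε : ℝ) :
    ∑ j : Fin (6 * c), (sG c ε j + p6 c ε j) =
      9 * (c : ℝ) ^ 2 + 3 * c + (9 * (c : ℝ) ^ 2 + 3 * c) * ε / 2 := by
  have h0 : ∀ j : Fin (6 * c), sG c ε j + p6 c ε j =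
      (fun n : ℕ => (if n < 3 * c then ((n / 3 : ℕ) : ℝ)
          else (c : ℝ) + ((n - 3 * c : ℕ) : ℝ) * (1 + ε)) +
        (if n < 3 * c then (1:ℝ) else 1 + ε)) (j : ℕ) := fun j => rfl
  rw [Finset.sum_congr rfl fun j _ => h0 j]
  rw [Fin.sum_univ_eq_sum_range (fun n : ℕ => (if n < 3 * c then ((n / 3 : ℕ) : ℝ)
          else (c : ℝ) + ((n - 3 * c : ℕ) : ℝ) * (1 + ε)) +
        (if n < 3 * c then (1:ℝ) else 1 + ε)) (6 * c)]
  rw [range_eq_Ico, ← Finset.sum_Ico_consecutive _ (Nat.zero_le (3 * c)) (by omega : 3 * c ≤ 6 * c)]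
  rw [Finset.sum_Ico_eq_sum_range, Finset.sum_Ico_eq_sum_range]
  simp only [Nat.sub_zero, Nat.zero_add]
  have h1 : 6 * c - 3 * c = 3 * c := by omega
  rw [h1]
  have e1 : ∀ i ∈ range (3 * c),
      ((if i < 3 * c then ((i / 3 : ℕ) : ℝ)
          else (c : ℝ) + ((i - 3 * c : ℕ) : ℝ) * (1 + ε)) +
        (if i < 3 * c then (1:ℝ) else 1 + ε)) = ((i / 3 : ℕ) : ℝ) + 1 := by
    intro i hi
    rw [if_pos (mem_range.mp hi), if_pos (mem_range.mp hi)]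
  have e2 : ∀ i ∈ range (3 * c),
      ((if 3 * c + i < 3 * c then (((3 * c + i) / 3 : ℕ) : ℝ)
          else (c : ℝ) + ((3 * c + i - 3 * c : ℕ) : ℝ) * (1 + ε)) +
        (if 3 * c + i < 3 * c then (1:ℝ) else 1 + ε)) =
        (c : ℝ) + (i : ℝ) * (1 + ε) + (1 + ε) := by
    intro i hi
    rw [if_neg (by omega), if_neg (by omega)]
    have : 3 * c + i - 3 * c = i := by omega
    rw [this]
  rw [Finset.sum_congr rfl e1, Finset.sum_congr rfl e2]
  rw [Finset.sum_add_distrib, Finset.sum_add_distrib, Finset.sum_add_distrib]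
  rw [sum_div3 c]
  have e3 : ∑ i ∈ range (3 * c), (i : ℝ) * (1 + ε) =
      (∑ i ∈ range (3 * c), (i : ℝ)) * (1 + ε) := by
    rw [← Finset.sum_mul]
  rw [e3, gauss (3 * c)]
  simp only [Finset.sum_const, card_range, nsmul_eq_mul]
  push_cast
  ring

noncomputable def sS (c : ℕ) (ε : ℝ) : Fin (6 * c) → ℝ :=
  fun j => if (j : ℕ) < 3 * c then (((j : ℕ) / 2 : ℕ) : ℝ)
    else (((j : ℕ) - 3 * c : ℕ) : ℝ) * (1 + ε)

def MS (c : ℕ) : Fin (6 * c) → Fin 3 :=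
  fun j => if (j : ℕ) < 3 * c then ⟨1 + (j : ℕ) % 2, by omega⟩ else 0

lemma feasS (c : ℕ) (ε : ℝ) (hε : 0 < ε) :
    Feasible 3 (p6 c ε) (r6 c) (sS c ε) (MS c) := by
  have hε1 : (0:ℝ) ≤ 1 + ε := by linarith
  constructor
  · intro j
    simp only [sS]
    split
    · exact Nat.cast_nonneg _
    · exact mul_nonneg (Nat.cast_nonneg _) hε1
  · intro j j' hne hor
    have hvne : (j : ℕ) ≠ (j' : ℕ) := fun h => hne (Fin.ext h)
    by_cases hj : (j : ℕ) < 3 * c <;> by_cases hj' : (j' : ℕ) < 3 * c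
    · -- both short
      have hkey : (j : ℕ) / 2 ≠ (j' : ℕ) / 2 := by
        rcases hor with hM | hr
        · have : 1 + (j : ℕ) % 2 = 1 + (j' : ℕ) % 2 := by
            simpa [MS, hj, hj', Fin.ext_iff] using hM
          omega
        · simp only [r6] at hr; omega
      simp only [sS, p6, if_pos hj, if_pos hj']
      apply Ico_disj
      rcases Nat.lt_or_ge ((j : ℕ) / 2) ((j' : ℕ) / 2) with h | h
      · left; exact_mod_cast Nat.succ_le_of_lt h
      · right
        have h' : (j' : ℕ) / 2 + 1 ≤ (j : ℕ) / 2 := by omega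
        exact_mod_cast h'
    · -- j short, j' long: impossible conflict
      exfalso
      rcases hor with hM | hr
      · have : 1 + (j : ℕ) % 2 = 0 := by
          simpa [MS, hj, hj', Fin.ext_iff] using hM
        omega
      · simp only [r6] at hr; omega
    · exfalso
      rcases hor with hM | hr
      · have : 1 + (j' : ℕ) % 2 = 0 := by
          simpa [MS, hj, hj', Fin.ext_iff] using hM.symm
        omega
      · simp only [r6] at hr; omega
    · -- both long
      simp only [sS, p6, if_neg hj, if_neg hj']
      apply Ico_disj
      rcases Nat.lt_or_ge ((j : ℕ) - 3 * c) ((j' : ℕ) - 3 * c) with h | h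
      · left
        have h' : (((j : ℕ) - 3 * c : ℕ) : ℝ) + 1 ≤ (((j' : ℕ) - 3 * c : ℕ) : ℝ) := by
          exact_mod_cast Nat.succ_le_of_lt h
        nlinarith
      · right
        have h' : (((j' : ℕ) - 3 * c : ℕ) : ℝ) + 1 ≤ (((j : ℕ) - 3 * c : ℕ) : ℝ) := by
          have : (j' : ℕ) - 3 * c + 1 ≤ (j : ℕ) - 3 * c := by omega
          exact_mod_cast this
        nlinarith

lemma sumS (c : ℕ) (hce : Even c) (ε : ℝ) :
    ∑ j : Fin (6 * c), (sS c ε j + p6 c ε j) =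
      27 / 4 * (c : ℝ) ^ 2 + 3 * c + (9 * (c : ℝ) ^ 2 + 3 * c) * ε / 2 := by
  obtain ⟨d, hd⟩ := hce
  have h0 : ∀ j : Fin (6 * c), sS c ε j + p6 c ε j =
      (fun n : ℕ => (if n < 3 * c then ((n / 2 : ℕ) : ℝ)
          else ((n - 3 * c : ℕ) : ℝ) * (1 + ε)) +
        (if n < 3 * c then (1:ℝ) else 1 + ε)) (j : ℕ) := fun j => rfl
  rw [Finset.sum_congr rfl fun j _ => h0 j]
  rw [Fin.sum_univ_eq_sum_range (fun n : ℕ => (if n < 3 * c then ((n / 2 : ℕ) : ℝ)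
          else ((n - 3 * c : ℕ) : ℝ) * (1 + ε)) +
        (if n < 3 * c then (1:ℝ) else 1 + ε)) (6 * c)]
  rw [range_eq_Ico, ← Finset.sum_Ico_consecutive _ (Nat.zero_le (3 * c)) (by omega : 3 * c ≤ 6 * c)]
  rw [Finset.sum_Ico_eq_sum_range, Finset.sum_Ico_eq_sum_range]
  simp only [Nat.sub_zero, Nat.zero_add]
  have h1 : 6 * c - 3 * c = 3 * c := by omega
  rw [h1]
  have e1 : ∀ i ∈ range (3 * c),
      ((if i < 3 * c then ((i / 2 : ℕ) : ℝ)
          else ((i - 3 * c : ℕ) : ℝ) * (1 + ε)) +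
        (if i < 3 * c then (1:ℝ) else 1 + ε)) = ((i / 2 : ℕ) : ℝ) + 1 := by
    intro i hi
    rw [if_pos (mem_range.mp hi), if_pos (mem_range.mp hi)]
  have e2 : ∀ i ∈ range (3 * c),
      ((if 3 * c + i < 3 * c then (((3 * c + i) / 2 : ℕ) : ℝ)
          else ((3 * c + i - 3 * c : ℕ) : ℝ) * (1 + ε)) +
        (if 3 * c + i < 3 * c then (1:ℝ) else 1 + ε)) =
        (i : ℝ) * (1 + ε) + (1 + ε) := by
    intro i hi
    rw [if_neg (by omega), if_neg (by omega)]
    have : 3 * c + i - 3 * c = i := by omega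
    rw [this]
  rw [Finset.sum_congr rfl e1, Finset.sum_congr rfl e2]
  rw [Finset.sum_add_distrib, Finset.sum_add_distrib]
  have h2 : 3 * c = 2 * (3 * d) := by omega
  rw [h2, sum_div2 (3 * d)]
  have e3 : ∑ i ∈ range (2 * (3 * d)), (i : ℝ) * (1 + ε) =
      (∑ i ∈ range (2 * (3 * d)), (i : ℝ)) * (1 + ε) := by
    rw [← Finset.sum_mul]
  rw [e3, gauss (2 * (3 * d))]
  simp only [Finset.sum_const, card_range, nsmul_eq_mul]
  have hdc : (c : ℝ) = 2 * d := by
    have : (c : ℝ) = ((d + d : ℕ) : ℝ) := by exact_mod_cast congrArg (Nat.cast (R := ℝ)) hd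
    rw [this]; push_cast; ring
  rw [hdc]
  push_cast
  ring

/-- Lower bound for the SPT-available rule.  For every even positive integer `c`
and every `ε > 0`, the instance with `3` machines, `3c` unit jobs each with its
own resource and `3c` jobs of length `1 + ε` sharing one resource admits an
SPT-available schedule of total completion time `9c² + 3c + (9c² + 3c)ε/2` and a
feasible schedule of total completion time `(27/4)c² + 3c + (9c² + 3c)ε/2`.
Consequently, for every `α < 4/3` there are an instance, an SPT-available
schedule `G` and a feasible schedule `S` with `ΣC(G) > α · ΣC(S)`: the
SPT-available rule is not an `α`-approximation for any `α < 4/3`. -/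
theorem spt_available_no_better_than_four_thirds :
    (∀ c : ℕ, 0 < c → Even c → ∀ ε : ℝ, 0 < ε →
      (∃ (s : Fin (6 * c) → ℝ) (M : Fin (6 * c) → Fin 3),
        SPTAvailable 3 (p6 c ε) (r6 c) s M ∧
        ∑ j, (s j + p6 c ε j) =
          9 * (c : ℝ) ^ 2 + 3 * c + (9 * (c : ℝ) ^ 2 + 3 * c) * ε / 2) ∧
      (∃ (s' : Fin (6 * c) → ℝ) (M' : Fin (6 * c) → Fin 3),
        Feasible 3 (p6 c ε) (r6 c) s' M' ∧
        ∑ j, (s' j + p6 c ε j) =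
          27 / 4 * (c : ℝ) ^ 2 + 3 * c + (9 * (c : ℝ) ^ 2 + 3 * c) * ε / 2)) ∧
    (∀ α : ℝ, α < 4 / 3 →
      ∃ (c : ℕ), 0 < c ∧ Even c ∧ ∃ ε : ℝ, 0 < ε ∧
        ∃ (s : Fin (6 * c) → ℝ) (M : Fin (6 * c) → Fin 3)
          (s' : Fin (6 * c) → ℝ) (M' : Fin (6 * c) → Fin 3),
          SPTAvailable 3 (p6 c ε) (r6 c) s M ∧
          Feasible 3 (p6 c ε) (r6 c) s' M' ∧
          ∑ j, (s j + p6 c ε j) > α * ∑ j, (s' j + p6 c ε j)) := by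

  have main : ∀ c : ℕ, 0 < c → Even c → ∀ ε : ℝ, 0 < ε →
      (∃ (s : Fin (6 * c) → ℝ) (M : Fin (6 * c) → Fin 3),
        SPTAvailable 3 (p6 c ε) (r6 c) s M ∧
        ∑ j, (s j + p6 c ε j) =
          9 * (c : ℝ) ^ 2 + 3 * c + (9 * (c : ℝ) ^ 2 + 3 * c) * ε / 2) ∧
      (∃ (s' : Fin (6 * c) → ℝ) (M' : Fin (6 * c) → Fin 3),
        Feasible 3 (p6 c ε) (r6 c) s' M' ∧
        ∑ j, (s' j + p6 c ε j) =
          27 / 4 * (c : ℝ) ^ 2 + 3 * c + (9 * (c : ℝ) ^ 2 + 3 * c) * ε / 2) := by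
    intro c hc hce ε hε
    exact ⟨⟨sG c ε, MG c, sptG hc hε, sumG c ε⟩,
           ⟨sS c ε, MS c, feasS c ε hε, sumS c hce ε⟩⟩
  refine ⟨main, ?_⟩
  intro α hα
  obtain ⟨δ, hδ⟩ : ∃ δ : ℝ, δ = 4 / 3 - α := ⟨_, rfl⟩
  have hδpos : 0 < δ := by rw [hδ]; linarith
  obtain ⟨n, hn1, hn2⟩ : ∃ n : ℕ, 1 / δ ≤ (n : ℝ) ∧ 1 ≤ n := by
    refine ⟨⌈1 / δ⌉₊ + 1, ?_, by omega⟩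
    push_cast
    have := Nat.le_ceil (1 / δ)
    linarith
  obtain ⟨c, hcdef⟩ : ∃ c : ℕ, c = 2 * n := ⟨_, rfl⟩
  have hc : 0 < c := by omega
  have hce : Even c := ⟨n, by omega⟩
  have hcR2 : (c : ℝ) = 2 * n := by rw [hcdef]; push_cast; ring
  have hcR : (2 : ℝ) ≤ c := by
    rw [hcR2]
    have : (1 : ℝ) ≤ n := by exact_mod_cast hn2
    linarith
  have hcpos : (0 : ℝ) < c := by linarith
  have hdc : 2 ≤ δ * c := by
    rw [hcR2]
    have h1 : 1 ≤ δ * n := by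
      rw [div_le_iff₀ hδpos] at hn1
      linarith [mul_comm δ (n : ℝ)]
    nlinarith
  obtain ⟨ε, hεdef⟩ : ∃ ε : ℝ, ε = 1 / (c : ℝ) ^ 2 := ⟨_, rfl⟩
  have hε : 0 < ε := by rw [hεdef]; positivity
  obtain ⟨⟨s, M, hspt, hsum⟩, ⟨s', M', hfeas, hsum'⟩⟩ := main c hc hce ε hε
  refine ⟨c, hc, hce, ε, hε, s, M, s', M', hspt, hfeas, ?_⟩
  rw [hsum, hsum']
  obtain ⟨E, hE⟩ : ∃ E : ℝ, E = (9 * (c : ℝ) ^ 2 + 3 * c) * ε / 2 := ⟨_, rfl⟩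
  rw [← hE]
  have hpos : (0 : ℝ) < 9 * (c : ℝ) ^ 2 + 3 * c := by nlinarith
  have hE1 : 0 < E := by
    rw [hE]
    exact div_pos (mul_pos hpos hε) two_pos
  have hEval : E = 9 / 2 + 3 / (2 * c) := by
    rw [hE, hεdef]
    field_simp
  have hE2 : E ≤ 21 / 4 := by
    rw [hEval]
    have h1 : 3 / (2 * (c : ℝ)) ≤ 3 / 4 := by
      rw [div_le_div_iff₀ (by linarith) (by norm_num)]
      linarith
    linarith
  have key : 9 * (c : ℝ) ^ 2 + 3 * c + E - α * (27 / 4 * (c : ℝ) ^ 2 + 3 * c + E)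
      = δ * (27 / 4 * (c : ℝ) ^ 2 + 3 * c + E) - c - E / 3 := by
    rw [hδ]; ring
  have h6 : (c : ℝ) + 2 ≤ δ * (c : ℝ) ^ 2 := by nlinarith
  have hq : 0 ≤ δ * (3 * (c : ℝ) + E) := mul_nonneg hδpos.le (by linarith)
  have h7 : 27 / 4 * ((c : ℝ) + 2) ≤ δ * (27 / 4 * (c : ℝ) ^ 2 + 3 * c + E) := by
    nlinarith [hq, h6]
  have h8 : (c : ℝ) + E / 3 < 27 / 4 * ((c : ℝ) + 2) := by linarith
  linarith
end

section
/- Consider a finite set J of jobs with processing times p_j > 0, resources r_j, and m ≥ 1 machines. (a) Every feasible schedule of the m-machine instance respecting the resource (partition) constraints is also a feasible schedule when the resource constraints are dropped. (b) For every schedule of the jobs on m machines that is feasible when the resource constraints are dropped (i.e., only the processing intervals of jobs on the same machine must be disjoint), there exists a feasible single-machine schedule of all the jobs whose total completion time is at most m times the total completion time of the given schedule. Together these give (1/m)·OPT¹ ≤ OPT^m ≤ OPT^m_res, where OPT¹ is the optimal single-machine total completion time, OPT^m the optimal m-machine total completion time without resource constraints, and OPT^m_res the optimal m-machine total completion time with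 the partition constraints. -/
/-- A schedule `(s, M)` is feasible when the resource constraints are dropped:
start times are nonnegative and the processing intervals of any two distinct
jobs assigned to the same machine are disjoint. -/
def FeasibleNoRes {J : Type} (m : ℕ) (p : J → ℝ)
    (s : J → ℝ) (M : J → Fin m) : Prop :=
  (∀ j, 0 ≤ s j) ∧
  ∀ j j' : J, j ≠ j' → M j = M j' →
    Disjoint (Set.Ico (s j) (s j + p j)) (Set.Ico (s j') (s j' + p j'))

/-- (a) Every feasible schedule of the `m`-machine instance with the partition
(resource) constraints is also feasible without them; (b) for every `m`-machine
schedule that is feasible without resource constraints there is a feasible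
single-machine schedule of all jobs with total completion time at most `m`
times as large.  Together these give `(1/m)·OPT¹ ≤ OPT^m ≤ OPT^m_res`. -/
theorem opt_one_machine_vs_m_machines {J R : Type} [Fintype J]
    (m : ℕ) (hm : 1 ≤ m) (p : J → ℝ) (hp : ∀ j, 0 < p j) (r : J → R) :
    (∀ (s : J → ℝ) (M : J → Fin m), Feasible m p r s M → FeasibleNoRes m p s M) ∧
    (∀ (s : J → ℝ) (M : J → Fin m), FeasibleNoRes m p s M →
      ∃ (s₁ : J → ℝ) (M₁ : J → Fin 1), FeasibleNoRes 1 p s₁ M₁ ∧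
        ∑ j, (s₁ j + p j) ≤ (m : ℝ) * ∑ j, (s j + p j)) := by
  constructor
  · intro s M h
    unfold Feasible at h
    unfold FeasibleNoRes
    exact ⟨h.1, fun j j' hne hM => h.2 j j' hne (Or.inl hM)⟩
  · intro s M hfeas
    unfold FeasibleNoRes at hfeas ⊢
    obtain ⟨hs0, hdisj⟩ := hfeas
    classical
    set C : J → ℝ := fun j => s j + p j with hC
    let e := Fintype.equivFin J
    let lt : J → J → Prop := fun i j => C i < C j ∨ (C i = C j ∧ e i < e j)
    have lt_trans : ∀ {a b c}, lt a b → lt b c → lt a c := by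
      rintro a b c (h1 | ⟨h1, h1'⟩) (h2 | ⟨h2, h2'⟩)
      · exact Or.inl (h1.trans h2)
      · exact Or.inl (h2 ▸ h1)
      · exact Or.inl (h1 ▸ h2)
      · exact Or.inr ⟨h1.trans h2, h1'.trans h2'⟩
    have lt_irrefl : ∀ a, ¬ lt a a := by
      rintro a (h | ⟨_, h⟩) <;> exact lt_irrefl _ h
    have lt_trich : ∀ {a b : J}, a ≠ b → lt a b ∨ lt b a := by
      intro a b hab
      rcases lt_trichotomy (C a) (C b) with h | h | h
      · exact Or.inl (Or.inl h)
      · rcases lt_or_gt_of_ne (fun h' => hab (e.injective (Fin.ext (by exact_mod_cast h')))) with h' | h'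
        · exact Or.inl (Or.inr ⟨h, h'⟩)
        · exact Or.inr (Or.inr ⟨h.symm, h'⟩)
      · exact Or.inr (Or.inl h)
    have lt_le : ∀ {a b}, lt a b → C a ≤ C b := by
      rintro a b (h | ⟨h, _⟩); exacts [h.le, h.le]
    let pred : J → Finset J := fun j => Finset.univ.filter (fun i => lt i j)
    let s₁ : J → ℝ := fun j => ∑ i ∈ pred j, p i
    have hnotmem : ∀ j, j ∉ pred j := by
      intro j h
      exact lt_irrefl j (Finset.mem_filter.mp h).2
    have hinsert : ∀ j, insert j (pred j) = Finset.univ.filter (fun i => lt i j ∨ i = j) := by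
      intro j
      ext i
      simp only [Finset.mem_insert, Finset.mem_filter, Finset.mem_univ, true_and, pred]
      tauto
    have hmono : ∀ {j j'}, lt j j' → s₁ j + p j ≤ s₁ j' := by
      intro j j' h
      have hsub : insert j (pred j) ⊆ pred j' := by
        intro i hi
        rcases Finset.mem_insert.mp hi with rfl | hi
        · exact Finset.mem_filter.mpr ⟨Finset.mem_univ _, h⟩
        · exact Finset.mem_filter.mpr ⟨Finset.mem_univ _,
            lt_trans (Finset.mem_filter.mp hi).2 h⟩
      calc s₁ j + p j = ∑ i ∈ insert j (pred j), p i := by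
            rw [Finset.sum_insert (hnotmem j)]; ring
        _ ≤ s₁ j' := Finset.sum_le_sum_of_subset_of_nonneg hsub
            (fun i _ _ => (hp i).le)
    refine ⟨s₁, fun _ => 0, ⟨fun j => Finset.sum_nonneg fun i _ => (hp i).le, ?_⟩, ?_⟩
    · intro j j' hne _
      rcases lt_trich hne with h | h
      · refine Set.Ico_disjoint_Ico.mpr ?_
        have := hmono h
        simp only [min_le_iff, le_max_iff]
        tauto
      · refine (Set.Ico_disjoint_Ico.mpr ?_).symm
        have := hmono h
        simp only [min_le_iff, le_max_iff]
        tauto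
    · -- key bound
      have key : ∀ j (k : Fin m),
          ∑ i ∈ Finset.univ.filter (fun i => (lt i j ∨ i = j) ∧ M i = k), p i ≤ C j := by
        intro j k
        set F := Finset.univ.filter (fun i => (lt i j ∨ i = j) ∧ M i = k) with hF
        have hCle : ∀ i ∈ F, C i ≤ C j := by
          intro i hi
          rcases (Finset.mem_filter.mp hi).2.1 with h | rfl
          · exact lt_le h
          · exact le_refl _
        have hCj0 : 0 ≤ C j := add_nonneg (hs0 j) (hp j).le
        have hpd : (F : Set J).PairwiseDisjoint (fun i => Set.Ico (s i) (s i + p i)) := by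
          intro a ha b hb hab
          exact hdisj a b hab ((Finset.mem_filter.mp ha).2.2.trans (Finset.mem_filter.mp hb).2.2.symm)
        have hmeas := MeasureTheory.measure_biUnion_finset hpd
          (fun i _ => measurableSet_Ico) (μ := MeasureTheory.volume)
        have hsub : (⋃ i ∈ F, Set.Ico (s i) (s i + p i)) ⊆ Set.Icc 0 (C j) := by
          intro x hx
          simp only [Set.mem_iUnion] at hx
          obtain ⟨i, hi, hx⟩ := hx
          exact ⟨(hs0 i).trans hx.1, hx.2.le.trans (hCle i hi)⟩
        have hle : ∑ i ∈ F, MeasureTheory.volume (Set.Ico (s i) (s i + p i)) ≤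
            MeasureTheory.volume (Set.Icc (0:ℝ) (C j)) := by
          rw [← hmeas]
          exact MeasureTheory.measure_mono hsub
        rw [Real.volume_Icc] at hle
        have hvol : ∀ i, MeasureTheory.volume (Set.Ico (s i) (s i + p i)) =
            ENNReal.ofReal (p i) := by
          intro i; rw [Real.volume_Ico]; ring_nf
        simp only [hvol] at hle
        rw [← ENNReal.ofReal_sum_of_nonneg (fun i _ => (hp i).le)] at hle
        have := (ENNReal.ofReal_le_ofReal_iff (by linarith)).mp hle
        linarith
      have perjob : ∀ j, s₁ j + p j ≤ (m : ℝ) * C j := by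
        intro j
        have h1 : s₁ j + p j = ∑ i ∈ Finset.univ.filter (fun i => lt i j ∨ i = j), p i := by
          rw [← hinsert j, Finset.sum_insert (hnotmem j)]; ring
        have h2 : ∑ i ∈ Finset.univ.filter (fun i => lt i j ∨ i = j), p i =
            ∑ k : Fin m, ∑ i ∈ (Finset.univ.filter (fun i => lt i j ∨ i = j)).filter
              (fun i => M i = k), p i := by
          rw [Finset.sum_fiberwise]
        have h3 : ∀ k : Fin m, (Finset.univ.filter (fun i => lt i j ∨ i = j)).filter
              (fun i => M i = k) = Finset.univ.filter (fun i => (lt i j ∨ i = j) ∧ M i = k) := by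
          intro k; ext i; simp [Finset.mem_filter, and_assoc]
        calc s₁ j + p j = ∑ k : Fin m, ∑ i ∈ Finset.univ.filter
                (fun i => (lt i j ∨ i = j) ∧ M i = k), p i := by
              rw [h1, h2]; exact Finset.sum_congr rfl (fun k _ => by rw [h3 k])
          _ ≤ ∑ _k : Fin m, C j := Finset.sum_le_sum (fun k _ => key j k)
          _ = (m : ℝ) * C j := by simp [mul_comm]
      calc ∑ j, (s₁ j + p j) ≤ ∑ j, (m : ℝ) * C j := Finset.sum_le_sum (fun j _ => perjob j)
        _ = (m : ℝ) * ∑ j, (s j + p j) := by rw [← Finset.mul_sum]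
end

section
/- Fix an SPT order ≺ on the jobs of an instance of P|partition|ΣC_j and let k_j = p_j + Σ_{j' ≺ j, r_{j'} = r_j} p_{j'} be the minimum completion time of job j. Then in every feasible schedule, Σ_{j∈J} C_j ≥ Σ_{j∈J} k_j. -/
/-- Fixing an SPT order on the jobs, with
`k j = p j + ∑_{j' < j, r j' = r j} p j'` the minimum completion time of job
`j`, the total completion time of every feasible schedule is at least
`∑ j, k j`. -/
theorem sum_min_completion_le_total {J R : Type} [Fintype J] [LinearOrder J]
    [DecidableEq R] (m : ℕ) (hm : 1 ≤ m)
    (p : J → ℝ) (hp : ∀ j, 0 < p j)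
    (hSPT : ∀ j j' : J, j < j' → p j ≤ p j') (r : J → R)
    (s : J → ℝ) (M : J → Fin m) (hfeas : Feasible m p r s M) :
    ∑ j, (p j + ∑ j' ∈ Finset.univ.filter (fun j' => j' < j ∧ r j' = r j), p j')
      ≤ ∑ j, (s j + p j) := by
  classical
  obtain ⟨hs0, hdisj⟩ := hfeas
  -- two distinct jobs with the same resource have distinct start times
  have hsinj : ∀ a b : J, a ≠ b → r a = r b → s a ≠ s b := by
    intro a b hne hr heq
    have hd := Set.disjoint_iff.mp (hdisj a b hne (Or.inr hr))
    exact hd ⟨⟨le_refl _, by linarith [hp a]⟩, ⟨heq.ge, by linarith [hp b]⟩⟩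
  -- separation: earlier job (same resource) finishes before the later starts
  have hsep : ∀ a b : J, a ≠ b → r a = r b → s a < s b → s a + p a ≤ s b := by
    intro a b hne hr hlt
    by_contra hcon
    push_neg at hcon
    have hd := Set.disjoint_iff.mp (hdisj a b hne (Or.inr hr))
    exact hd ⟨⟨hlt.le, hcon⟩, ⟨le_refl _, by linarith [hp b]⟩⟩
  -- key: the total work of same-resource jobs starting before j fits before s j
  have key : ∀ n : ℕ, ∀ j : J,
      (Finset.univ.filter (fun j' => r j' = r j ∧ s j' < s j)).card ≤ n →
      ∑ j' ∈ Finset.univ.filter (fun j' => r j' = r j ∧ s j' < s j), p j' ≤ s j := by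
    intro n
    induction n with
    | zero =>
      intro j h
      have he : (Finset.univ.filter (fun j' => r j' = r j ∧ s j' < s j)) = ∅ :=
        Finset.card_eq_zero.mp (Nat.le_zero.mp h)
      rw [he, Finset.sum_empty]
      exact hs0 j
    | succ n ih =>
      intro j h
      rcases (Finset.univ.filter (fun j' => r j' = r j ∧ s j' < s j)).eq_empty_or_nonempty
        with he | hne
      · rw [he, Finset.sum_empty]; exact hs0 j
      · obtain ⟨b, hbT, hbmax⟩ :=
          (Finset.univ.filter (fun j' => r j' = r j ∧ s j' < s j)).exists_max_image s hne
        have hb := Finset.mem_filter.mp hbT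
        have hbr : r b = r j := hb.2.1
        have hbs : s b < s j := hb.2.2
        have hbj : b ≠ j := fun hh => absurd (hh ▸ hbs) (lt_irrefl _)
        have hTeq : Finset.univ.filter (fun j' => r j' = r j ∧ s j' < s j)
            = insert b (Finset.univ.filter (fun j' => r j' = r b ∧ s j' < s b)) := by
          ext a
          simp only [Finset.mem_insert, Finset.mem_filter, Finset.mem_univ, true_and]
          constructor
          · rintro ⟨har, has⟩
            by_cases hab : a = b
            · exact Or.inl hab
            · refine Or.inr ⟨har.trans hbr.symm, ?_⟩
              rcases lt_or_eq_of_le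
                (hbmax a (Finset.mem_filter.mpr ⟨Finset.mem_univ a, har, has⟩)) with h1 | h1
              · exact h1
              · exact absurd h1 (hsinj a b hab (har.trans hbr.symm))
          · rintro (rfl | ⟨har, has⟩)
            · exact ⟨hbr, hbs⟩
            · exact ⟨har.trans hbr, has.trans hbs⟩
        have hbnot : b ∉ Finset.univ.filter (fun j' => r j' = r b ∧ s j' < s b) := by
          simp
        have hcard : (Finset.univ.filter (fun j' => r j' = r b ∧ s j' < s b)).card ≤ n := by
          have hsub : Finset.univ.filter (fun j' => r j' = r b ∧ s j' < s b)
              ⊆ (Finset.univ.filter (fun j' => r j' = r j ∧ s j' < s j)).erase b := by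
            intro a ha
            have ha' := Finset.mem_filter.mp ha
            refine Finset.mem_erase.mpr ⟨?_, ?_⟩
            · intro hab
              exact absurd (hab ▸ ha'.2.2) (lt_irrefl _)
            · rw [hTeq]
              exact Finset.mem_insert_of_mem ha
          have h1 := Finset.card_le_card hsub
          rw [Finset.card_erase_of_mem hbT] at h1
          omega
        rw [hTeq, Finset.sum_insert hbnot]
        have h2 := ih b hcard
        have h3 := hsep b j hbj hbr hbs
        linarith
  have keysum : ∑ j, ∑ j' ∈ Finset.univ.filter (fun j' => r j' = r j ∧ s j' < s j), p j'
      ≤ ∑ j, s j :=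
    Finset.sum_le_sum (fun j _ => key _ j le_rfl)
  -- rewrite both double sums as sums over pairs
  have hA : ∑ j : J, ∑ j' ∈ Finset.univ.filter (fun j' => j' < j ∧ r j' = r j), p j'
      = ∑ q ∈ (Finset.univ ×ˢ Finset.univ).filter
          (fun q : J × J => q.1 < q.2 ∧ r q.1 = r q.2), p q.1 := by
    simp only [Finset.sum_filter, Finset.sum_product]
    exact (Finset.sum_comm).symm
  have hB : ∑ j : J, ∑ j' ∈ Finset.univ.filter (fun j' => r j' = r j ∧ s j' < s j), p j'
      = ∑ q ∈ (Finset.univ ×ˢ Finset.univ).filter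
          (fun q : J × J => r q.1 = r q.2 ∧ s q.1 < s q.2), p q.1 := by
    simp only [Finset.sum_filter, Finset.sum_product]
    exact (Finset.sum_comm).symm
  -- compare the two pair sums via the swap-if-needed bijection
  have hAB : ∑ q ∈ (Finset.univ ×ˢ Finset.univ).filter
          (fun q : J × J => q.1 < q.2 ∧ r q.1 = r q.2), p q.1
      ≤ ∑ q ∈ (Finset.univ ×ˢ Finset.univ).filter
          (fun q : J × J => r q.1 = r q.2 ∧ s q.1 < s q.2), p q.1 := by
    set φ : J × J → J × J := fun q => if s q.1 < s q.2 then q else q.swap with hφ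
    set ψ : J × J → J × J := fun q => if q.1 < q.2 then q else q.swap with hψ
    have step1 : ∑ q ∈ (Finset.univ ×ˢ Finset.univ).filter
          (fun q : J × J => q.1 < q.2 ∧ r q.1 = r q.2), p q.1
        ≤ ∑ q ∈ (Finset.univ ×ˢ Finset.univ).filter
          (fun q : J × J => q.1 < q.2 ∧ r q.1 = r q.2), p (φ q).1 := by
      refine Finset.sum_le_sum (fun q hq => ?_)
      obtain ⟨-, hlt, -⟩ := Finset.mem_filter.mp hq
      by_cases hs : s q.1 < s q.2
      · simp [hφ, hs]
      · simp only [hφ, hs, if_false]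
        exact hSPT _ _ hlt
    have step2 : ∑ q ∈ (Finset.univ ×ˢ Finset.univ).filter
          (fun q : J × J => q.1 < q.2 ∧ r q.1 = r q.2), p (φ q).1
        = ∑ q ∈ (Finset.univ ×ˢ Finset.univ).filter
          (fun q : J × J => r q.1 = r q.2 ∧ s q.1 < s q.2), p q.1 := by
      refine Finset.sum_nbij' φ ψ ?_ ?_ ?_ ?_ ?_
      · intro q hq
        obtain ⟨-, hlt, hr⟩ := Finset.mem_filter.mp hq
        have hne : q.1 ≠ q.2 := ne_of_lt hlt
        by_cases hs : s q.1 < s q.2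
        · simp only [hφ, hs, if_true]
          exact Finset.mem_filter.mpr ⟨Finset.mem_product.mpr
            ⟨Finset.mem_univ _, Finset.mem_univ _⟩, hr, hs⟩
        · have hs' : s q.2 < s q.1 :=
            lt_of_le_of_ne (not_lt.mp hs) (hsinj q.1 q.2 hne hr).symm
          simp only [hφ, hs, if_false]
          exact Finset.mem_filter.mpr ⟨Finset.mem_product.mpr
            ⟨Finset.mem_univ _, Finset.mem_univ _⟩, hr.symm, hs'⟩
      · intro q hq
        obtain ⟨-, hr, hs⟩ := Finset.mem_filter.mp hq
        have hne : q.1 ≠ q.2 := fun hh => absurd (hh ▸ hs) (lt_irrefl _)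
        by_cases hlt : q.1 < q.2
        · simp only [hψ, hlt, if_true]
          exact Finset.mem_filter.mpr ⟨Finset.mem_product.mpr
            ⟨Finset.mem_univ _, Finset.mem_univ _⟩, hlt, hr⟩
        · have hlt' : q.2 < q.1 := lt_of_le_of_ne (not_lt.mp hlt) (Ne.symm hne)
          simp only [hψ, hlt, if_false]
          exact Finset.mem_filter.mpr ⟨Finset.mem_product.mpr
            ⟨Finset.mem_univ _, Finset.mem_univ _⟩, hlt', hr.symm⟩
      · intro q hq
        obtain ⟨-, hlt, hr⟩ := Finset.mem_filter.mp hq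
        by_cases hs : s q.1 < s q.2
        · simp [hφ, hψ, hs, hlt]
        · have : ¬ (q.2 < q.1) := not_lt.mpr hlt.le
          simp [hφ, hψ, hs, this]
      · intro q hq
        obtain ⟨-, hr, hs⟩ := Finset.mem_filter.mp hq
        by_cases hlt : q.1 < q.2
        · simp [hφ, hψ, hlt, hs]
        · have : ¬ (s q.2 < s q.1) := not_lt.mpr hs.le
          simp [hφ, hψ, hlt, this]
      · intro q hq
        rfl
    linarith
  rw [Finset.sum_add_distrib, Finset.sum_add_distrib]
  have : ∑ j : J, ∑ j' ∈ Finset.univ.filter (fun j' => j' < j ∧ r j' = r j), p j'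
      ≤ ∑ j, s j := by
    rw [hA]
    calc _ ≤ _ := hAB
      _ = _ := hB.symm
      _ ≤ _ := keysum
  linarith
end

section
/- Let I_P be an instance of P|partition, M_r|ΣC_j with m machines, jobs J, processing times p_j, resources r_j and allowed machine sets M_r, and let T > 0. Define the instance I_R of R|partition|ΣC_j with the same machines, jobs and resources, where the processing time of job j on machine i is p_{ij} = p_j if i ∈ M_{r_j} and p_{ij} = T otherwise. Then I_P has a feasible schedule with total completion time strictly less than T if and only if I_R has a feasible schedule with total completion time strictly less than T. -/
/-- Feasibility for `P|partition, M_r|ΣC_j`: the schedule is feasible and every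
job is assigned to a machine allowed for its resource. -/
def FeasibleMr {J R : Type} (m : ℕ) (p : J → ℝ) (r : J → R)
    (allowed : R → Finset (Fin m)) (s : J → ℝ) (M : J → Fin m) : Prop :=
  Feasible m p r s M ∧ ∀ j, M j ∈ allowed (r j)

/-- Feasibility for `R|partition|ΣC_j` (unrelated machines): the processing time
of job `j` on machine `i` is `pR i j`, the processing interval of `j` is
`[s j, s j + pR (M j) j)`, start times are nonnegative, and the processing
intervals of any two distinct jobs assigned to the same machine, or having the
same resource, are disjoint. -/
def FeasibleR {J R : Type} (m : ℕ) (pR : Fin m → J → ℝ) (r : J → R)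
    (s : J → ℝ) (M : J → Fin m) : Prop :=
  (∀ j, 0 ≤ s j) ∧
  ∀ j j' : J, j ≠ j' → (M j = M j' ∨ r j = r j') →
    Disjoint (Set.Ico (s j) (s j + pR (M j) j))
      (Set.Ico (s j') (s j' + pR (M j') j'))

/-- Reduction from `P|partition, M_r|ΣC_j` to `R|partition|ΣC_j`: giving job `j`
processing time `p j` on the machines allowed for its resource and `T` on all
other machines, the restricted instance has a feasible schedule of total
completion time `< T` iff the unrelated-machines instance does. -/
theorem feasibleMr_iff_feasibleR {J R : Type} [Fintype J]
    (m : ℕ) (hm : 1 ≤ m) (p : J → ℝ) (hp : ∀ j, 0 < p j) (r : J → R)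
    (allowed : R → Finset (Fin m)) (T : ℝ) (hT : 0 < T) :
    (∃ (s : J → ℝ) (M : J → Fin m),
        FeasibleMr m p r allowed s M ∧ ∑ j, (s j + p j) < T) ↔
      (∃ (s : J → ℝ) (M : J → Fin m),
        FeasibleR m (fun i j => if i ∈ allowed (r j) then p j else T) r s M ∧
        ∑ j, (s j + if M j ∈ allowed (r j) then p j else T) < T) := by
  constructor
  · rintro ⟨s, M, ⟨⟨hs, hdisj⟩, hall⟩, hsum⟩
    refine ⟨s, M, ⟨hs, ?_⟩, ?_⟩
    · intro j j' hne hcond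
      simpa [if_pos (hall j), if_pos (hall j')] using hdisj j j' hne hcond
    · have : ∑ j, (s j + if M j ∈ allowed (r j) then p j else T)
          = ∑ j, (s j + p j) := by
        apply Finset.sum_congr rfl; intro j _; rw [if_pos (hall j)]
      rw [this]; exact hsum
  · rintro ⟨s, M, ⟨hs, hdisj⟩, hsum⟩
    have hall : ∀ j, M j ∈ allowed (r j) := by
      intro j
      by_contra h
      have h1 : T ≤ s j + if M j ∈ allowed (r j) then p j else T := by
        rw [if_neg h]; linarith [hs j]
      have h2 : ∀ j' ∈ Finset.univ, 0 ≤ s j' + if M j' ∈ allowed (r j') then p j' else T := by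
        intro j' _
        have := hs j'
        split
        · linarith [hp j']
        · linarith
      have := Finset.single_le_sum h2 (Finset.mem_univ j)
      linarith
    refine ⟨s, M, ⟨⟨hs, ?_⟩, hall⟩, ?_⟩
    · intro j j' hne hcond
      simpa [if_pos (hall j), if_pos (hall j')] using hdisj j j' hne hcond
    · have : ∑ j, (s j + p j)
          = ∑ j, (s j + if M j ∈ allowed (r j) then p j else T) := by
        apply Finset.sum_congr rfl; intro j _; rw [if_pos (hall j)]
      rw [this]; exact hsum
end

section
/- Let (m, b, A) be an instance of 3-PARTITION. Construct the instance of P|partition, unmovable|ΣC_j with m machines and, for each a ∈ A, a group of a jobs of processing time 1 all sharing one resource unique to that group (so there are 3m resources and m·b jobs in total). Then (m, b, A) is a yes-instance of 3-PARTITION if and only if the constructed scheduling instance has a feasible schedule with total completion time at most m·b·(b+1)/2. -/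
/-- The unmovable-resources constraint: all jobs sharing the same resource must
be assigned to the same machine. -/
def Unmovable {J R : Type} {m : ℕ} (r : J → R) (M : J → Fin m) : Prop :=
  ∀ j j' : J, r j = r j' → M j = M j'

/-- A 3-PARTITION instance `(m, b, a)` is a yes-instance: the `3m` integers can
be partitioned into `m` triples each summing to `b`. -/
def ThreePartitionYes (m b : ℕ) (a : Fin (3 * m) → ℕ) : Prop :=
  ∃ f : Fin (3 * m) → Fin m, ∀ i : Fin m,
    (Finset.univ.filter (fun k => f k = i)).card = 3 ∧
    ∑ k ∈ Finset.univ.filter (fun k => f k = i), a k = b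

open Finset

lemma unit_disjoint {x y : ℝ} (h : 1 ≤ |x - y|) :
    Disjoint (Set.Ico x (x+1)) (Set.Ico y (y+1)) := by
  rw [Set.Ico_disjoint_Ico]
  rcases le_or_gt x y with h'|h'
  · have : x + 1 ≤ y := by rw [abs_sub_comm, abs_of_nonneg (by linarith)] at h; linarith
    calc min (x+1) (y+1) ≤ x + 1 := min_le_left _ _
      _ ≤ max x y := le_max_of_le_right this
  · have : y + 1 ≤ x := by rw [abs_of_nonneg (by linarith)] at h; linarith
    calc min (x+1) (y+1) ≤ y + 1 := min_le_right _ _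
      _ ≤ max x y := le_max_of_le_left this

lemma nat_sep {x y : ℕ} (h : x ≠ y) : 1 ≤ |(x:ℝ) - (y:ℝ)| := by
  rcases Nat.lt_or_ge x y with h'|h'
  · have hx : (x:ℝ) + 1 ≤ y := by exact_mod_cast Nat.succ_le_of_lt h'
    rw [abs_sub_comm, abs_of_nonneg (by linarith)]
    linarith
  · have h' : y < x := lt_of_le_of_ne h' (Ne.symm h)
    have hx : (y:ℝ) + 1 ≤ x := by exact_mod_cast Nat.succ_le_of_lt h'
    rw [abs_of_nonneg (by linarith)]
    linarith

lemma unit_sep {x y : ℝ} (h : Disjoint (Set.Ico x (x+1)) (Set.Ico y (y+1))) :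
    1 ≤ |x - y| := by
  by_contra hc
  push_neg at hc
  rw [abs_lt] at hc
  rcases le_total x y with h'|h'
  · exact Set.disjoint_left.mp h
      (show y ∈ Set.Ico x (x+1) by constructor <;> [linarith; linarith])
      ⟨le_refl _, by linarith⟩
  · exact Set.disjoint_left.mp h ⟨le_refl _, by linarith⟩
      (show x ∈ Set.Ico y (y+1) by constructor <;> [linarith; linarith])

lemma sepSum {J : Type} [DecidableEq J] (s : J → ℝ) : ∀ (n : ℕ) (S : Finset J) (c : ℝ),
    S.card = n → (∀ j ∈ S, c ≤ s j) →
    (∀ j ∈ S, ∀ j' ∈ S, j ≠ j' → 1 ≤ |s j - s j'|) →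
    (n : ℝ) * c + n * (n - 1) / 2 ≤ ∑ j ∈ S, s j := by
  intro n
  induction n with
  | zero => intro S c hc _ _; simp [Finset.card_eq_zero.mp hc]
  | succ n ih =>
    intro S c hc hlb hsep
    have hne : S.Nonempty := Finset.card_pos.mp (by omega)
    obtain ⟨j₀, hj₀S, hj₀min⟩ := S.exists_min_image s hne
    have key : ∀ j ∈ S.erase j₀, c + 1 ≤ s j := by
      intro j hj
      have hjS := Finset.mem_of_mem_erase hj
      have hne' := Finset.ne_of_mem_erase hj
      have h1 : 1 ≤ |s j - s j₀| := hsep j hjS j₀ hj₀S hne'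
      have h2 : s j₀ ≤ s j := hj₀min j hjS
      rw [abs_of_nonneg (by linarith)] at h1
      have := hlb j₀ hj₀S
      linarith
    have card' : (S.erase j₀).card = n := by
      rw [Finset.card_erase_of_mem hj₀S, hc]; omega
    have ihS := ih (S.erase j₀) (c + 1) card' key
      (fun j hj j' hj' hne' => hsep j (Finset.mem_of_mem_erase hj) j' (Finset.mem_of_mem_erase hj') hne')
    have hsumS : ∑ j ∈ S, s j = s j₀ + ∑ j ∈ S.erase j₀, s j :=
      (Finset.add_sum_erase S s hj₀S).symm
    have := hlb j₀ hj₀S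
    push_cast
    push_cast at ihS
    linarith

lemma count24 (m : ℕ) (c : Fin m → ℕ) (h24 : ∀ i, 2 ≤ c i ∧ c i ≤ 4)
    (hsum : ∑ i, c i = 3 * m) :
    (univ.filter (fun i => c i = 4)).card = (univ.filter (fun i => c i = 2)).card := by
  have key : ∀ i : Fin m, (c i : ℤ) - 3 =
      (if c i = 4 then (1:ℤ) else 0) - (if c i = 2 then (1:ℤ) else 0) := by
    intro i
    obtain ⟨hl, hu⟩ := h24 i
    interval_cases (c i) <;> simp
  have hz : ∑ i : Fin m, ((c i : ℤ) - 3) = 0 := by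
    rw [Finset.sum_sub_distrib]
    have : ∑ i : Fin m, (c i : ℤ) = 3 * m := by exact_mod_cast congrArg (Nat.cast : ℕ → ℤ) hsum
    simp [this, Finset.sum_const, mul_comm]
  rw [Finset.sum_congr rfl (fun i _ => key i), Finset.sum_sub_distrib,
    Finset.sum_boole, Finset.sum_boole, sub_eq_zero] at hz
  exact_mod_cast hz

lemma fiber_card_24 (m b : ℕ) (hb : 0 < b) (a : Fin (3*m) → ℕ)
    (hbounds : ∀ k, b ≤ 4 * a k ∧ 2 * a k ≤ b)
    (f : Fin (3*m) → Fin m)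
    (hf : ∀ i, ∑ k ∈ univ.filter (fun k => f k = i), a k = b) (i : Fin m) :
    2 ≤ (univ.filter (fun k => f k = i)).card ∧ (univ.filter (fun k => f k = i)).card ≤ 4 := by
  set F := univ.filter (fun k => f k = i) with hF
  have h4 : F.card * b ≤ 4 * b := by
    calc F.card * b = F.card • b := (nsmul_eq_mul _ _).symm
      _ ≤ ∑ k ∈ F, 4 * a k := Finset.card_nsmul_le_sum F _ b (fun k _ => (hbounds k).1)
      _ = 4 * ∑ k ∈ F, a k := by rw [Finset.mul_sum]
      _ = 4 * b := by rw [hf i]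
  have h2 : 2 * b ≤ F.card * b := by
    calc 2 * b = 2 * ∑ k ∈ F, a k := by rw [hf i]
      _ = ∑ k ∈ F, 2 * a k := by rw [Finset.mul_sum]
      _ ≤ ∑ k ∈ F, b := Finset.sum_le_sum (fun k _ => (hbounds k).2)
      _ = F.card * b := by rw [Finset.sum_const, smul_eq_mul]
  constructor
  · exact Nat.le_of_mul_le_mul_right h2 hb
  · exact Nat.le_of_mul_le_mul_right h4 hb

lemma rearrange (m b : ℕ) (hb : 0 < b) (a : Fin (3*m) → ℕ)
    (hbounds : ∀ k, b ≤ 4 * a k ∧ 2 * a k ≤ b) :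
    ∀ (t : ℕ) (f : Fin (3*m) → Fin m),
      (univ.filter (fun i => (univ.filter (fun k => f k = i)).card = 2)).card = t →
      (∀ i, ∑ k ∈ univ.filter (fun k => f k = i), a k = b) →
      ThreePartitionYes m b a := by
  intro t
  induction t with
  | zero =>
    intro f ht hf
    refine ⟨f, fun i => ⟨?_, hf i⟩⟩
    have h24 := fun i => fiber_card_24 m b hb a hbounds f hf i
    have hsum3 : ∑ i : Fin m, (univ.filter (fun k => f k = i)).card = 3 * m := by
      rw [← Finset.card_eq_sum_card_fiberwise (fun x _ => Finset.mem_univ (f x))]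
      simp
    have hc := count24 m (fun i => (univ.filter (fun k => f k = i)).card) h24 hsum3
    rw [ht, Finset.card_eq_zero] at hc
    have hno2 : (univ.filter (fun i => (univ.filter (fun k => f k = i)).card = 2)) = ∅ :=
      Finset.card_eq_zero.mp ht
    have h2 : (univ.filter (fun k => f k = i)).card ≠ 2 := by
      intro h
      have : i ∈ (univ.filter (fun i => (univ.filter (fun k => f k = i)).card = 2)) := by
        simp [h]
      rw [hno2] at this; exact absurd this (Finset.notMem_empty i)
    have h4 : (univ.filter (fun k => f k = i)).card ≠ 4 := by
      intro h
      have : i ∈ (univ.filter (fun i => (univ.filter (fun k => f k = i)).card = 4)) := by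
        simp [h]
      rw [hc] at this; exact absurd this (Finset.notMem_empty i)
    have := h24 i
    omega
  | succ t ih =>
    intro f ht hf
    have h24 := fun i => fiber_card_24 m b hb a hbounds f hf i
    have hsum3 : ∑ i : Fin m, (univ.filter (fun k => f k = i)).card = 3 * m := by
      rw [← Finset.card_eq_sum_card_fiberwise (fun x _ => Finset.mem_univ (f x))]
      simp
    have hc := count24 m (fun i => (univ.filter (fun k => f k = i)).card) h24 hsum3
    rw [ht] at hc
    -- pick i₂ with fiber card 2
    obtain ⟨i₂, hi₂⟩ := Finset.card_pos.mp (show 0 < (univ.filter (fun i => (univ.filter (fun k => f k = i)).card = 2)).card by omega)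
    beta_reduce at hc
    obtain ⟨i₄, hi₄⟩ := Finset.card_pos.mp (show 0 < (univ.filter (fun i => (univ.filter (fun k => f k = i)).card = 4)).card by omega)
    simp only [Finset.mem_filter, Finset.mem_univ, true_and] at hi₂ hi₄
    have hne24 : i₂ ≠ i₄ := fun h => by rw [h] at hi₂; omega
    obtain ⟨h1, h2, hh12, hF2⟩ := Finset.card_eq_two.mp hi₂
    obtain ⟨q1, hq1, q2, hq2, hq12⟩ := Finset.one_lt_card.mp (by omega : 1 < (univ.filter (fun k => f k = i₄)).card)
    simp only [Finset.mem_filter, Finset.mem_univ, true_and] at hq1 hq2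
    have hfh1 : f h1 = i₂ := by
      have : h1 ∈ univ.filter (fun k => f k = i₂) := hF2 ▸ Finset.mem_insert_self _ _
      simpa using this
    have hfh2 : f h2 = i₂ := by
      have : h2 ∈ univ.filter (fun k => f k = i₂) := hF2 ▸ (Finset.mem_insert_of_mem (Finset.mem_singleton_self _))
      simpa using this
    -- values: 2 * a h1 = b, 2 * a h2 = b
    have hsum2 : a h1 + a h2 = b := by
      have := hf i₂
      rw [hF2] at this
      rwa [Finset.sum_pair hh12] at this
    have hah1 : 2 * a h1 = b := by have := (hbounds h1).2; have := (hbounds h2).2; omega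
    have hah2 : 2 * a h2 = b := by omega
    -- values on the 4-fiber: 4 * a q = b for q in fiber
    have h4eq : ∀ q, f q = i₄ → 4 * a q = b := by
      intro q hq
      have hqmem : q ∈ univ.filter (fun k => f k = i₄) := by simp [hq]
      have hq' : a q + ∑ k ∈ (univ.filter (fun k => f k = i₄)).erase q, a k = b := by
        rw [Finset.add_sum_erase _ _ hqmem]; exact hf i₄
      have hcerase : ((univ.filter (fun k => f k = i₄)).erase q).card = 3 := by
        rw [Finset.card_erase_of_mem hqmem, hi₄]
      have h3b : 3 * b ≤ 4 * ∑ k ∈ (univ.filter (fun k => f k = i₄)).erase q, a k := by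
        calc 3 * b = ((univ.filter (fun k => f k = i₄)).erase q).card • b := by
              rw [hcerase]; simp [mul_comm]
          _ ≤ ∑ k ∈ (univ.filter (fun k => f k = i₄)).erase q, 4 * a k :=
              Finset.card_nsmul_le_sum _ _ b (fun k _ => (hbounds k).1)
          _ = 4 * ∑ k ∈ (univ.filter (fun k => f k = i₄)).erase q, a k := by
              rw [Finset.mul_sum]
      have := (hbounds q).1
      omega
    have hfq1 := hq1
    have hfq2 := hq2
    -- distinctness
    have hh2q1 : h2 ≠ q1 := fun h => hne24 (by rw [← hfh2, h, hfq1])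
    have hh2q2 : h2 ≠ q2 := fun h => hne24 (by rw [← hfh2, h, hfq2])
    have hh1q1 : h1 ≠ q1 := fun h => hne24 (by rw [← hfh1, h, hfq1])
    have hh1q2 : h1 ≠ q2 := fun h => hne24 (by rw [← hfh1, h, hfq2])
    -- the new assignment
    set f' : Fin (3*m) → Fin m :=
      Function.update (Function.update (Function.update f h2 i₄) q1 i₂) q2 i₂ with hf'
    have hf'val : ∀ k, f' k = if k = q2 then i₂ else if k = q1 then i₂ else if k = h2 then i₄ else f k := by
      intro k
      simp only [hf', Function.update]
      split_ifs with a1 a2 a3 <;> simp_all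
    -- new fibers
    have hfib2 : univ.filter (fun k => f' k = i₂) = {h1, q1, q2} := by
      ext k
      simp only [Finset.mem_filter, Finset.mem_univ, true_and, Finset.mem_insert,
        Finset.mem_singleton, hf'val k]
      by_cases e2 : k = q2
      · simp [e2]
      by_cases e1 : k = q1
      · simp [e1, e2]
      by_cases eh2 : k = h2
      · subst eh2
        simp only [if_neg e2, if_neg e1, if_pos rfl]
        constructor
        · intro h; exact absurd h (Ne.symm hne24)
        · rintro (h | h | h)
          · exact absurd h.symm hh12
          · exact absurd h e1
          · exact absurd h e2
      simp only [if_neg e2, if_neg e1, if_neg eh2]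
      constructor
      · intro h
        have : k ∈ univ.filter (fun k => f k = i₂) := by simp [h]
        rw [hF2] at this
        simp only [Finset.mem_insert, Finset.mem_singleton] at this
        rcases this with h' | h'
        · exact Or.inl h'
        · exact absurd h' eh2
      · rintro (rfl | rfl | rfl)
        · exact hfh1
        · exact absurd rfl e1
        · exact absurd rfl e2
    have hfib4 : univ.filter (fun k => f' k = i₄) =
        insert h2 (((univ.filter (fun k => f k = i₄)).erase q1).erase q2) := by
      ext k
      simp only [Finset.mem_filter, Finset.mem_univ, true_and, Finset.mem_insert,
        Finset.mem_erase, hf'val k]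
      by_cases e2 : k = q2
      · subst e2
        simp only [if_pos rfl]
        constructor
        · intro h; exact absurd h hne24
        · rintro (h | ⟨h, -⟩)
          · exact absurd h.symm hh2q2
          · exact absurd rfl h
      by_cases e1 : k = q1
      · subst e1
        simp only [if_neg e2, if_pos rfl]
        constructor
        · intro h; exact absurd h hne24
        · rintro (h | ⟨-, h, -⟩)
          · exact absurd h.symm hh2q1
          · exact absurd rfl h
      by_cases eh2 : k = h2
      · subst eh2
        simp only [if_neg e2, if_neg e1, if_pos rfl]
        simp
      simp only [if_neg e2, if_neg e1, if_neg eh2]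
      constructor
      · intro h; exact Or.inr ⟨e2, e1, h⟩
      · rintro (h | ⟨-, -, h⟩)
        · exact absurd h eh2
        · exact h
    have hfibother : ∀ i : Fin m, i ≠ i₂ → i ≠ i₄ →
        univ.filter (fun k => f' k = i) = univ.filter (fun k => f k = i) := by
      intro i hni2 hni4
      ext k
      simp only [Finset.mem_filter, Finset.mem_univ, true_and, hf'val k]
      by_cases e2 : k = q2
      · subst e2
        simp only [if_pos rfl]
        constructor
        · intro h; exact absurd h.symm hni2
        · intro h; rw [hfq2] at h; exact absurd h.symm hni4
      by_cases e1 : k = q1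
      · subst e1
        simp only [if_neg e2, if_pos rfl]
        constructor
        · intro h; exact absurd h.symm hni2
        · intro h; rw [hfq1] at h; exact absurd h.symm hni4
      by_cases eh2 : k = h2
      · subst eh2
        simp only [if_neg e2, if_neg e1, if_pos rfl]
        constructor
        · intro h; exact absurd h.symm hni4
        · intro h; rw [hfh2] at h; exact absurd h.symm hni2
      simp only [if_neg e2, if_neg e1, if_neg eh2]
    -- cards of new fibers at i₂ and i₄
    have hcard2 : (univ.filter (fun k => f' k = i₂)).card = 3 := by
      rw [hfib2]
      rw [Finset.card_insert_of_notMem (by simp [hh1q1, hh1q2]),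
        Finset.card_insert_of_notMem (by simp [hq12]), Finset.card_singleton]
    have hq1mem : q1 ∈ univ.filter (fun k => f k = i₄) := by simp [hfq1]
    have hq2mem : q2 ∈ univ.filter (fun k => f k = i₄) := by simp [hfq2]
    have hq2mem' : q2 ∈ (univ.filter (fun k => f k = i₄)).erase q1 :=
      Finset.mem_erase.mpr ⟨Ne.symm hq12, hq2mem⟩
    have hcard4 : (univ.filter (fun k => f' k = i₄)).card = 3 := by
      rw [hfib4]
      rw [Finset.card_insert_of_notMem (by simp [hfh2, hne24]),
        Finset.card_erase_of_mem hq2mem', Finset.card_erase_of_mem hq1mem, hi₄]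
    -- sums of new fibers
    have hsum4' : a q1 + a q2 + ∑ k ∈ ((univ.filter (fun k => f k = i₄)).erase q1).erase q2, a k = b := by
      rw [add_assoc, Finset.add_sum_erase _ _ hq2mem', Finset.add_sum_erase _ _ hq1mem]
      exact hf i₄
    have hnewsum2 : ∑ k ∈ univ.filter (fun k => f' k = i₂), a k = b := by
      rw [hfib2, Finset.sum_insert (by simp [hh1q1, hh1q2]),
        Finset.sum_insert (by simp [hq12]), Finset.sum_singleton]
      have e1 := h4eq q1 hfq1
      have e2 := h4eq q2 hfq2
      omega
    have hnewsum4 : ∑ k ∈ univ.filter (fun k => f' k = i₄), a k = b := by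
      rw [hfib4, Finset.sum_insert (by simp [hfh2, hne24])]
      have e1 := h4eq q1 hfq1
      have e2 := h4eq q2 hfq2
      omega
    have hf'sums : ∀ i, ∑ k ∈ univ.filter (fun k => f' k = i), a k = b := by
      intro i
      by_cases e2 : i = i₂
      · rw [e2]; exact hnewsum2
      by_cases e4 : i = i₄
      · rw [e4]; exact hnewsum4
      rw [hfibother i e2 e4]; exact hf i
    -- new count of 2-fibers is t
    have hnewt : (univ.filter (fun i => (univ.filter (fun k => f' k = i)).card = 2)).card = t := by
      have hset : univ.filter (fun i => (univ.filter (fun k => f' k = i)).card = 2) =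
          (univ.filter (fun i => (univ.filter (fun k => f k = i)).card = 2)).erase i₂ := by
        ext i
        simp only [Finset.mem_filter, Finset.mem_univ, true_and, Finset.mem_erase]
        by_cases e2 : i = i₂
        · simp [e2, hcard2]
        by_cases e4 : i = i₄
        · subst e4
          simp [hcard4, hi₄, e2]
        · rw [hfibother i e2 e4]
          simp only [ne_eq, e2, not_false_eq_true, true_and]
      rw [hset, Finset.card_erase_of_mem (by simp [hi₂]), ht]
      omega
    exact ih f' hnewt hf'sums

lemma fwd (m b : ℕ) (hm : 0 < m) (hb : 0 < b)
    (a : Fin (3 * m) → ℕ) (ha : ∀ k, 0 < a k)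
    (f : Fin (3 * m) → Fin m)
    (hf : ∀ i : Fin m, ∑ k ∈ Finset.univ.filter (fun k => f k = i), a k = b) :
    ∃ (s : (Σ k : Fin (3 * m), Fin (a k)) → ℝ)
      (M : (Σ k : Fin (3 * m), Fin (a k)) → Fin m),
      Feasible m (fun _ => (1 : ℝ)) (fun j => j.1) s M ∧
      Unmovable (fun j => j.1) M ∧
      ∑ j, (s j + 1) ≤ (m : ℝ) * b * (b + 1) / 2 := by
  set N : Fin (3*m) → ℕ := fun k => ∑ k' ∈ univ.filter (fun k' => f k' = f k ∧ k' < k), a k' with hN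
  set φ : (Σ k : Fin (3*m), Fin (a k)) → ℕ := fun j => N j.1 + j.2 with hφ
  refine ⟨fun j => (φ j : ℝ), fun j => f j.1, ?_, ?_, ?_⟩
  case refine_2 => intro j j' h; simp only at h ⊢; rw [h]
  -- monotonicity
  all_goals {
  have hmono : ∀ k1 k2 : Fin (3*m), k1 < k2 → f k1 = f k2 → N k1 + a k1 ≤ N k2 := by
    intro k1 k2 hlt heq
    have hsub : insert k1 (univ.filter (fun k' => f k' = f k1 ∧ k' < k1)) ⊆
        univ.filter (fun k' => f k' = f k2 ∧ k' < k2) := by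
      intro x hx
      rcases Finset.mem_insert.mp hx with rfl | hx
      · simp [heq, hlt]
      · simp only [Finset.mem_filter, Finset.mem_univ, true_and] at hx ⊢
        exact ⟨hx.1.trans heq, hx.2.trans hlt⟩
    have hnot : k1 ∉ univ.filter (fun k' => f k' = f k1 ∧ k' < k1) := by simp
    calc N k1 + a k1 = a k1 + N k1 := by ring
      _ = ∑ k' ∈ insert k1 (univ.filter (fun k' => f k' = f k1 ∧ k' < k1)), a k' :=
          (Finset.sum_insert hnot).symm
      _ ≤ N k2 := Finset.sum_le_sum_of_subset hsub
  have hub : ∀ (k : Fin (3*m)) (i : Fin (a k)), N k + (i:ℕ) < b := by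
    intro k i
    have hsub : insert k (univ.filter (fun k' => f k' = f k ∧ k' < k)) ⊆
        univ.filter (fun k' => f k' = f k) := by
      intro x hx
      rcases Finset.mem_insert.mp hx with rfl | hx
      · simp
      · simp only [Finset.mem_filter, Finset.mem_univ, true_and] at hx ⊢
        exact hx.1
    have hnot : k ∉ univ.filter (fun k' => f k' = f k ∧ k' < k) := by simp
    have : a k + N k ≤ b := by
      rw [← hf (f k)]
      calc a k + N k = ∑ k' ∈ insert k (univ.filter (fun k' => f k' = f k ∧ k' < k)), a k' :=
            (Finset.sum_insert hnot).symm
        _ ≤ _ := Finset.sum_le_sum_of_subset hsub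
    have := i.2
    omega
  have hinj : ∀ j j' : (Σ k : Fin (3*m), Fin (a k)), f j.1 = f j'.1 → φ j = φ j' → j = j' := by
    rintro ⟨k1, i1⟩ ⟨k2, i2⟩ heq hφeq
    simp only [hφ] at hφeq
    rcases lt_trichotomy k1 k2 with hlt | hkeq | hlt
    · have := hmono k1 k2 hlt heq
      have := i1.2; have := i2.2
      omega
    · subst hkeq
      simp only [Nat.add_left_cancel_iff] at hφeq
      congr 1
      exact Fin.ext hφeq
    · have := hmono k2 k1 hlt heq.symm
      have := i1.2; have := i2.2
      omega
  first
  | · -- Feasible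
      constructor
      · intro j; positivity
      · intro j j' hne hcond
        have heq : f j.1 = f j'.1 := by
          rcases hcond with h | h
          · exact h
          · simp only at h; rw [h]
        have : φ j ≠ φ j' := fun h => hne (hinj j j' heq h)
        exact unit_disjoint (nat_sep this)
  | · -- sum bound
      set T : Fin m → Finset (Σ k : Fin (3*m), Fin (a k)) :=
        fun i => univ.filter (fun j => f j.1 = i) with hT
      have hTsig : ∀ i, T i = (univ.filter (fun k => f k = i)).sigma (fun _ => univ) := by
        intro i; ext ⟨k, v⟩; simp [hT, Finset.mem_sigma]
      have hcardT : ∀ i, (T i).card = b := by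
        intro i
        rw [hTsig, Finset.card_sigma]
        simpa using hf i
      have himg : ∀ i, (T i).image φ = Finset.range b := by
        intro i
        apply Finset.eq_of_subset_of_card_le
        · intro x hx
          obtain ⟨j, hj, rfl⟩ := Finset.mem_image.mp hx
          simp only [hT, Finset.mem_filter] at hj
          exact Finset.mem_range.mpr (hub j.1 j.2)
        · rw [Finset.card_range, ← hcardT i]
          apply le_of_eq
          symm
          apply Finset.card_image_of_injOn
          intro x hx y hy hxy
          simp only [hT, Finset.coe_filter, Set.mem_setOf_eq] at hx hy
          exact hinj x y (hx.2.trans hy.2.symm) hxy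
      have hsumT : ∀ i, ∑ j ∈ T i, (φ j : ℝ) = ∑ x ∈ Finset.range b, (x:ℝ) := by
        intro i
        rw [← himg i, Finset.sum_image]
        intro x hx y hy hxy
        simp only [hT, Finset.coe_filter, Finset.mem_filter] at hx hy
        exact hinj x y (hx.2.trans hy.2.symm) hxy
      have hG : ∑ x ∈ Finset.range b, (x:ℝ) = b * (b-1) / 2 := by
        have h2 := Finset.sum_range_id_mul_two b
        have h3 : ((∑ i ∈ Finset.range b, i : ℕ) : ℝ) * 2 = ((b * (b-1) : ℕ) : ℝ) := by
          exact_mod_cast congrArg (Nat.cast : ℕ → ℝ) h2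
        rw [Nat.cast_mul, Nat.cast_sub hb] at h3
        push_cast at h3 ⊢
        linarith
      have htot : ∑ j, ((φ j : ℝ) + 1) = ∑ i : Fin m, ∑ j ∈ T i, ((φ j : ℝ) + 1) :=
        (Finset.sum_fiberwise _ _ _).symm
      rw [htot]
      have : ∀ i : Fin m, ∑ j ∈ T i, ((φ j : ℝ) + 1) = (b:ℝ) * (b+1) / 2 := by
        intro i
        rw [Finset.sum_add_distrib, Finset.sum_const, hcardT i, hsumT i, hG]
        push_cast
        ring
      rw [Finset.sum_congr rfl (fun i _ => this i), Finset.sum_const]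
      simp only [Finset.card_univ, Fintype.card_fin, nsmul_eq_mul]
      apply le_of_eq
      ring
  }

lemma bwd (m b : ℕ) (hb : 0 < b)
    (a : Fin (3 * m) → ℕ) (ha : ∀ k, 0 < a k)
    (hbounds : ∀ k, b ≤ 4 * a k ∧ 2 * a k ≤ b)
    (hsum : ∑ k, a k = m * b)
    (s : (Σ k : Fin (3 * m), Fin (a k)) → ℝ)
    (M : (Σ k : Fin (3 * m), Fin (a k)) → Fin m)
    (hfeas : Feasible m (fun _ => (1 : ℝ)) (fun j => j.1) s M)
    (hunm : Unmovable (fun j => j.1) M)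
    (hle : ∑ j, (s j + 1) ≤ (m : ℝ) * b * (b + 1) / 2)
    (rearrange : ∀ (f : Fin (3*m) → Fin m),
      (∀ i, ∑ k ∈ univ.filter (fun k => f k = i), a k = b) → ThreePartitionYes m b a) :
    ThreePartitionYes m b a := by
  set g : Fin (3*m) → Fin m := fun k => M ⟨k, ⟨0, ha k⟩⟩ with hg
  have hMg : ∀ j : (Σ k : Fin (3*m), Fin (a k)), M j = g j.1 := by
    intro j
    exact hunm j ⟨j.1, ⟨0, ha j.1⟩⟩ rfl
  set T : Fin m → Finset (Σ k : Fin (3*m), Fin (a k)) :=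
    fun i => univ.filter (fun j => g j.1 = i) with hT
  -- per-machine lower bound
  have hlow : ∀ i : Fin m, ((T i).card : ℝ) * ((T i).card + 1) / 2 ≤ ∑ j ∈ T i, (s j + 1) := by
    intro i
    have hsep : ∀ j ∈ T i, ∀ j' ∈ T i, j ≠ j' → 1 ≤ |s j - s j'| := by
      intro j hj j' hj' hne
      simp only [hT, Finset.mem_filter] at hj hj'
      have hM : M j = M j' := by rw [hMg j, hMg j', hj.2, hj'.2]
      have := hfeas.2 j j' hne (Or.inl hM)
      simp only at this
      exact unit_sep this
    have := sepSum s (T i).card (T i) 0 rfl (fun j _ => hfeas.1 j) hsep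
    rw [Finset.sum_add_distrib, Finset.sum_const]
    simp only [nsmul_eq_mul, mul_one]
    nlinarith [this]
  -- cardinalities
  have hTsig : ∀ i, T i = (univ.filter (fun k => g k = i)).sigma (fun _ => univ) := by
    intro i; ext ⟨k, v⟩; simp [hT, Finset.mem_sigma]
  have hcardT : ∀ i, (T i).card = ∑ k ∈ univ.filter (fun k => g k = i), a k := by
    intro i
    rw [hTsig, Finset.card_sigma]
    simp
  have hcards : ∑ i : Fin m, (T i).card = m * b := by
    rw [hT]
    rw [← Finset.card_eq_sum_card_fiberwise (fun x _ => Finset.mem_univ (g x.1))]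
    rw [Finset.card_univ, Fintype.card_sigma]
    simpa using hsum
  -- total
  have htot : ∑ i : Fin m, ∑ j ∈ T i, (s j + 1) = ∑ j, (s j + 1) :=
    Finset.sum_fiberwise _ _ _
  have e1 : ∑ i : Fin m, (((T i).card : ℝ) * ((T i).card + 1) / 2) ≤ (m:ℝ) * b * (b+1) / 2 := by
    calc ∑ i : Fin m, (((T i).card : ℝ) * ((T i).card + 1) / 2)
        ≤ ∑ i : Fin m, ∑ j ∈ T i, (s j + 1) := Finset.sum_le_sum (fun i _ => hlow i)
      _ = ∑ j, (s j + 1) := htot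
      _ ≤ _ := hle
  have e2 : ∑ i : Fin m, ((T i).card : ℝ) = (m:ℝ) * b := by
    rw [← Nat.cast_sum]
    exact_mod_cast congrArg (Nat.cast : ℕ → ℝ) hcards
  -- convexity forces each card = b
  have hE : ∑ i : Fin m, (((T i).card : ℝ) - b)^2 / 2 ≤ 0 := by
    have expand : ∑ i : Fin m, ((((T i).card : ℝ) * ((T i).card + 1) / 2)
        - ((b:ℝ) * ((b:ℝ)+1) / 2) - (((b:ℝ) + 1/2) * (((T i).card : ℝ) - b)))
        = ∑ i : Fin m, (((T i).card : ℝ) - b)^2 / 2 :=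
      Finset.sum_congr rfl (fun i _ => by ring)
    rw [← expand, Finset.sum_sub_distrib, Finset.sum_sub_distrib, ← Finset.mul_sum,
      Finset.sum_sub_distrib, Finset.sum_const, Finset.sum_const, Finset.card_univ,
      Fintype.card_fin]
    simp only [nsmul_eq_mul]
    rw [e2, sub_self, mul_zero, sub_zero]
    linarith [e1]
  have hcardb : ∀ i : Fin m, (T i).card = b := by
    have hsum0 : ∑ i : Fin m, (((T i).card : ℝ) - b)^2 / 2 = 0 :=
      le_antisymm hE (Finset.sum_nonneg (fun i _ => by positivity))
    intro i
    have hz := (Finset.sum_eq_zero_iff_of_nonneg (fun i _ => by positivity)).mp hsum0 i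
      (Finset.mem_univ i)
    have h2 : (((T i).card : ℝ) - b)^2 = 0 := by linarith
    have h0 : ((T i).card : ℝ) - b = 0 := by
      exact pow_eq_zero_iff (two_ne_zero) |>.mp h2
    have : ((T i).card : ℝ) = (b : ℝ) := by linarith
    exact_mod_cast this
  apply rearrange g
  intro i
  rw [← hcardT i, hcardb i]

/-- `P|partition, unmovable, p_j = 1|ΣC_j` is NP-hard: `(m, b, a)` is a
yes-instance of 3-PARTITION iff the instance on `m` machines consisting of, for
each `k`, a group of `a k` unit jobs sharing one resource unique to the group,
has a feasible schedule obeying the unmovable-resources constraint with total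
completion time at most `m·b·(b+1)/2`. -/
theorem threePartition_iff_schedule_unmovable (m b : ℕ) (hm : 0 < m) (hb : 0 < b)
    (a : Fin (3 * m) → ℕ) (ha : ∀ k, 0 < a k)
    (hbounds : ∀ k, b ≤ 4 * a k ∧ 2 * a k ≤ b)
    (hsum : ∑ k, a k = m * b) :
    ThreePartitionYes m b a ↔
      ∃ (s : (Σ k : Fin (3 * m), Fin (a k)) → ℝ)
        (M : (Σ k : Fin (3 * m), Fin (a k)) → Fin m),
        Feasible m (fun _ => (1 : ℝ)) (fun j => j.1) s M ∧
        Unmovable (fun j => j.1) M ∧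
        ∑ j, (s j + 1) ≤ (m : ℝ) * b * (b + 1) / 2 := by
  constructor
  · rintro ⟨f, hf⟩
    exact fwd m b hm hb a ha f (fun i => (hf i).2)
  · rintro ⟨s, M, hfeas, hunm, hle⟩
    exact bwd m b hb a ha hbounds hsum s M hfeas hunm hle
      (fun f hf => rearrange m b hb a hbounds _ f rfl hf)
end

section
/- Let G = (V, E) be a finite simple graph with at least one edge and maximum degree Δ. Construct the instance of P|partition(2)|ΣC_j with |E| machines and unit processing times, consisting of: for each edge e = {u, v} ∈ E, a job with resource set {u, v}; and (Δ − 1)·|E| dummy jobs with empty resource set. Then G admits a proper edge coloring with Δ colors (a map E → {1,…,Δ} assigning distinct colors to any two distinct edges sharing a vertex) if and only if the constructed scheduling instance has a feasible schedule with total completion time at most Δ(Δ+1)·|E|/2. -/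
/-- A non-preemptive schedule `(s, M)` for an instance of `P|partition(2)|ΣC_j`
with `m` machines, processing times `p` and resource sets `Rs` is feasible if
all start times are nonnegative and the processing intervals of any two distinct
jobs assigned to the same machine, or whose resource sets intersect, are
disjoint. -/
def Feasible2 {J V : Type} (m : ℕ) (p : J → ℝ) (Rs : J → Set V)
    (s : J → ℝ) (M : J → Fin m) : Prop :=
  (∀ j, 0 ≤ s j) ∧
  ∀ j j' : J, j ≠ j' → (M j = M j' ∨ (Rs j ∩ Rs j').Nonempty) →
    Disjoint (Set.Ico (s j) (s j + p j)) (Set.Ico (s j') (s j' + p j'))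



lemma aux_sum_range (d : ℕ) : ∑ t ∈ Finset.range d, ((t:ℝ)+1) = d*(d+1)/2 := by
  induction d with
  | zero => simp
  | succ k ih => rw [Finset.sum_range_succ, ih]; push_cast; ring

lemma aux_disj_of_ne {a b : ℝ} (h : a + 1 ≤ b ∨ b + 1 ≤ a) :
    Disjoint (Set.Ico a (a+1)) (Set.Ico b (b+1)) := by
  rw [Set.disjoint_left]
  rintro x ⟨h1, h2⟩ ⟨h3, h4⟩
  rcases h with h | h <;> linarith

lemma aux_ne_of_disj {a b : ℝ}
    (h : Disjoint (Set.Ico a (a+1)) (Set.Ico b (b+1))) :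
    a + 1 ≤ b ∨ b + 1 ≤ a := by
  by_contra hc
  push_neg at hc
  have h1 : max a b < a + 1 := max_lt (by linarith) (by linarith [hc.1])
  have h2 : max a b < b + 1 := max_lt (by linarith [hc.2]) (by linarith)
  exact Set.disjoint_left.mp h ⟨le_max_left _ _, h1⟩ ⟨le_max_right _ _, h2⟩

lemma aux_floor_ne {a b : ℝ} (ha : 0 ≤ a) (hb : 0 ≤ b)
    (h : a + 1 ≤ b ∨ b + 1 ≤ a) : ⌊a⌋₊ ≠ ⌊b⌋₊ := by
  rcases h with h | h
  · have h2 : ⌊a⌋₊ + 1 ≤ ⌊b⌋₊ := by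
      rw [← Nat.floor_add_one ha]
      exact Nat.floor_le_floor h
    omega
  · have h2 : ⌊b⌋₊ + 1 ≤ ⌊a⌋₊ := by
      rw [← Nat.floor_add_one hb]
      exact Nat.floor_le_floor h
    omega

lemma aux_count {n d : ℕ} (T : Finset (Fin n × ℕ)) (hT : T.card = d * n)
    (x0 : Fin n × ℕ) (hx0 : x0 ∈ T) (hx2 : d ≤ x0.2) :
    (d:ℝ)*(d+1)*n/2 + 1 ≤ ∑ x ∈ T, ((x.2:ℝ)+1) := by
  classical
  set U : Finset (Fin n × ℕ) := Finset.univ ×ˢ Finset.range d with hU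
  have hUcard : U.card = d * n := by simp [hU, mul_comm]
  have hUsum : ∑ x ∈ U, ((x.2:ℝ)+1) = n * (d*(d+1)/2) := by
    rw [hU, Finset.sum_product]
    simp [aux_sum_range]
  have hsT := Finset.sum_inter_add_sum_sdiff T U (fun x => ((x.2:ℝ)+1))
  have hsU := Finset.sum_inter_add_sum_sdiff U T (fun x => ((x.2:ℝ)+1))
  have hcT := Finset.card_inter_add_card_sdiff T U
  have hcU := Finset.card_inter_add_card_sdiff U T
  have hIC : (T ∩ U) = (U ∩ T) := Finset.inter_comm T U
  have hk : (T \ U).card = (U \ T).card := by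
    rw [hIC] at hcT; omega
  have h1 : ((T \ U).card : ℝ) * (d+1) ≤ ∑ x ∈ T \ U, ((x.2:ℝ)+1) := by
    have := Finset.card_nsmul_le_sum (T \ U) (fun x => ((x.2:ℝ)+1)) ((d:ℝ)+1) ?_
    · rwa [nsmul_eq_mul] at this
    · intro x hx
      rw [Finset.mem_sdiff] at hx
      have : ¬ x.2 < d := by
        intro h; exact hx.2 (by simp [hU, h])
      have : (d:ℝ) ≤ x.2 := by exact_mod_cast not_lt.mp this
      linarith
  have h2 : ∑ x ∈ U \ T, ((x.2:ℝ)+1) ≤ ((U \ T).card : ℝ) * (d:ℝ) := by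
    have := Finset.sum_le_card_nsmul (U \ T) (fun x => ((x.2:ℝ)+1)) (d:ℝ) ?_
    · rwa [nsmul_eq_mul] at this
    · intro x hx
      rw [Finset.mem_sdiff] at hx
      have hxU := hx.1
      have : x.2 < d := by
        simp [hU] at hxU; exact hxU
      have : (x.2:ℝ) + 1 ≤ d := by exact_mod_cast Nat.succ_le_of_lt this
      linarith
  have hk1 : 1 ≤ (T \ U).card := by
    have : x0 ∈ T \ U := by
      rw [Finset.mem_sdiff]
      exact ⟨hx0, by simp [hU]; omega⟩
    exact Finset.card_pos.mpr ⟨x0, this⟩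
  have hk1' : (1:ℝ) ≤ ((T \ U).card : ℝ) := by exact_mod_cast hk1
  have hkk : ((T \ U).card : ℝ) = ((U \ T).card : ℝ) := by exact_mod_cast hk
  have hring : (d:ℝ)*(d+1)*n/2 = n * (d*(d+1)/2) := by ring
  have hIs : ∑ x ∈ T ∩ U, ((x.2:ℝ)+1) = ∑ x ∈ U ∩ T, ((x.2:ℝ)+1) := by rw [hIC]
  have h1' : ((T \ U).card : ℝ) * (d:ℝ) + ((T \ U).card : ℝ) ≤ ∑ x ∈ T \ U, ((x.2:ℝ)+1) := by
    nlinarith [h1]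
  have h2' : ∑ x ∈ U \ T, ((x.2:ℝ)+1) ≤ ((T \ U).card : ℝ) * (d:ℝ) := by
    rw [hkk]; exact h2
  linarith

lemma aux_sum_le {J : Type} [Fintype J] {n d : ℕ}
    (M : J → Fin n) (slot : J → ℕ)
    (hinj : Function.Injective (fun j => (M j, slot j)))
    (hlt : ∀ j, slot j < d) :
    ∑ j, ((slot j : ℝ) + 1) ≤ n * (d*(d+1)/2) := by
  classical
  have h1 : ∑ j, ((slot j : ℝ)+1)
      = ∑ x ∈ Finset.univ.image (fun j => (M j, slot j)), ((x.2:ℝ)+1) := by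
    rw [Finset.sum_image (fun a _ b _ h => hinj h)]
  rw [h1]
  have h2 : Finset.univ.image (fun j => (M j, slot j)) ⊆ Finset.univ ×ˢ Finset.range d := by
    intro x hx
    simp only [Finset.mem_image] at hx
    obtain ⟨j, _, rfl⟩ := hx
    simp [Finset.mem_product, hlt j]
  calc ∑ x ∈ Finset.univ.image (fun j => (M j, slot j)), ((x.2:ℝ)+1)
      ≤ ∑ x ∈ Finset.univ ×ˢ Finset.range d, ((x.2:ℝ)+1) :=
        Finset.sum_le_sum_of_subset_of_nonneg h2 (fun x _ _ => by positivity)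
    _ = n * (d*(d+1)/2) := by rw [Finset.sum_product]; simp [aux_sum_range]


def fwdM {E : Type} {n d : ℕ} (hn : 0 < n) (ι : E ≃ Fin n) :
    E ⊕ Fin ((d-1)*n) → Fin n
  | Sum.inl e => ι e
  | Sum.inr i => ⟨(i:ℕ) % n, Nat.mod_lt _ hn⟩

def fwdSlot {E : Type} {n d : ℕ} (hn : 0 < n) (ι : E ≃ Fin n) (f : E → Fin d) :
    E ⊕ Fin ((d-1)*n) → ℕ
  | Sum.inl e => (f e : ℕ)
  | Sum.inr i => if (i:ℕ)/n < (f (ι.symm ⟨(i:ℕ)%n, Nat.mod_lt _ hn⟩) : ℕ)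
                 then (i:ℕ)/n else (i:ℕ)/n + 1

lemma fwd_slot_lt {E : Type} {n d : ℕ} (hn : 0 < n) (ι : E ≃ Fin n) (f : E → Fin d)
    (j : E ⊕ Fin ((d-1)*n)) : fwdSlot hn ι f j < d := by
  rcases j with e | i
  · exact (f e).isLt
  · have hq : (i:ℕ)/n < d - 1 := (Nat.div_lt_iff_lt_mul hn).mpr i.isLt
    have hc : (f (ι.symm ⟨(i:ℕ)%n, Nat.mod_lt _ hn⟩) : ℕ) < d := (f _).isLt
    simp only [fwdSlot]
    split <;> omega

lemma fwd_inj {E : Type} {n d : ℕ} (hn : 0 < n) (ι : E ≃ Fin n) (f : E → Fin d) :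
    ∀ j j', fwdM hn ι j = fwdM hn ι j' → fwdSlot hn ι f j = fwdSlot hn ι f j' → j = j' := by
  rintro (e | i) (e' | i') hM hS
  · exact congrArg Sum.inl (ι.injective hM)
  · exfalso
    simp only [fwdM] at hM
    have he : ι.symm ⟨(i':ℕ)%n, Nat.mod_lt _ hn⟩ = e := by
      rw [← hM, Equiv.symm_apply_apply]
    simp only [fwdSlot, he] at hS
    split at hS <;> omega
  · exfalso
    simp only [fwdM] at hM
    have he : ι.symm ⟨(i:ℕ)%n, Nat.mod_lt _ hn⟩ = e' := by
      rw [hM, Equiv.symm_apply_apply]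
    simp only [fwdSlot, he] at hS
    split at hS <;> omega
  · simp only [fwdM, Fin.mk.injEq] at hM
    have hfin : (⟨(i:ℕ)%n, Nat.mod_lt _ hn⟩ : Fin n) = ⟨(i':ℕ)%n, Nat.mod_lt _ hn⟩ :=
      Fin.ext hM
    simp only [fwdSlot, hfin] at hS
    have hqq : (i:ℕ)/n = (i':ℕ)/n := by
      split at hS <;> split at hS <;> omega
    have hd1 := Nat.div_add_mod (i:ℕ) n
    have hd2 := Nat.div_add_mod (i':ℕ) n
    rw [hqq, hM] at hd1
    exact congrArg Sum.inr (Fin.ext (hd1.symm.trans hd2))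


/-- Reduction from edge coloring to `P|partition(2), p_j = 1|ΣC_j`.  Let `G` be
a finite simple graph with at least one edge and maximum degree `Δ`.  The
scheduling instance has `|E|` machines and unit processing times; it has one job
per edge `e`, whose resource set is the set of endpoints of `e`, together with
`(Δ - 1)·|E|` dummy jobs with empty resource set.  Then `G` has a proper edge
coloring with `Δ` colors iff the instance has a feasible schedule with total
completion time at most `Δ(Δ+1)|E|/2`. -/
theorem edgeColoring_iff_schedule {V : Type} [Fintype V] [DecidableEq V]
    (G : SimpleGraph V) [DecidableRel G.Adj] (hE : G.edgeFinset.Nonempty) :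
    (∃ f : G.edgeSet → Fin G.maxDegree,
        ∀ e e' : G.edgeSet, e ≠ e' →
          (∃ v : V, v ∈ (e : Sym2 V) ∧ v ∈ (e' : Sym2 V)) → f e ≠ f e') ↔
      ∃ (s : ↥G.edgeSet ⊕ Fin ((G.maxDegree - 1) * G.edgeFinset.card) → ℝ)
        (M : ↥G.edgeSet ⊕ Fin ((G.maxDegree - 1) * G.edgeFinset.card) →
          Fin G.edgeFinset.card),
        Feasible2 G.edgeFinset.card (fun _ => (1 : ℝ))
          (fun j => match j with
            | Sum.inl e => {v : V | v ∈ (e : Sym2 V)}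
            | Sum.inr _ => ∅)
          s M ∧
        ∑ j, (s j + 1) ≤
          (G.maxDegree : ℝ) * (G.maxDegree + 1) * G.edgeFinset.card / 2 := by
  classical
  have hn : 0 < G.edgeFinset.card := Finset.card_pos.mpr hE
  have hΔ : 1 ≤ G.maxDegree := by
    obtain ⟨e, he⟩ := hE
    rw [SimpleGraph.mem_edgeFinset] at he
    revert he
    refine Sym2.ind (fun u v he => ?_) e
    rw [SimpleGraph.mem_edgeSet] at he
    have h1 : 0 < G.degree u := by
      rw [SimpleGraph.degree_pos_iff_exists_adj]
      exact ⟨v, he⟩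
    exact h1.trans_le (G.degree_le_maxDegree u)
  have hcard : Fintype.card ↥G.edgeSet = G.edgeFinset.card := by
    simp [SimpleGraph.edgeFinset, Set.toFinset_card]
  constructor
  · rintro ⟨f, hf⟩
    obtain ⟨ι⟩ : Nonempty (↥G.edgeSet ≃ Fin G.edgeFinset.card) :=
      ⟨Fintype.equivFinOfCardEq hcard⟩
    refine ⟨fun j => ((fwdSlot hn ι f j : ℕ) : ℝ), fwdM hn ι, ⟨fun j => by positivity, ?_⟩, ?_⟩
    · intro j j' hne hcond
      have hslot : fwdSlot hn ι f j ≠ fwdSlot hn ι f j' := by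
        rcases hcond with hM | hres
        · exact fun hS => hne (fwd_inj hn ι f j j' hM hS)
        · rcases j with e | i
          · rcases j' with e' | i'
            · obtain ⟨v, hv1, hv2⟩ := hres
              have hee : e ≠ e' := fun h => hne (congrArg Sum.inl h)
              have := hf e e' hee ⟨v, hv1, hv2⟩
              simp only [fwdSlot]
              exact fun h => this (Fin.ext h)
            · simp at hres
          · simp at hres
      have : (fwdSlot hn ι f j : ℝ) + 1 ≤ (fwdSlot hn ι f j' : ℝ) ∨
          (fwdSlot hn ι f j' : ℝ) + 1 ≤ (fwdSlot hn ι f j : ℝ) := by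
        rcases Nat.lt_or_ge (fwdSlot hn ι f j) (fwdSlot hn ι f j') with h | h
        · left; exact_mod_cast Nat.succ_le_of_lt h
        · right
          have : fwdSlot hn ι f j' < fwdSlot hn ι f j := lt_of_le_of_ne h (Ne.symm hslot)
          exact_mod_cast Nat.succ_le_of_lt this
      exact aux_disj_of_ne this
    · have hinj : Function.Injective
          (fun j => (fwdM hn ι j, fwdSlot hn ι f j)) := by
        intro j j' h
        exact fwd_inj hn ι f j j' (congrArg Prod.fst h) (congrArg Prod.snd h)
      have := aux_sum_le (fwdM hn ι) (fwdSlot hn ι f) hinj (fwd_slot_lt hn ι f)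
      have hring : ((G.edgeFinset.card : ℝ)) * ((G.maxDegree : ℝ)*((G.maxDegree : ℝ)+1)/2)
          = (G.maxDegree : ℝ) * (G.maxDegree + 1) * G.edgeFinset.card / 2 := by ring
      linarith
  · rintro ⟨s, M, ⟨hs0, hdisj⟩, hsum⟩
    set slot := fun j : ↥G.edgeSet ⊕ Fin ((G.maxDegree - 1) * G.edgeFinset.card) =>
      ⌊s j⌋₊ with hslotdef
    have hslotne : ∀ j j' : ↥G.edgeSet ⊕ Fin ((G.maxDegree - 1) * G.edgeFinset.card),
        j ≠ j' → (M j = M j' ∨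
          ((fun j : ↥G.edgeSet ⊕ Fin ((G.maxDegree - 1) * G.edgeFinset.card) => match j with
            | Sum.inl e => {v : V | v ∈ (e : Sym2 V)}
            | Sum.inr _ => (∅ : Set V)) j ∩ (fun j : ↥G.edgeSet ⊕ Fin ((G.maxDegree - 1) * G.edgeFinset.card) => match j with
            | Sum.inl e => {v : V | v ∈ (e : Sym2 V)}
            | Sum.inr _ => (∅ : Set V)) j').Nonempty) → slot j ≠ slot j' := by
      intro j j' hne hc
      have hd := hdisj j j' hne hc
      exact aux_floor_ne (hs0 j) (hs0 j') (aux_ne_of_disj hd)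
    have hinj : Function.Injective
        (fun j : ↥G.edgeSet ⊕ Fin ((G.maxDegree - 1) * G.edgeFinset.card) =>
          (M j, slot j)) := by
      intro j j' h
      by_contra hne
      exact hslotne j j' hne (Or.inl (congrArg Prod.fst h)) (congrArg Prod.snd h)
    have hcardJ : Fintype.card (↥G.edgeSet ⊕ Fin ((G.maxDegree - 1) * G.edgeFinset.card))
        = G.maxDegree * G.edgeFinset.card := by
      rw [Fintype.card_sum, Fintype.card_fin, hcard]
      have h1 : (G.maxDegree - 1) * G.edgeFinset.card + G.edgeFinset.card
          = G.maxDegree * G.edgeFinset.card := by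
        rw [← Nat.succ_mul]; congr 1; omega
      omega
    have hTcard : (Finset.univ.image
        (fun j : ↥G.edgeSet ⊕ Fin ((G.maxDegree - 1) * G.edgeFinset.card) =>
          (M j, slot j))).card = G.maxDegree * G.edgeFinset.card := by
      rw [Finset.card_image_of_injective _ hinj, Finset.card_univ, hcardJ]
    have hTsum : ∑ x ∈ Finset.univ.image
        (fun j : ↥G.edgeSet ⊕ Fin ((G.maxDegree - 1) * G.edgeFinset.card) =>
          (M j, slot j)), ((x.2:ℝ)+1) = ∑ j, ((slot j : ℝ) + 1) := by
      rw [Finset.sum_image (fun a _ b _ h => hinj h)]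
    have hle : ∑ j, ((slot j : ℝ) + 1) ≤ ∑ j, (s j + 1) := by
      apply Finset.sum_le_sum
      intro j _
      have := Nat.floor_le (hs0 j)
      simp only [hslotdef]
      linarith
    have hlt : ∀ e : ↥G.edgeSet, slot (Sum.inl e) < G.maxDegree := by
      intro e
      by_contra hge
      push_neg at hge
      have := aux_count _ hTcard (M (Sum.inl e), slot (Sum.inl e))
        (Finset.mem_image_of_mem _ (Finset.mem_univ _)) hge
      rw [hTsum] at this
      linarith
    refine ⟨fun e => ⟨slot (Sum.inl e), hlt e⟩, ?_⟩
    intro e e' hee hv hfe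
    have hne : (Sum.inl e : ↥G.edgeSet ⊕ Fin ((G.maxDegree - 1) * G.edgeFinset.card))
        ≠ Sum.inl e' := fun h => hee (Sum.inl.inj h)
    obtain ⟨v, hv1, hv2⟩ := hv
    refine hslotne (Sum.inl e) (Sum.inl e') hne (Or.inr ⟨v, hv1, hv2⟩) ?_
    exact congrArg Fin.val hfe
end
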